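/- arXiv:2507.05548 — 8 statements merged into one kernel-verified Lean document; each statement's English description precedes it below -/
import Mathlib

section
/- (Tutte–Berge formula, as used) For a graph H on n vertices, the maximum size of a matching in H equals (1/2) · min over S ⊆ V(H) of (n + |S| − odd(H − S)), where odd(H − S) is the number of components of H − S of odd order. -/
open SimpleGraph

set_option linter.unusedSectionVars false
set_option linter.unusedVariables false
set_option maxHeartbeats 1000000

namespace TutteBerge

variable {V : Type} [Fintype V] [DecidableEq V]




/-- Matching predicate matching the statement. -/
def IsMat (G : SimpleGraph V) (M : Finset (Sym2 V)) : Prop :=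
  ↑M ⊆ G.edgeSet ∧ (M : Set (Sym2 V)).Pairwise (fun e f => ∀ v, ¬(v ∈ e ∧ v ∈ f))

def msizes (G : SimpleGraph V) : Set ℕ := {s | ∃ M, IsMat G M ∧ M.card = s}

lemma empty_isMat (G : SimpleGraph V) : IsMat G ∅ := by
  constructor
  · simp
  · simp

lemma msizes_nonempty (G : SimpleGraph V) : (msizes G).Nonempty :=
  ⟨0, ∅, empty_isMat G, rfl⟩

lemma msizes_bddAbove (G : SimpleGraph V) : BddAbove (msizes G) := by
  refine ⟨Fintype.card (Sym2 V), ?_⟩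
  rintro s ⟨M, _, rfl⟩
  exact Finset.card_le_univ M

noncomputable def nu (G : SimpleGraph V) : ℕ := sSup (msizes G)

lemma nu_isGreatest (G : SimpleGraph V) : IsGreatest (msizes G) (nu G) :=
  ⟨Nat.sSup_mem (msizes_nonempty G) (msizes_bddAbove G),
   fun _ hb => le_csSup (msizes_bddAbove G) hb⟩

lemma card_le_nu {G : SimpleGraph V} {M : Finset (Sym2 V)} (h : IsMat G M) :
    M.card ≤ nu G := (nu_isGreatest G).2 ⟨M, h, rfl⟩

/-- The vertex set of an edge. -/
def everts (e : Sym2 V) : Finset V := Finset.univ.filter (· ∈ e)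

@[simp] lemma mem_everts {x : V} {e : Sym2 V} : x ∈ everts e ↔ x ∈ e := by
  simp [everts]

lemma everts_pair {a b : V} : everts s(a, b) = {a, b} := by
  ext x; simp [Sym2.mem_iff]

lemma card_everts {e : Sym2 V} (h : ¬ e.IsDiag) : (everts e).card = 2 := by
  induction e with
  | _ a b =>
    rw [Sym2.isDiag_iff_proj_eq] at h
    rw [everts_pair, Finset.card_insert_of_notMem (by simpa using h), Finset.card_singleton]

/-- The set of matched vertices. -/
def mch (M : Finset (Sym2 V)) : Finset V := M.biUnion everts

@[simp] lemma mem_mch {x : V} {M : Finset (Sym2 V)} : x ∈ mch M ↔ ∃ e ∈ M, x ∈ e := by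
  simp [mch]

lemma card_mch {G : SimpleGraph V} {M : Finset (Sym2 V)} (h : IsMat G M) :
    (mch M).card = 2 * M.card := by
  rw [mch, Finset.card_biUnion, Finset.sum_congr rfl (fun e he => ?_), Finset.sum_const,
    smul_eq_mul, mul_comm]
  · exact card_everts (fun hd => ((G.not_isDiag_of_mem_edgeSet) (h.1 he)) hd)
  · intro e he f hf hef
    simp only [Finset.disjoint_left, mem_everts]
    intro x hx hx'
    exact h.2 he hf hef x ⟨hx, hx'⟩




/-- Delete a set of vertices (keeping them as isolated vertices). -/
def del (G : SimpleGraph V) (S : Set V) : SimpleGraph V where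
  Adj a b := G.Adj a b ∧ a ∉ S ∧ b ∉ S
  symm := ⟨fun a b => by tauto⟩
  loopless := ⟨fun a h => G.loopless.irrefl a h.1⟩

lemma del_adj {G : SimpleGraph V} {S : Set V} {a b : V} :
    (del G S).Adj a b ↔ G.Adj a b ∧ a ∉ S ∧ b ∉ S := Iff.rfl

lemma del_le {G : SimpleGraph V} {S : Set V} : del G S ≤ G := fun _ _ h => h.1

lemma mem_del_edgeSet {G : SimpleGraph V} {S : Set V} {e : Sym2 V} :
    e ∈ (del G S).edgeSet ↔ e ∈ G.edgeSet ∧ ∀ x ∈ e, x ∉ S := by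
  induction e with
  | _ a b =>
    simp only [mem_edgeSet, del_adj, Sym2.mem_iff]
    constructor
    · rintro ⟨h, ha, hb⟩
      exact ⟨h, by rintro x (rfl | rfl) <;> assumption⟩
    · rintro ⟨h, hx⟩
      exact ⟨h, hx a (Or.inl rfl), hx b (Or.inr rfl)⟩

lemma isolated_del {G : SimpleGraph V} {v : V} (w : V) : ¬ (del G {v}).Adj v w := by
  simp [del_adj]


lemma isMat_mono {G G' : SimpleGraph V} (h : G ≤ G') {M : Finset (Sym2 V)}
    (hM : IsMat G M) : IsMat G' M :=
  ⟨fun e he => SimpleGraph.edgeSet_mono h (hM.1 he), hM.2⟩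

lemma nu_del_le {G : SimpleGraph V} {S : Set V} : nu (del G S) ≤ nu G := by
  obtain ⟨⟨M, hM, hc⟩, -⟩ := nu_isGreatest (del G S)
  rw [← hc]
  exact card_le_nu (isMat_mono del_le hM)

/-- a maximum matching minus the (at most one) edge containing `v`. -/
lemma nu_le_del_succ {G : SimpleGraph V} {v : V} : nu G ≤ nu (del G {v}) + 1 := by
  obtain ⟨⟨M, hM, hc⟩, -⟩ := nu_isGreatest G
  classical
  set M' := M.filter (fun e => v ∉ e) with hM'
  have hmat : IsMat (del G {v}) M' := by
    constructor
    · intro e he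
      simp only [hM', Finset.coe_filter, Set.mem_setOf_eq] at he
      rw [mem_del_edgeSet]
      refine ⟨hM.1 he.1, ?_⟩
      intro x hx
      simp only [Set.mem_singleton_iff]
      rintro rfl; exact he.2 hx
    · refine Set.Pairwise.mono ?_ hM.2
      intro e he
      simp only [hM', Finset.coe_filter, Set.mem_setOf_eq] at he
      exact he.1
  have h1 : M.card ≤ M'.card + 1 := by
    have : M.filter (fun e => v ∈ e) ⊆ M := Finset.filter_subset _ _
    have hle : (M.filter (fun e => v ∈ e)).card ≤ 1 := by
      rw [Finset.card_le_one]
      intro e he f hf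
      simp only [Finset.mem_filter] at he hf
      by_contra hne
      exact hM.2 he.1 hf.1 hne v ⟨he.2, hf.2⟩
    have h2 := Finset.card_filter_add_card_filter_not (s := M) (p := fun e => v ∈ e)
    have h3 : (M.filter (fun e => ¬ v ∈ e)).card = M'.card := rfl
    omega
  calc nu G = M.card := hc.symm
    _ ≤ M'.card + 1 := h1
    _ ≤ nu (del G {v}) + 1 := by have := card_le_nu hmat; omega

lemma nu_del_eq_of_isolated {G : SimpleGraph V} {v : V} (hv : ∀ w, ¬ G.Adj v w) :
    nu (del G {v}) = nu G := by
  refine le_antisymm nu_del_le ?_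
  obtain ⟨⟨M, hM, hc⟩, -⟩ := nu_isGreatest G
  rw [← hc]
  refine card_le_nu (M := M) ⟨?_, hM.2⟩
  intro e he
  rw [mem_del_edgeSet]
  refine ⟨hM.1 he, fun x hx => ?_⟩
  simp only [Set.mem_singleton_iff]
  rintro rfl
  -- v ∈ e, but v is isolated
  have := hM.1 he
  induction e with
  | _ a b =>
    rw [Sym2.mem_iff] at hx
    rw [SimpleGraph.mem_edgeSet] at this
    rcases hx with rfl | rfl
    · exact hv b this
    · exact hv a this.symm

/-- If removing `v` decreases `nu`, the edge count strictly decreases. -/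
lemma edge_ncard_lt {G : SimpleGraph V} {v : V} (h : nu (del G {v}) < nu G) :
    (del G {v}).edgeSet.ncard < G.edgeSet.ncard := by
  have hne : ∃ w, G.Adj v w := by
    by_contra hc
    push_neg at hc
    rw [nu_del_eq_of_isolated hc] at h
    omega
  obtain ⟨w, hw⟩ := hne
  apply Set.ncard_lt_ncard
  · constructor
    · exact fun e he => SimpleGraph.edgeSet_mono del_le he
    · intro hsub
      have : s(v, w) ∈ (del G {v}).edgeSet := hsub (by rwa [SimpleGraph.mem_edgeSet])
      rw [mem_del_edgeSet] at this
      exact this.2 v (by simp) rfl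
  · exact G.edgeSet.toFinite

noncomputable def oddCard {W : Type} (K : SimpleGraph W) : ℕ :=
  Nat.card {C : K.ConnectedComponent | Odd (Nat.card C.supp)}

lemma oddCard_iso {W W' : Type} {K : SimpleGraph W} {K' : SimpleGraph W'} (φ : K ≃g K') :
    oddCard K = oddCard K' := by
  apply Nat.card_congr
  refine Equiv.subtypeEquiv φ.connectedComponentEquiv (fun C => ?_)
  simp only [Set.mem_setOf_eq]
  rw [Nat.card_congr (ConnectedComponent.isoEquivSupp φ C)]

lemma reach_isolated {G : SimpleGraph V} {A : Set V} {v : V} (hiso : ∀ w, ¬ G.Adj v w)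
    {x y : ↥A} (hx : (x : V) = v) (h : (G.induce A).Reachable x y) : x = y := by
  obtain ⟨p⟩ := h
  cases p with
  | nil => rfl
  | @cons _ z _ h p =>
    have h' : G.Adj (x : V) (z : V) := h
    rw [hx] at h'
    exact absurd h' (hiso _)

lemma reach_restrict {G : SimpleGraph V} {B : Set V} {v : V} (hv : v ∉ B)
    (hiso : ∀ w, ¬ G.Adj v w) {x y : ↥(insert v B)}
    (p : (G.induce (insert v B)).Walk x y) (hx : (x : V) ∈ B) (hy : (y : V) ∈ B) :
    (G.induce B).Reachable ⟨x, hx⟩ ⟨y, hy⟩ := by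
  induction p with
  | nil => exact Reachable.refl _
  | @cons a z c h p ih =>
    have hz : (z : V) ∈ B := by
      rcases z.2 with h' | h'
      · exfalso
        have h2 : G.Adj (z : V) (a : V) := h.symm
        rw [h'] at h2
        exact hiso _ h2
      · exact h'
    have hadj : (G.induce B).Adj ⟨(a : V), hx⟩ ⟨(z : V), hz⟩ := h
    exact hadj.reachable.trans (ih hz hy)

lemma oddCard_insert_isolated (G : SimpleGraph V) (B : Set V) (v : V) (hv : v ∉ B)
    (hiso : ∀ w, ¬ G.Adj v w) :
    oddCard (G.induce (insert v B)) = oddCard (G.induce B) + 1 := by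
  classical
  set A : Set V := insert v B with hA
  have hBA : B ⊆ A := Set.subset_insert v B
  set ι : G.induce B →g G.induce A := (induceHomOfLE G hBA).toHom with hι
  set vA : ↥A := ⟨v, Set.mem_insert v B⟩ with hvA
  set f : (G.induce B).ConnectedComponent → (G.induce A).ConnectedComponent :=
    ConnectedComponent.map ι with hf
  have fmk : ∀ b : ↥B, f ((G.induce B).connectedComponentMk b) =
      (G.induce A).connectedComponentMk ⟨(b : V), hBA b.2⟩ := by
    intro b
    rw [hf, ConnectedComponent.map_mk]
    congr 1
  -- key characterization
  have key : ∀ (C : (G.induce B).ConnectedComponent) (a : ↥A),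
      (G.induce A).connectedComponentMk a = f C ↔
        ∃ hb : (a : V) ∈ B, (G.induce B).connectedComponentMk ⟨a, hb⟩ = C := by
    intro C a
    induction C using SimpleGraph.ConnectedComponent.ind with
    | _ b =>
    constructor
    · intro h
      rw [fmk] at h
      have hrea : (G.induce A).Reachable a ⟨(b : V), hBA b.2⟩ := ConnectedComponent.exact h
      have haB : (a : V) ∈ B := by
        rcases a.2 with h' | h'
        · exfalso
          have heq := reach_isolated (A := A) hiso h' hrea
          rw [heq] at h'
          exact hv (h' ▸ b.2)
        · exact h'
      refine ⟨haB, ?_⟩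
      obtain ⟨p⟩ := hrea
      have hr := reach_restrict hv hiso p haB b.2
      have hb' : (⟨((⟨(b : V), hBA b.2⟩ : ↥A) : V), b.2⟩ : ↥B) = b := Subtype.ext rfl
      rw [ConnectedComponent.eq]
      rw [hb'] at hr
      exact hr
    · rintro ⟨hb, h⟩
      rw [← h, fmk]
  -- f is injective
  have finj : Function.Injective f := by
    intro C D h
    induction C using SimpleGraph.ConnectedComponent.ind with
    | _ b =>
    have : (G.induce A).connectedComponentMk ⟨(b : V), hBA b.2⟩ = f D := by rw [← fmk, h]
    rw [key] at this
    obtain ⟨hb, h2⟩ := this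
    rw [← h2]
  -- supp cards are preserved
  have hsupp : ∀ C : (G.induce B).ConnectedComponent, Nat.card (f C).supp = Nat.card C.supp := by
    intro C
    apply Nat.card_congr
    refine ⟨fun a => ⟨⟨(a : ↥A), ((key C a).mp a.2).choose⟩, ((key C a).mp a.2).choose_spec⟩,
      fun b => ⟨(⟨((b : ↥B) : V), hBA (b : ↥B).2⟩ : ↥A), ?_⟩, fun a => Subtype.ext (Subtype.ext rfl),
      fun b => Subtype.ext (Subtype.ext rfl)⟩
    show (G.induce A).connectedComponentMk _ = f C
    rw [key]
    exact ⟨(b : ↥B).2, by rw [show (⟨_, (b : ↥B).2⟩ : ↥B) = (b : ↥B) from Subtype.ext rfl]; exact b.2⟩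
  -- the component of v is a singleton
  have hvsupp : ((G.induce A).connectedComponentMk vA).supp = {vA} := by
    ext a
    simp only [ConnectedComponent.mem_supp_iff, Set.mem_singleton_iff]
    constructor
    · intro h
      have hrea : (G.induce A).Reachable vA a := (ConnectedComponent.exact h).symm
      exact (reach_isolated (A := A) hiso rfl hrea).symm
    · rintro rfl; rfl
  have hvodd : Odd (Nat.card ((G.induce A).connectedComponentMk vA).supp) := by
    rw [hvsupp]; simp
  have hvnotr : ∀ C, f C ≠ (G.induce A).connectedComponentMk vA := by
    intro C h
    have h2 : (G.induce A).connectedComponentMk vA = f C := h.symm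
    rw [key] at h2
    obtain ⟨hb, -⟩ := h2
    exact hv hb
  -- the bijection
  have hequiv : {C : (G.induce A).ConnectedComponent | Odd (Nat.card C.supp)} ≃
      ({C : (G.induce B).ConnectedComponent | Odd (Nat.card C.supp)} ⊕ PUnit.{1}) := by
    refine (Equiv.ofBijective
      (fun x => Sum.elim (fun (C : {C : (G.induce B).ConnectedComponent | Odd (Nat.card C.supp)}) =>
        (⟨f C.1, by have h2 := C.2; simp only [Set.mem_setOf_eq] at h2 ⊢; rwa [hsupp]⟩ :
          {C : (G.induce A).ConnectedComponent | Odd (Nat.card C.supp)}))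
        (fun (_ : PUnit.{1}) => ⟨(G.induce A).connectedComponentMk vA, hvodd⟩) x) ⟨?_, ?_⟩).symm
    · rintro (⟨C, hC⟩ | ⟨⟩) (⟨D, hD⟩ | ⟨⟩) h <;>
        simp only [Sum.elim_inl, Sum.elim_inr, Subtype.mk_eq_mk] at h
      · have := finj h
        simp [this]
      · exact absurd h (hvnotr C)
      · exact absurd h.symm (hvnotr D)
      · rfl
    · rintro ⟨D, hD⟩
      by_cases hDv : D = (G.induce A).connectedComponentMk vA
      · exact ⟨Sum.inr PUnit.unit, by simp [hDv]⟩
      · induction D using SimpleGraph.ConnectedComponent.ind with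
        | _ a =>
        have haB : (a : V) ∈ B := by
          rcases a.2 with h' | h'
          · exact absurd (congrArg _ (Subtype.ext h' : a = vA)) hDv
          · exact h'
        have hmk : (G.induce A).connectedComponentMk a =
            f ((G.induce B).connectedComponentMk ⟨a, haB⟩) := by
          rw [key]; exact ⟨haB, rfl⟩
        refine ⟨Sum.inl ⟨(G.induce B).connectedComponentMk ⟨a, haB⟩, ?_⟩, ?_⟩
        · simp only [Set.mem_setOf_eq] at hD ⊢
          rwa [← hsupp, ← hmk]
        · simp only [Sum.elim_inl]
          exact Subtype.ext hmk.symm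
  rw [oddCard, oddCard, Nat.card_congr hequiv, Nat.card_sum]
  simp


/-- The support of a component as a `Finset` of ambient vertices. -/
lemma card_supp_eq {A : Set V} [DecidablePred (· ∈ A)] (G : SimpleGraph V)
    (C : (G.induce A).ConnectedComponent)
    (T : Finset V) (hT : ∀ x, x ∈ T ↔ ∃ hx : x ∈ A, (G.induce A).connectedComponentMk ⟨x, hx⟩ = C) :
    Nat.card C.supp = T.card := by
  classical
  have himg : (T : Set V) = Subtype.val '' C.supp := by
    ext x
    simp only [Finset.mem_coe, hT, Set.mem_image, ConnectedComponent.mem_supp_iff]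
    constructor
    · rintro ⟨hx, h⟩; exact ⟨⟨x, hx⟩, h, rfl⟩
    · rintro ⟨⟨y, hy⟩, h, rfl⟩; exact ⟨hy, h⟩
  rw [Nat.card_coe_set_eq, ← Set.ncard_coe_finset T, himg,
    Set.ncard_image_of_injective _ Subtype.val_injective]

lemma easy_core {G : SimpleGraph V} {M : Finset (Sym2 V)} (hM : IsMat G M) (S : Finset V) :
    oddCard (G.induce ((↑S : Set V)ᶜ)) + 2 * M.card ≤ Fintype.card V + S.card := by
  classical
  set A : Set V := (↑S : Set V)ᶜ with hA
  set K := G.induce A with hK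
  set U : Finset V := Finset.univ \ mch M with hU
  have hUcard : (mch M).card + U.card = Fintype.card V := by
    rw [hU]
    have := Finset.card_sdiff_add_card_eq_card (Finset.subset_univ (mch M))
    simpa [Finset.card_univ, add_comm] using this
  -- the two ways a component can be "hit"
  set P1 : K.ConnectedComponent → Prop :=
    fun C => ∃ x : ↥A, K.connectedComponentMk x = C ∧ (x : V) ∈ U with hP1
  set P2 : K.ConnectedComponent → Prop :=
    fun C => ∃ s, s ∈ S ∧ ∃ e ∈ M, s ∈ e ∧ ∃ x : ↥A, K.connectedComponentMk x = C ∧ (x : V) ∈ e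
    with hP2
  have claim : ∀ C : K.ConnectedComponent, Odd (Nat.card C.supp) → P1 C ∨ P2 C := by
    intro C hodd
    by_contra hcon
    have h1 : ¬ P1 C := fun h => hcon (Or.inl h)
    have h2 : ¬ P2 C := fun h => hcon (Or.inr h)
    rw [hP1] at h1; rw [hP2] at h2
    set T : Finset V := Finset.univ.filter
      (fun x => ∃ hx : x ∈ A, K.connectedComponentMk ⟨x, hx⟩ = C) with hTdef
    have hT : ∀ x, x ∈ T ↔ ∃ hx : x ∈ A, K.connectedComponentMk ⟨x, hx⟩ = C := by
      intro x; simp [hTdef]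
    set EC : Finset (Sym2 V) := M.filter (fun e => ∃ x ∈ e, x ∈ T) with hEC
    have hTE : T = EC.biUnion everts := by
      ext y
      constructor
      · intro hy
        obtain ⟨hyA, hyC⟩ := (hT y).mp hy
        -- y is matched
        have hym : (y : V) ∈ mch M := by
          by_contra hym
          exact h1 ⟨⟨y, hyA⟩, hyC, by simp [hU, hym]⟩
        rw [mem_mch] at hym
        obtain ⟨e, heM, hye⟩ := hym
        refine Finset.mem_biUnion.mpr ⟨e, ?_, mem_everts.mpr hye⟩
        rw [hEC, Finset.mem_filter]
        exact ⟨heM, y, hye, hy⟩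
      · intro hy
        rw [Finset.mem_biUnion] at hy
        obtain ⟨e, heEC, hye⟩ := hy
        rw [hEC, Finset.mem_filter] at heEC
        obtain ⟨heM, x0, hx0e, hx0T⟩ := heEC
        rw [mem_everts] at hye
        obtain ⟨hx0A, hx0C⟩ := (hT x0).mp hx0T
        by_cases hyx : y = x0
        · subst hyx; exact hx0T
        · have hee : e = s(x0, y) := ((Sym2.mem_and_mem_iff (Ne.symm hyx)).mp ⟨hx0e, hye⟩)
          have hadj : G.Adj x0 y := by
            have := hM.1 heM
            rw [hee, SimpleGraph.mem_edgeSet] at this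
            exact this
          have hyA : y ∈ A := by
            rw [hA]
            simp only [Set.mem_compl_iff, Finset.mem_coe]
            intro hyS
            exact h2 ⟨y, hyS, e, heM, hye, ⟨x0, hx0A⟩, hx0C, hx0e⟩
          have hadjK : K.Adj ⟨x0, hx0A⟩ ⟨y, hyA⟩ := hadj
          rw [hT]
          refine ⟨hyA, ?_⟩
          rw [← hx0C]
          exact ConnectedComponent.sound hadjK.symm.reachable
    have hTcard : T.card = 2 * EC.card := by
      rw [hTE, Finset.card_biUnion, Finset.sum_congr rfl (fun e he => ?_), Finset.sum_const,
        smul_eq_mul, mul_comm]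
      · refine card_everts (fun hd => ?_)
        have heM : e ∈ M := Finset.mem_of_mem_filter e (hEC ▸ he)
        exact (G.not_isDiag_of_mem_edgeSet (hM.1 heM)) hd
      · intro e he f hf hef
        have heM : e ∈ M := Finset.mem_of_mem_filter e (hEC ▸ he)
        have hfM : f ∈ M := Finset.mem_of_mem_filter f (hEC ▸ hf)
        simp only [Finset.disjoint_left, mem_everts]
        intro x hx hx'
        exact hM.2 heM hfM hef x ⟨hx, hx'⟩
    rw [card_supp_eq G C T hT] at hodd
    rw [hTcard] at hodd
    obtain ⟨k, hk⟩ := hodd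
    omega
  -- build the injection
  have hinj : ∃ F : {C : K.ConnectedComponent | Odd (Nat.card C.supp)} → V,
      Function.Injective F ∧ ∀ C, F C ∈ S ∪ U := by
    refine ⟨fun C => if h : P1 C.1 then ((h.choose : ↥A) : V) else
      ((claim C.1 C.2).resolve_left h).choose, ?_, ?_⟩
    · intro C D h
      by_cases hC : P1 C.1 <;> by_cases hD : P1 D.1 <;> simp only [hC, hD, dif_pos, dif_neg,
        not_false_iff, dite_true, dite_false] at h
      · obtain ⟨hCc, -⟩ := hC.choose_spec
        obtain ⟨hDc, -⟩ := hD.choose_spec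
        apply Subtype.ext
        rw [← hCc, ← hDc]
        congr 1
        exact Subtype.ext h
      · -- C via P1 (in A), D via P2 (in S) : contradiction
        exfalso
        obtain ⟨-, hCU⟩ := hC.choose_spec
        obtain ⟨hDs, -⟩ := ((claim D.1 D.2).resolve_left hD).choose_spec
        have hmem : ((hC.choose : ↥A) : V) ∈ A := (hC.choose).2
        have hmem2 := h ▸ hmem
        exact hmem2 hDs
      · exfalso
        obtain ⟨-, hDU⟩ := hD.choose_spec
        obtain ⟨hCs, -⟩ := ((claim C.1 C.2).resolve_left hC).choose_spec
        have hmem : ((hD.choose : ↥A) : V) ∈ A := (hD.choose).2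
        have hmem2 := h.symm ▸ hmem
        exact hmem2 hCs
      · obtain ⟨hCs, e, heM, hse, x, hxC, hxe⟩ := ((claim C.1 C.2).resolve_left hC).choose_spec
        obtain ⟨hDs, f, hfM, hsf, y, hyD, hyf⟩ := ((claim D.1 D.2).resolve_left hD).choose_spec
        set s := ((claim C.1 C.2).resolve_left hC).choose with hs
        have hef : e = f := by
          by_contra hef
          exact hM.2 heM hfM hef s ⟨hse, h ▸ hsf⟩
        subst hef
        -- x and y are both the "other" endpoint of e
        have hxs : (x : V) ≠ s := by
          intro hxs
          have hxS : (x : V) ∈ (↑S : Set V) := by rw [hxs]; exact hCs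
          exact x.2 hxS
        have hys0 : (y : V) ≠ ((claim D.1 D.2).resolve_left hD).choose := by
          intro hys
          have hyS : (y : V) ∈ (↑S : Set V) := by rw [hys]; exact hDs
          exact y.2 hyS
        have hys : (y : V) ≠ s := by rw [h]; exact hys0
        have hsf2 : s ∈ e := by rw [h]; exact hsf
        have hex : e = s(s, x) := ((Sym2.mem_and_mem_iff (Ne.symm hxs)).mp ⟨hse, hxe⟩)
        have hey : e = s(s, y) := ((Sym2.mem_and_mem_iff (Ne.symm hys)).mp ⟨hsf2, hyf⟩)
        have hxy : (x : V) = (y : V) := by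
          have := hex.symm.trans hey
          rw [Sym2.eq_iff] at this
          rcases this with ⟨-, h2⟩ | ⟨-, h2⟩
          · exact h2
          · exact absurd h2 hxs
        apply Subtype.ext
        rw [← hxC, ← hyD]
        congr 1
        exact Subtype.ext hxy
    · intro C
      by_cases hC : P1 C.1 <;> simp only [hC, dif_pos, dif_neg, not_false_iff]
      · obtain ⟨-, hCU⟩ := hC.choose_spec
        exact Finset.mem_union_right _ hCU
      · obtain ⟨hCs, -⟩ := ((claim C.1 C.2).resolve_left hC).choose_spec
        exact Finset.mem_union_left _ hCs
  obtain ⟨F, hFinj, hFmem⟩ := hinj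
  have hcard : oddCard K ≤ S.card + U.card := by
    have h1 : oddCard K ≤ (S ∪ U).card := by
      have : Function.Injective (fun C => (⟨F C, hFmem C⟩ : ↥(S ∪ U))) := by
        intro C D h
        exact hFinj (congrArg Subtype.val h)
      calc oddCard K = Nat.card {C : K.ConnectedComponent | Odd (Nat.card C.supp)} := rfl
        _ ≤ Nat.card ↥(S ∪ U) := Nat.card_le_card_of_injective _ this
        _ = (S ∪ U).card := by rw [Nat.card_eq_fintype_card, Fintype.card_coe]
    exact h1.trans (Finset.card_union_le S U)
  have := card_mch hM
  omega


lemma symmR : Symmetric (fun (e f : Sym2 V) => ∀ v, ¬(v ∈ e ∧ v ∈ f)) := by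
  intro e f h v hv
  exact h v ⟨hv.2, hv.1⟩

instance symmInst : Std.Symm (fun (e f : Sym2 V) => ∀ v, ¬(v ∈ e ∧ v ∈ f)) :=
  ⟨fun _ _ h => symmR h⟩

lemma not_isDiag_of_mem {G : SimpleGraph V} {M : Finset (Sym2 V)} (hM : IsMat G M)
    {e : Sym2 V} (he : e ∈ M) : ¬ e.IsDiag :=
  fun hd => (G.not_isDiag_of_mem_edgeSet (hM.1 he)) hd

/-- Extending a matching by an edge on two unmatched vertices. -/
lemma insert_mat {G : SimpleGraph V} {N : Finset (Sym2 V)} (hN : IsMat G N) {a b : V}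
    (hab : G.Adj a b) (ha : a ∉ mch N) (hb : b ∉ mch N) :
    IsMat G (insert s(a,b) N) ∧ (insert s(a,b) N).card = N.card + 1 := by
  have hnm : s(a,b) ∉ N := by
    intro h
    exact ha (mem_mch.mpr ⟨_, h, by simp⟩)
  constructor
  · constructor
    · intro e he
      rw [Finset.coe_insert, Set.mem_insert_iff] at he
      rcases he with rfl | he
      · rwa [SimpleGraph.mem_edgeSet]
      · exact hN.1 he
    · rw [Finset.coe_insert]
      rw [Set.pairwise_insert_of_symm]
      refine ⟨hN.2, fun f hf _ v hv => ?_⟩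
      rw [Sym2.mem_iff] at hv
      rcases hv.1 with rfl | rfl
      · exact ha (mem_mch.mpr ⟨f, hf, hv.2⟩)
      · exact hb (mem_mch.mpr ⟨f, hf, hv.2⟩)
  · rw [Finset.card_insert_of_notMem hnm]

/-- Gallai's argument: if no vertex deletion decreases `nu`, then two distinct
unmatched (by a maximum matching) vertices are not reachable from each other. -/
lemma gallai {G : SimpleGraph V} (hallv : ∀ v : V, nu (del G {v}) = nu G)
    {M : Finset (Sym2 V)} (hM : IsMat G M) (hMc : M.card = nu G)
    {u w : V} (hu : u ∉ mch M) (hw : w ∉ mch M) (huw : u ≠ w) (hr : G.Reachable u w) :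
    False := by
  classical
  set bad : Set ℕ := {d | ∃ N u' w', (IsMat G N ∧ N.card = nu G) ∧
    (u' ∉ mch N ∧ w' ∉ mch N) ∧ u' ≠ w' ∧ G.Reachable u' w' ∧ G.dist u' w' = d} with hbad
  have hne : bad.Nonempty := ⟨_, M, u, w, ⟨hM, hMc⟩, ⟨hu, hw⟩, huw, hr, rfl⟩
  set d := sInf bad with hd
  have hmem := Nat.sInf_mem hne
  rw [← hd] at hmem
  obtain ⟨M0, u0, w0, ⟨hM0, hM0c⟩, ⟨hu0, hw0⟩, hne0, hr0, hdist⟩ := hmem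
  have hmin : ∀ d' ∈ bad, d ≤ d' := fun _ h => Nat.sInf_le h
  obtain ⟨p, hp⟩ := hr0.exists_walk_length_eq_dist
  rw [hdist] at hp
  cases p with
  | nil => exact hne0 rfl
  | @cons _ t _ h q =>
    simp only [Walk.length_cons] at hp
    by_cases hd1 : d = 1
    · -- u0 and w0 are adjacent: extend the matching
      have hq0 : q.length = 0 := by omega
      have htw : t = w0 := q.eq_of_length_eq_zero hq0
      subst htw
      obtain ⟨hmat, hcard⟩ := insert_mat hM0 h hu0 hw0
      have := card_le_nu hmat
      omega
    · have hd2 : 2 ≤ d := by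
        rcases Nat.eq_zero_or_pos d with h0 | h0
        · omega
        · omega
      have htw : t ≠ w0 := by
        rintro rfl
        have hle1 : G.dist u0 t ≤ 1 := by
          have := SimpleGraph.dist_le (Walk.cons h Walk.nil)
          simpa using this
        omega
      -- t is matched by M0
      have htM0 : t ∈ mch M0 := by
        by_contra htM0
        have hbadmem : G.dist t w0 ∈ bad :=
          ⟨M0, t, w0, ⟨hM0, hM0c⟩, ⟨htM0, hw0⟩, htw, q.reachable, rfl⟩
        have hle : G.dist t w0 ≤ d - 1 := by
          have := SimpleGraph.dist_le q
          omega
        have := hmin _ hbadmem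
        omega
      -- pick a maximum matching avoiding t, maximizing overlap with M0
      set K : Set ℕ := {k | ∃ N', (IsMat G N' ∧ N'.card = nu G) ∧ t ∉ mch N' ∧
        (M0 ∩ N').card = k} with hKdef
      have hKne : K.Nonempty := by
        obtain ⟨⟨M1, hM1, hM1c⟩, -⟩ := nu_isGreatest (del G {t})
        refine ⟨_, M1, ⟨isMat_mono del_le hM1, by rw [hM1c, hallv t]⟩, ?_, rfl⟩
        rw [mem_mch]
        rintro ⟨e, heM1, hte⟩
        have := (mem_del_edgeSet.mp (hM1.1 heM1)).2 t hte
        simp at this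
      have hKbdd : BddAbove K := by
        refine ⟨nu G, ?_⟩
        rintro k ⟨N', ⟨hN', hN'c⟩, -, rfl⟩
        calc (M0 ∩ N').card ≤ N'.card := Finset.card_le_card (Finset.inter_subset_right)
          _ = nu G := hN'c
      have hKmem := Nat.sSup_mem hKne hKbdd
      obtain ⟨N', ⟨hN', hN'c⟩, htN', hkc⟩ := hKmem
      have hkmax : ∀ k ∈ K, k ≤ sSup K := fun _ h => le_csSup hKbdd h
      -- u0, w0 are matched by N'
      have hu0N' : u0 ∈ mch N' := by
        by_contra hc
        have htu : u0 ≠ t := fun he => (he ▸ hu0) htM0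
        have hbadmem : G.dist u0 t ∈ bad :=
          ⟨N', u0, t, ⟨hN', hN'c⟩, ⟨hc, htN'⟩, htu, h.reachable, rfl⟩
        have hle : G.dist u0 t ≤ 1 := by
          have := SimpleGraph.dist_le (Walk.cons h Walk.nil)
          simpa using this
        have := hmin _ hbadmem
        omega
      have hw0N' : w0 ∈ mch N' := by
        by_contra hc
        have hbadmem : G.dist t w0 ∈ bad :=
          ⟨N', t, w0, ⟨hN', hN'c⟩, ⟨htN', hc⟩, htw, q.reachable, rfl⟩
        have hle : G.dist t w0 ≤ d - 1 := by
          have := SimpleGraph.dist_le q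
          omega
        have := hmin _ hbadmem
        omega
      -- find x matched by M0 but not N', x ≠ t
      have hcards : (mch M0).card = (mch N').card := by
        rw [card_mch hM0, card_mch hN', hM0c, hN'c]
      have hsub2 : {u0, w0} ⊆ mch N' \ mch M0 := by
        intro x hx
        rcases Finset.mem_insert.mp hx with rfl | hx
        · exact Finset.mem_sdiff.mpr ⟨hu0N', hu0⟩
        · rw [Finset.mem_singleton] at hx; subst hx
          exact Finset.mem_sdiff.mpr ⟨hw0N', hw0⟩
      have hcard2 : 2 ≤ (mch N' \ mch M0).card := by
        calc 2 = ({u0, w0} : Finset V).card := by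
              rw [Finset.card_insert_of_notMem (by simpa using hne0), Finset.card_singleton]
          _ ≤ _ := Finset.card_le_card hsub2
      have hdiffeq : (mch M0 \ mch N').card = (mch N' \ mch M0).card := by
        have h1 := Finset.card_sdiff_add_card_inter (mch M0) (mch N')
        have h2 := Finset.card_sdiff_add_card_inter (mch N') (mch M0)
        rw [Finset.inter_comm] at h2
        omega
      have hgt1 : 1 < (mch M0 \ mch N').card := by omega
      obtain ⟨x1, hx1, x2, hx2, hx12⟩ := Finset.one_lt_card.mp hgt1
      have hx : ∃ x ∈ mch M0 \ mch N', x ≠ t := by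
        by_cases h1 : x1 = t
        · exact ⟨x2, hx2, fun he => hx12 (by rw [h1, he])⟩
        · exact ⟨x1, hx1, h1⟩
      obtain ⟨x, hxmem, hxt⟩ := hx
      rw [Finset.mem_sdiff] at hxmem
      obtain ⟨hxM0, hxN'⟩ := hxmem
      rw [mem_mch] at hxM0
      obtain ⟨e, heM0, hxe⟩ := hxM0
      set y := Sym2.Mem.other hxe with hy
      have hye : y ∈ e := Sym2.other_mem hxe
      have hes : s(x, y) = e := Sym2.other_spec hxe
      have hxy : y ≠ x := Sym2.other_ne (not_isDiag_of_mem hM0 heM0) hxe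
      have hadjxy : G.Adj x y := by
        have h2 := hM0.1 heM0
        rw [← hes, SimpleGraph.mem_edgeSet] at h2
        exact h2
      by_cases hyN' : y ∈ mch N'
      · -- swap an edge: N'' := insert e (N'.erase f)
        rw [mem_mch] at hyN'
        obtain ⟨f, hfN', hyf⟩ := hyN'
        have heN' : e ∉ N' := fun he => hxN' (mem_mch.mpr ⟨e, he, hxe⟩)
        have hfe : f ≠ e := fun he => heN' (he ▸ hfN')
        have hfM0 : f ∉ M0 := by
          intro hfM0
          exact hM0.2 hfM0 heM0 hfe y ⟨hyf, hye⟩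
        have hyt : y ≠ t := by
          rintro rfl
          exact htN' (mem_mch.mpr ⟨f, hfN', hyf⟩)
        set N'' := insert e (N'.erase f) with hN''
        have heE : e ∉ N'.erase f := fun hmem => heN' (Finset.mem_of_mem_erase hmem)
        have hmatN'' : IsMat G N'' := by
          constructor
          · intro g hg
            rw [hN'', Finset.coe_insert, Set.mem_insert_iff] at hg
            rcases hg with rfl | hg
            · exact hM0.1 heM0
            · exact hN'.1 (Finset.coe_subset.mpr (Finset.erase_subset f N') hg)
          · rw [hN'', Finset.coe_insert, Set.pairwise_insert_of_symm]
            constructor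
            · exact Set.Pairwise.mono (Finset.coe_subset.mpr (Finset.erase_subset f N')) hN'.2
            · intro g hg hge v hv
              have hgN' : g ∈ N'.erase f := hg
              have hgf : g ≠ f := Finset.ne_of_mem_erase hgN'
              have hgN : g ∈ N' := Finset.mem_of_mem_erase hgN'
              have hv1 : v ∈ e := hv.1
              rw [← hes, Sym2.mem_iff] at hv1
              rcases hv1 with rfl | rfl
              · exact hxN' (mem_mch.mpr ⟨g, hgN, hv.2⟩)
              · exact hN'.2 hgN hfN' hgf y ⟨hv.2, hyf⟩
        have h1 : 1 ≤ N'.card := Finset.card_pos.mpr ⟨f, hfN'⟩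
        have hcardN'' : N''.card = nu G := by
          rw [hN'', Finset.card_insert_of_notMem heE, Finset.card_erase_of_mem hfN']
          omega
        have htN'' : t ∉ mch N'' := by
          rw [mem_mch]
          rintro ⟨g, hg, htg⟩
          rw [hN'', Finset.mem_insert] at hg
          rcases hg with rfl | hg
          · rw [← hes, Sym2.mem_iff] at htg
            rcases htg with h2 | h2
            · exact hxt h2.symm
            · exact hyt h2.symm
          · exact htN' (mem_mch.mpr ⟨g, Finset.mem_of_mem_erase hg, htg⟩)
        have hsubset : insert e (M0 ∩ N') ⊆ M0 ∩ N'' := by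
          intro g hg
          rw [Finset.mem_insert] at hg
          rcases hg with rfl | hg
          · exact Finset.mem_inter.mpr ⟨heM0, Finset.mem_insert_self _ _⟩
          · rw [Finset.mem_inter] at hg
            refine Finset.mem_inter.mpr ⟨hg.1, ?_⟩
            rw [hN'', Finset.mem_insert]
            exact Or.inr (Finset.mem_erase.mpr ⟨fun hgf => hfM0 (hgf ▸ hg.1), hg.2⟩)
        have heMN : e ∉ M0 ∩ N' := fun hmem => heN' (Finset.mem_inter.mp hmem).2
        have hK'' : (M0 ∩ N'').card ∈ K := ⟨N'', ⟨hmatN'', hcardN''⟩, htN'', rfl⟩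
        have hle := hkmax _ hK''
        have hge : sSup K + 1 ≤ (M0 ∩ N'').card := by
          calc sSup K + 1 = (M0 ∩ N').card + 1 := by rw [hkc]
            _ = (insert e (M0 ∩ N')).card := (Finset.card_insert_of_notMem heMN).symm
            _ ≤ _ := Finset.card_le_card hsubset
        omega
      · -- y unmatched by N': extend N'
        rw [← hes] at heM0
        obtain ⟨hmat, hcard⟩ := insert_mat hN' hadjxy hxN' hyN'
        have := card_le_nu hmat
        omega

lemma card_supp_eq' (G : SimpleGraph V) (C : G.ConnectedComponent) (T : Finset V)
    (hT : ∀ x, x ∈ T ↔ G.connectedComponentMk x = C) : Nat.card C.supp = T.card := by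
  have himg : (T : Set V) = C.supp := by
    ext x
    simp only [Finset.mem_coe, hT, ConnectedComponent.mem_supp_iff]
  rw [Nat.card_coe_set_eq, ← himg, Set.ncard_coe_finset]

lemma count_case2 {G : SimpleGraph V} (hallv : ∀ v, nu (del G {v}) = nu G) :
    2 * nu G + oddCard G = Fintype.card V := by
  classical
  obtain ⟨⟨M, hM, hMc⟩, -⟩ := nu_isGreatest G
  set U : Finset V := Finset.univ \ mch M with hU
  have hUcard : (mch M).card + U.card = Fintype.card V := by
    rw [hU]
    have := Finset.card_sdiff_add_card_eq_card (Finset.subset_univ (mch M))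
    simpa [Finset.card_univ, add_comm] using this
  have hmemU : ∀ x, x ∈ U ↔ x ∉ mch M := by
    intro x; simp [hU]
  set T : G.ConnectedComponent → Finset V :=
    fun C => Finset.univ.filter (fun x => G.connectedComponentMk x = C) with hTdef
  have hT : ∀ C x, x ∈ T C ↔ G.connectedComponentMk x = C := by
    intro C x; simp [hTdef]
  have hedge : ∀ C, ∀ e ∈ M, ∀ x0, x0 ∈ e → x0 ∈ T C → everts e ⊆ T C := by
    intro C e heM x0 hx0e hx0T y hy
    rw [mem_everts] at hy
    by_cases hxy : y = x0
    · subst hxy; exact hx0T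
    · have hee : e = s(x0, y) := (Sym2.mem_and_mem_iff (Ne.symm hxy)).mp ⟨hx0e, hy⟩
      have hadj : G.Adj x0 y := by
        have h2 := hM.1 heM
        rw [hee, SimpleGraph.mem_edgeSet] at h2
        exact h2
      rw [hT] at hx0T ⊢
      rw [← hx0T]
      exact ConnectedComponent.sound hadj.symm.reachable
  have huniq : ∀ x y, x ∈ U → y ∈ U → G.connectedComponentMk x = G.connectedComponentMk y →
      x = y := by
    intro x y hx hy hmk
    by_contra hne
    exact gallai hallv hM hMc ((hmemU x).mp hx) ((hmemU y).mp hy) hne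
      (ConnectedComponent.exact hmk)
  have hdecomp : ∀ C, T C =
      (M.filter (fun e => ∃ x ∈ e, x ∈ T C)).biUnion everts ∪ (T C ∩ U) := by
    intro C
    ext y
    constructor
    · intro hy
      by_cases hym : y ∈ mch M
      · rw [mem_mch] at hym
        obtain ⟨e, heM, hye⟩ := hym
        exact Finset.mem_union_left _ (Finset.mem_biUnion.mpr
          ⟨e, Finset.mem_filter.mpr ⟨heM, y, hye, hy⟩, mem_everts.mpr hye⟩)
      · exact Finset.mem_union_right _ (Finset.mem_inter.mpr ⟨hy, (hmemU y).mpr hym⟩)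
    · intro hy
      rcases Finset.mem_union.mp hy with hy | hy
      · obtain ⟨e, heE, hye⟩ := Finset.mem_biUnion.mp hy
        obtain ⟨heM, x0, hx0e, hx0T⟩ := Finset.mem_filter.mp heE
        exact hedge C e heM x0 hx0e hx0T hye
      · exact (Finset.mem_inter.mp hy).1
  have hcardT : ∀ C, (T C).card =
      2 * (M.filter (fun e => ∃ x ∈ e, x ∈ T C)).card + (T C ∩ U).card := by
    intro C
    have hdisj : Disjoint ((M.filter (fun e => ∃ x ∈ e, x ∈ T C)).biUnion everts) (T C ∩ U) := by
      rw [Finset.disjoint_left]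
      intro a ha ha'
      obtain ⟨e, heE, hae⟩ := Finset.mem_biUnion.mp ha
      have haU : a ∈ U := (Finset.mem_inter.mp ha').2
      rw [hmemU] at haU
      exact haU (mem_mch.mpr ⟨e, Finset.mem_of_mem_filter e heE, mem_everts.mp hae⟩)
    have hbu : ((M.filter (fun e => ∃ x ∈ e, x ∈ T C)).biUnion everts).card =
        2 * (M.filter (fun e => ∃ x ∈ e, x ∈ T C)).card := by
      rw [Finset.card_biUnion, Finset.sum_congr rfl (fun e he => ?_), Finset.sum_const,
        smul_eq_mul, mul_comm]
      · exact card_everts (not_isDiag_of_mem hM (Finset.mem_of_mem_filter e he))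
      · intro e he f hf hef
        simp only [Finset.disjoint_left, mem_everts]
        intro x hx hx'
        exact hM.2 (Finset.mem_of_mem_filter e he) (Finset.mem_of_mem_filter f hf) hef x ⟨hx, hx'⟩
    calc (T C).card = ((M.filter (fun e => ∃ x ∈ e, x ∈ T C)).biUnion everts ∪ (T C ∩ U)).card :=
          by rw [← hdecomp C]
      _ = _ + (T C ∩ U).card := Finset.card_union_of_disjoint hdisj
      _ = _ := by rw [hbu]
  have hle1 : ∀ C, (T C ∩ U).card ≤ 1 := by
    intro C
    rw [Finset.card_le_one]
    intro a ha b hb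
    rw [Finset.mem_inter] at ha hb
    exact huniq a b ha.2 hb.2 (((hT C a).mp ha.1).trans ((hT C b).mp hb.1).symm)
  have hoddiff : ∀ C, Odd (Nat.card C.supp) ↔ ∃ u ∈ U, G.connectedComponentMk u = C := by
    intro C
    rw [card_supp_eq' G C (T C) (hT C), hcardT C]
    constructor
    · intro hodd
      have h1 : (T C ∩ U).card = 1 := by
        have := hle1 C
        obtain ⟨k, hk⟩ := hodd
        omega
      obtain ⟨u, hu⟩ := Finset.card_eq_one.mp h1
      have h2 : u ∈ T C ∩ U := hu ▸ Finset.mem_singleton_self u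
      rw [Finset.mem_inter] at h2
      exact ⟨u, h2.2, (hT C u).mp h2.1⟩
    · rintro ⟨u, huU, huC⟩
      have h1 : u ∈ T C ∩ U := Finset.mem_inter.mpr ⟨(hT C u).mpr huC, huU⟩
      have h2 : (T C ∩ U).card = 1 :=
        le_antisymm (hle1 C) (Finset.card_pos.mpr ⟨u, h1⟩)
      rw [h2]
      exact ⟨(M.filter (fun e => ∃ x ∈ e, x ∈ T C)).card, by ring⟩
  have hequiv : ↥U ≃ {C : G.ConnectedComponent | Odd (Nat.card C.supp)} := by
    refine Equiv.ofBijective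
      (fun u => ⟨G.connectedComponentMk u, (hoddiff _).mpr ⟨u, u.2, rfl⟩⟩) ⟨?_, ?_⟩
    · intro a b h
      exact Subtype.ext (huniq _ _ a.2 b.2 (congrArg Subtype.val h))
    · rintro ⟨C, hC⟩
      obtain ⟨u, huU, huC⟩ := (hoddiff C).mp hC
      exact ⟨⟨u, huU⟩, Subtype.ext huC⟩
  have hoc : oddCard G = U.card := by
    rw [oddCard, ← Nat.card_congr hequiv, Nat.card_eq_fintype_card, Fintype.card_coe]
  have := card_mch hM
  omega


lemma induce_del_eq {G : SimpleGraph V} {A : Set V} {v : V} (hv : v ∉ A) :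
    (del G {v}).induce A = G.induce A := by
  ext a b
  constructor
  · exact fun h => h.1
  · intro h
    exact ⟨h, fun h' => hv (h' ▸ a.2), fun h' => hv (h' ▸ b.2)⟩

lemma hard (G : SimpleGraph V) : ∃ S : Finset V,
    2 * (nu G : ℤ) = (Fintype.card V : ℤ) + S.card - oddCard (G.induce ((↑S : Set V)ᶜ)) := by
  classical
  generalize hk : G.edgeSet.ncard = k
  induction k using Nat.strong_induction_on generalizing G with
  | _ k ih =>
  by_cases hcase : ∃ v, nu (del G {v}) < nu G
  · obtain ⟨v, hv⟩ := hcase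
    have hlt : (del G {v}).edgeSet.ncard < k := hk ▸ edge_ncard_lt hv
    obtain ⟨S'', hS''⟩ := ih _ hlt (del G {v}) rfl
    have hnud : nu (del G {v}) + 1 = nu G := by
      have := nu_le_del_succ (G := G) (v := v)
      omega
    by_cases hvS : v ∈ S''
    · exfalso
      have hveq : (del G {v}).induce ((↑S'' : Set V)ᶜ) = G.induce ((↑S'' : Set V)ᶜ) :=
        induce_del_eq (by simp [hvS])
      obtain ⟨⟨M, hM, hMc⟩, -⟩ := nu_isGreatest G
      have heasy := easy_core hM S''
      rw [hveq] at hS''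
      rw [hMc] at heasy
      push_cast at heasy hS''
      omega
    · refine ⟨insert v S'', ?_⟩
      set B : Set V := (↑(insert v S'') : Set V)ᶜ with hB
      have hB1 : (↑S'' : Set V)ᶜ = insert v B := by
        rw [hB]
        ext x
        by_cases hxv : x = v <;> simp [hxv, hvS]
      have hvB : v ∉ B := by simp [hB]
      have hiso : ∀ w, ¬ (del G {v}).Adj v w := isolated_del
      have hsplit : oddCard ((del G {v}).induce ((↑S'' : Set V)ᶜ))
          = oddCard ((del G {v}).induce B) + 1 := by
        rw [hB1]
        exact oddCard_insert_isolated _ B v hvB hiso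
      have hBeq : (del G {v}).induce B = G.induce B := induce_del_eq hvB
      rw [hsplit, hBeq] at hS''
      have hcard : (insert v S'').card = S''.card + 1 := Finset.card_insert_of_notMem hvS
      rw [hcard]
      push_cast at hS'' ⊢
      omega
  · push_neg at hcase
    have hallv : ∀ v, nu (del G {v}) = nu G := fun v => le_antisymm nu_del_le (hcase v)
    have hcount := count_case2 hallv
    refine ⟨∅, ?_⟩
    have hempty : ((↑(∅ : Finset V) : Set V))ᶜ = Set.univ := by simp
    have hoc : oddCard (G.induce ((↑(∅ : Finset V) : Set V)ᶜ)) = oddCard G := by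
      rw [hempty]
      exact oddCard_iso (induceUnivIso G)
    rw [hoc]
    simp only [Finset.card_empty]
    push_cast
    omega

end TutteBerge

/-- Tutte–Berge formula: the maximum size `m` of a matching in `H`
satisfies `2m = min over S of (n + |S| - odd(H - S))`. -/
theorem tutte_berge_formula
    {V : Type} [Fintype V] [DecidableEq V]
    (H : SimpleGraph V) [DecidableRel H.Adj] :
    ∃ m : ℕ,
      IsGreatest {s : ℕ | ∃ M : Finset (Sym2 V), ↑M ⊆ H.edgeSet ∧
        (M : Set (Sym2 V)).Pairwise (fun e f => ∀ v, ¬(v ∈ e ∧ v ∈ f)) ∧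
        M.card = s} m ∧
      IsLeast {z : ℤ | ∃ S : Finset V,
        z = (Fintype.card V : ℤ) + S.card -
          Nat.card {C : (H.induce ((↑S)ᶜ : Set V)).ConnectedComponent |
            Odd (Nat.card C.supp)}} (2 * m) := by
  classical
  refine ⟨TutteBerge.nu H, ⟨?_, ?_⟩, ?_, ?_⟩
  · obtain ⟨M, hM, hc⟩ := (TutteBerge.nu_isGreatest H).1
    exact ⟨M, hM.1, hM.2, hc⟩
  · rintro s ⟨M, h1, h2, h3⟩
    exact (TutteBerge.nu_isGreatest H).2 ⟨M, ⟨h1, h2⟩, h3⟩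
  · obtain ⟨S, hS⟩ := TutteBerge.hard H
    refine ⟨S, ?_⟩
    have hdef : (TutteBerge.oddCard (H.induce ((↑S : Set V)ᶜ)) : ℤ) =
        (Nat.card {C : (H.induce ((↑S)ᶜ : Set V)).ConnectedComponent |
          Odd (Nat.card C.supp)} : ℤ) := rfl
    rw [← hdef, ← hS]
  · rintro z ⟨S, rfl⟩
    obtain ⟨⟨M, hM, hMc⟩, -⟩ := TutteBerge.nu_isGreatest H
    have heasy := TutteBerge.easy_core hM S
    rw [hMc] at heasy
    have hdef : TutteBerge.oddCard (H.induce ((↑S : Set V)ᶜ)) =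
        Nat.card {C : (H.induce ((↑S)ᶜ : Set V)).ConnectedComponent |
          Odd (Nat.card C.supp)} := rfl
    rw [hdef] at heasy
    push_cast at heasy ⊢
    omega
end

section
/- (Hakimi) Nonnegative integers d_1 ≥ d_2 ≥ … ≥ d_n are the degree sequence of some multigraph (loopless, parallel edges allowed) on n vertices if and only if d_1 + … + d_n is even and d_1 ≤ d_2 + … + d_n. -/
lemma hakimi_key (n : ℕ) : ∀ S : ℕ, ∀ d : Fin n → ℕ, ∑ i, d i = S → Even S →
    (∀ i, 2 * d i ≤ S) →
    ∃ w : Fin n → Fin n → ℕ,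
      (∀ u v, w u v = w v u) ∧ (∀ v, w v v = 0) ∧ (∀ v, ∑ u, w v u = d v) := by
  intro S
  induction S using Nat.strong_induction_on with
  | _ S ih =>
    intro d hsum heven hbound
    rcases Nat.eq_zero_or_pos S with h0 | hpos
    · subst h0
      refine ⟨fun _ _ => 0, fun _ _ => rfl, fun _ => rfl, fun v => ?_⟩
      have hv : d v ≤ 0 := hsum ▸ Finset.single_le_sum (f := d) (fun _ _ => Nat.zero_le _)
        (Finset.mem_univ v)
      simpa using (hv.antisymm (Nat.zero_le _)).symm
    · -- S ≥ 2
      have hS2 : 2 ≤ S := Nat.le_of_dvd hpos heven.two_dvd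
      have hne : (Finset.univ : Finset (Fin n)).Nonempty := by
        by_contra h
        rw [Finset.not_nonempty_iff_eq_empty] at h
        rw [h, Finset.sum_empty] at hsum
        omega
      obtain ⟨i, -, hi⟩ := Finset.exists_max_image Finset.univ d hne
      have hdi : 0 < d i := by
        by_contra h
        have : ∀ k, d k = 0 := fun k => by have := hi k (Finset.mem_univ k); omega
        rw [Finset.sum_congr rfl (fun k _ => this k), Finset.sum_const_zero] at hsum
        omega
      -- second vertex
      have hcompl : ∑ k ∈ Finset.univ.erase i, d k > 0 := by
        have := Finset.add_sum_erase Finset.univ d (Finset.mem_univ i)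
        have h2 := hbound i
        omega
      have hne2 : (Finset.univ.erase i).Nonempty := by
        by_contra h
        rw [Finset.not_nonempty_iff_eq_empty] at h
        rw [h, Finset.sum_empty] at hcompl
        omega
      obtain ⟨j, hjmem, hj⟩ := Finset.exists_max_image (Finset.univ.erase i) d hne2
      have hji : j ≠ i := Finset.ne_of_mem_erase hjmem
      have hdj : 0 < d j := by
        by_contra h
        have : ∀ k ∈ Finset.univ.erase i, d k = 0 := fun k hk => by
          have := hj k hk; omega
        rw [Finset.sum_congr rfl this, Finset.sum_const_zero] at hcompl
        omega
      set d' : Fin n → ℕ := Function.update (Function.update d i (d i - 1)) j (d j - 1)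
        with hd'
      have hd'i : d' i = d i - 1 := by
        simp [hd', Function.update, hji.symm]
      have hd'j : d' j = d j - 1 := by simp [hd']
      have hd'k : ∀ k, k ≠ i → k ≠ j → d' k = d k := fun k h1 h2 => by
        simp [hd', Function.update, h1, h2]
      -- sum decomposition
      have hdecomp : S = d j + (d i + ∑ k ∈ (Finset.univ.erase j).erase i, d k) := by
        rw [← hsum, ← Finset.add_sum_erase Finset.univ d (Finset.mem_univ j),
          ← Finset.add_sum_erase _ d (Finset.mem_erase.mpr ⟨hji.symm, Finset.mem_univ i⟩)]
      have hcongr : ∑ k ∈ (Finset.univ.erase j).erase i, d' k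
          = ∑ k ∈ (Finset.univ.erase j).erase i, d k :=
        Finset.sum_congr rfl (fun k hk => by
          rw [Finset.mem_erase, Finset.mem_erase] at hk
          exact hd'k k hk.1 hk.2.1)
      have hsum' : ∑ k, d' k = S - 2 := by
        rw [← Finset.add_sum_erase Finset.univ d' (Finset.mem_univ j),
          ← Finset.add_sum_erase _ d' (Finset.mem_erase.mpr ⟨hji.symm, Finset.mem_univ i⟩),
          hd'i, hd'j, hcongr]
        omega
      have hbound' : ∀ k, 2 * d' k ≤ S - 2 := by
        intro k
        rcases eq_or_ne k i with rfl | hki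
        · rw [hd'i]; have := hbound k; omega
        rcases eq_or_ne k j with rfl | hkj
        · rw [hd'j]; have := hbound k; omega
        rw [hd'k k hki hkj]
        rcases Nat.eq_zero_or_pos (d k) with h | h
        · omega
        · have hk1 : d k ≤ d j := hj k (Finset.mem_erase.mpr ⟨hki, Finset.mem_univ k⟩)
          have hk2 : d k ≤ d i := hi k (Finset.mem_univ k)
          have hk3 : d k ≤ ∑ m ∈ (Finset.univ.erase j).erase i, d m :=
            Finset.single_le_sum (f := d) (fun _ _ => Nat.zero_le _)
              (Finset.mem_erase.mpr ⟨hki, Finset.mem_erase.mpr ⟨hkj, Finset.mem_univ k⟩⟩)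
          rcases heven with ⟨c, hc⟩
          omega
      obtain ⟨w', hw'sym, hw'diag, hw'deg⟩ :=
        ih (S - 2) (by omega) d' hsum' (by rcases heven with ⟨c, hc⟩; exact ⟨c - 1, by omega⟩)
          hbound'
      set e : Fin n → Fin n → ℕ := fun u v =>
        (if u = i then 1 else 0) * (if v = j then 1 else 0)
          + (if u = j then 1 else 0) * (if v = i then 1 else 0) with he
      have hesum : ∀ v, ∑ u, e v u
          = (if v = i then 1 else 0) + (if v = j then 1 else 0) := by
        intro v
        simp only [he]
        rw [Finset.sum_add_distrib, ← Finset.mul_sum, ← Finset.mul_sum]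
        rw [Finset.sum_ite_eq' Finset.univ j (fun _ => 1),
          Finset.sum_ite_eq' Finset.univ i (fun _ => 1)]
        simp
      refine ⟨fun u v => w' u v + e u v, fun u v => ?_, fun v => ?_, fun v => ?_⟩
      · show w' u v + e u v = w' v u + e v u
        rw [hw'sym u v]
        simp only [he]
        ring
      · show w' v v + e v v = 0
        rw [hw'diag v]
        simp only [he]
        rcases eq_or_ne v i with rfl | hvi
        · simp [hji.symm]
        · simp [hvi]
      · show ∑ u, (w' v u + e v u) = d v
        rw [Finset.sum_add_distrib, hw'deg v, hesum v]
        rcases eq_or_ne v i with rfl | hvi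
        · have hvj : v ≠ j := Ne.symm hji
          rw [hd'i]
          simp only [if_neg hvj, if_pos rfl, if_true, add_zero, zero_add]
          omega
        rcases eq_or_ne v j with rfl | hvj
        · rw [hd'j]
          simp only [if_neg hvi, if_pos rfl, if_true, add_zero, zero_add]
          omega
        · rw [hd'k v hvi hvj]
          simp [hvi, hvj]

/-- Hakimi: nonincreasing nonnegative integers `d 0 ≥ … ≥ d (n-1)` form the
degree sequence of a loopless multigraph (given by a symmetric multiplicity function `w`
with zero diagonal) iff their sum is even and `d 0 ≤ d 1 + … + d (n-1)`. -/
theorem hakimi_multigraph_degree_sequence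
    (n : ℕ) (hn : 0 < n) (d : Fin n → ℕ) (hd : Antitone d) :
    (∃ w : Fin n → Fin n → ℕ,
        (∀ u v, w u v = w v u) ∧ (∀ v, w v v = 0) ∧ (∀ v, ∑ u, w v u = d v)) ↔
      (Even (∑ i, d i) ∧
        d ⟨0, hn⟩ ≤ ∑ i ∈ Finset.univ.erase (⟨0, hn⟩ : Fin n), d i) := by
  constructor
  · rintro ⟨w, hsym, hdiag, hdeg⟩
    constructor
    · -- evenness of the degree sum
      have hprod : ∑ i, d i = ∑ p ∈ Finset.univ ×ˢ Finset.univ, w p.1 p.2 := by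
        rw [Finset.sum_product]
        exact Finset.sum_congr rfl fun v _ => (hdeg v).symm
      rw [hprod]
      have h : ((∑ p ∈ Finset.univ ×ˢ Finset.univ, w p.1 p.2 : ℕ) : ZMod 2) = 0 := by
        push_cast
        refine Finset.sum_involution (fun p _ => p.swap) ?_ ?_ (fun p _ => Finset.mem_univ _)
          (fun p _ => Prod.swap_swap p)
        · intro p _
          show ((w p.1 p.2 : ℕ) : ZMod 2) + ((w p.2 p.1 : ℕ) : ZMod 2) = 0
          rw [hsym p.1 p.2]
          exact CharTwo.add_self_eq_zero _
        · intro p _ hne heq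
          apply hne
          have h12 : p.1 = p.2 := by
            have := congrArg Prod.fst heq
            simpa using this.symm
          show ((w p.1 p.2 : ℕ) : ZMod 2) = 0
          rw [h12, hdiag p.2]
          simp
      rw [ZMod.natCast_eq_zero_iff] at h
      rcases h with ⟨c, hc⟩
      exact ⟨c, by omega⟩
    · -- max degree bound
      have h1 : d ⟨0, hn⟩ = ∑ u ∈ Finset.univ.erase (⟨0, hn⟩ : Fin n), w ⟨0, hn⟩ u := by
        rw [← hdeg ⟨0, hn⟩,
          ← Finset.add_sum_erase Finset.univ (w ⟨0, hn⟩) (Finset.mem_univ ⟨0, hn⟩),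
          hdiag ⟨0, hn⟩, zero_add]
      rw [h1]
      refine Finset.sum_le_sum fun u _ => ?_
      calc w ⟨0, hn⟩ u = w u ⟨0, hn⟩ := hsym _ _
        _ ≤ ∑ x, w u x := Finset.single_le_sum (fun _ _ => Nat.zero_le _) (Finset.mem_univ _)
        _ = d u := hdeg u
  · rintro ⟨heven, hle⟩
    apply hakimi_key n (∑ i, d i) d rfl heven
    intro k
    have hS : ∑ i, d i
        = d ⟨0, hn⟩ + ∑ i ∈ Finset.univ.erase (⟨0, hn⟩ : Fin n), d i :=
      (Finset.add_sum_erase Finset.univ d (Finset.mem_univ _)).symm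
    have hk0 : d k ≤ d ⟨0, hn⟩ := hd (by simp [Fin.le_def])
    rcases eq_or_ne k ⟨0, hn⟩ with rfl | hk
    · omega
    · have hk1 : d k ≤ ∑ i ∈ Finset.univ.erase (⟨0, hn⟩ : Fin n), d i :=
        Finset.single_le_sum (f := d) (fun _ _ => Nat.zero_le _)
          (Finset.mem_erase.mpr ⟨hk, Finset.mem_univ k⟩)
      omega
end

section
/- Every loopless multigraph G admits a proper edge-coloring with Δ(G) + μ(G) colors, where μ(G) is the maximum edge multiplicity. -/
/-!
Vizing's fan argument, one uncolored edge at a time. Let `u v₀` be uncolored in a partial coloring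
with `k ≥ Δ + μ` colors, and call `y` a fan vertex if there is a chain `y = z₀, z₁, …, zₙ = v₀`
in which the color of `u zⱼ₋₁` is missing at `zⱼ`: moving each of these colors one step down the
chain frees a slot at `u y`. If a fan vertex and `u` miss a common color, shift and color `u y`.
Otherwise the fan is closed under following a missing color to the `u`-edge of that color, and
counting (each vertex misses at least `μ` colors, `v₀` at least `μ + 1`, while the `u`-edges into
the fan carry fewer than `μ` colors per fan vertex) gives fan vertices `p ≠ t` missing a common
color `β`. With `α` missing at `u`, the `α/β` Kempe graph has maximum degree `2`, so each of its
components has at most two vertices of degree `≤ 1`: the Kempe chain of `p` or of `t` avoids `u`,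
and swapping `α` and `β` on it makes that fan vertex miss `α` together with `u`.
-/

/-- A proper `k`-edge-coloring of the loopless multigraph with multiplicity function `w`:
a family of matchings (one per color, given as symmetric boolean relations in which every
vertex has at most one partner) such that each edge-multiplicity `w u v` equals the number
of colors joining `u` and `v`. -/
def IsProperEdgeColoringMG {V : Type} [Fintype V] [DecidableEq V]
    (w : V → V → ℕ) (k : ℕ) (M : Fin k → V → V → Bool) : Prop :=
  (∀ i u v, M i u v = M i v u) ∧
  (∀ i u, (Finset.univ.filter fun v => M i u v = true).card ≤ 1) ∧
  (∀ u v, w u v = (Finset.univ.filter fun i => M i u v = true).card)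

open Finset

namespace SimpleGraph

lemma Connected.card_filter_degree_le_one_le_two {V : Type*} [Fintype V] {G : SimpleGraph V}
    [DecidableRel G.Adj] (hG : G.Connected) (hdeg : ∀ v, G.degree v ≤ 2) :
    #{v | G.degree v ≤ 1} ≤ 2 := by
  have hedges := hG.card_vert_le_card_edgeSet_add_one
  rw [Nat.card_eq_fintype_card, Nat.card_eq_card_toFinset] at hedges
  change Fintype.card V ≤ #G.edgeFinset + 1 at hedges
  have hle : ∀ v, G.degree v + (if G.degree v ≤ 1 then 1 else 0) ≤ 2 := fun v => by
    have := hdeg v; split_ifs <;> omega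
  have := sum_le_sum fun v (_ : v ∈ univ) => hle v
  rw [sum_add_distrib, ← card_filter, G.sum_degrees_eq_twice_card_edges] at this
  simp only [sum_const, card_univ, smul_eq_mul] at this
  omega

lemma Connected.eq_or_eq_or_eq_of_degree_le_one {V : Type*} [Fintype V] {G : SimpleGraph V}
    [DecidableRel G.Adj] (hG : G.Connected) (hdeg : ∀ v, G.degree v ≤ 2) {a b c : V}
    (ha : G.degree a ≤ 1) (hb : G.degree b ≤ 1) (hc : G.degree c ≤ 1) :
    a = b ∨ a = c ∨ b = c := by
  classical
  by_contra! hne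
  have hsub : ({a, b, c} : Finset V) ⊆ univ.filter fun v => G.degree v ≤ 1 := by
    simp [insert_subset_iff, ha, hb, hc]
  have := (card_le_card hsub).trans (hG.card_filter_degree_le_one_le_two hdeg)
  rw [card_insert_of_notMem (by simp [hne.1, hne.2.1]), card_pair hne.2.2] at this
  omega

lemma Reachable.eq_or_eq_or_eq_of_degree_le_one {V : Type*} [Fintype V] {G : SimpleGraph V}
    [DecidableRel G.Adj] (hdeg : ∀ v, G.degree v ≤ 2) {a b c : V}
    (hab : G.Reachable a b) (hac : G.Reachable a c) (ha : G.degree a ≤ 1) (hb : G.degree b ≤ 1)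
    (hc : G.degree c ≤ 1) : a = b ∨ a = c ∨ b = c := by
  classical
  let C := G.connectedComponentMk a
  have hsub : ∀ x : C.supp, G.neighborSet x ⊆ C.supp := fun x y hy => by
    have hx : G.connectedComponentMk x = C := x.2
    rw [← hx]
    exact (ConnectedComponent.connectedComponentMk_eq_of_adj hy).symm
  have hdegC : ∀ x : C.supp, C.toSimpleGraph.degree x = G.degree x := fun x => by
    convert degree_induce_of_neighborSet_subset (hsub x) <;> rfl
  have := C.connected_toSimpleGraph.eq_or_eq_or_eq_of_degree_le_one
    (fun x => (hdegC x).trans_le (hdeg x)) (a := ⟨a, rfl⟩)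
    (b := ⟨b, (ConnectedComponent.sound hab).symm⟩) (c := ⟨c, (ConnectedComponent.sound hac).symm⟩)
    ((hdegC _).trans_le ha) ((hdegC _).trans_le hb) ((hdegC _).trans_le hc)
  simpa [Subtype.ext_iff] using this

end SimpleGraph

namespace MultigraphEdgeColoring

/- A partial `k`-edge-coloring is a map `f : Fin k → V → Option V`, where `f i x = some y`
says that `x` and `y` are joined by an edge of color `i`. -/

variable {V : Type*} {k : ℕ} {f : Fin k → V → Option V} {α β : Fin k}

def kempeSwap (f : Fin k → V → Option V) (α β : Fin k) (C : V → Prop) [DecidablePred C] :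
    Fin k → V → Option V :=
  fun i x => if C x then f (Equiv.swap α β i) x else f i x

lemma kempeSwap_apply_eq {C : V → Prop} [DecidablePred C] {i : Fin k} {x : V}
    (h : C x → i ≠ α ∧ i ≠ β) : kempeSwap f α β C i x = f i x := by
  unfold kempeSwap
  split_ifs with hx
  · rw [Equiv.swap_apply_of_ne_of_ne (h hx).1 (h hx).2]
  · rfl

def kempeGraph (f : Fin k → V → Option V) (α β : Fin k) : SimpleGraph V :=
  SimpleGraph.fromRel fun x y => f α x = some y ∨ f β x = some y

lemma kempeGraph_reachable_of_partner {t x y : V} (ht : (kempeGraph f α β).Reachable t x)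
    (hxy : f α x = some y ∨ f β x = some y) : (kempeGraph f α β).Reachable t y := by
  rcases eq_or_ne x y with rfl | hne
  · exact ht
  · exact ht.trans (SimpleGraph.Adj.reachable ((SimpleGraph.fromRel_adj _ _ _).mpr ⟨hne, .inl hxy⟩))

section DecidableEq

variable [DecidableEq V]

def mult (f : Fin k → V → Option V) (x y : V) : ℕ := #{i | f i x = some y}

def missing (f : Fin k → V → Option V) (x : V) : Finset (Fin k) := {i | f i x = none}

structure IsPartialColoring (w : V → V → ℕ) (f : Fin k → V → Option V) : Prop where
  symm : ∀ i x y, f i x = some y → f i y = some x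
  mult_le : ∀ x y, mult f x y ≤ w x y

variable {w : V → V → ℕ} {u v : V}

lemma IsPartialColoring.mult_comm (hf : IsPartialColoring w f) (x y : V) :
    mult f x y = mult f y x := by
  unfold mult
  congr 1
  ext i
  simpa using ⟨hf.symm i x y, hf.symm i y x⟩

section Kempe

variable {C : V → Prop} [DecidablePred C]

lemma mult_kempeSwap (x y : V) : mult (kempeSwap f α β C) x y = mult f x y := by
  unfold mult kempeSwap
  split_ifs
  · exact card_equiv (Equiv.swap α β) (by simp)
  · rfl

lemma IsPartialColoring.kempeSwap (hf : IsPartialColoring w f)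
    (hC : ∀ x y, C x → (f α x = some y ∨ f β x = some y) → C y) :
    IsPartialColoring w (kempeSwap f α β C) := by
  refine ⟨fun i x y hxy => ?_, fun x y => (mult_kempeSwap x y).trans_le (hf.mult_le x y)⟩
  by_cases hi : i = α ∨ i = β
  · have hiff : ∀ j, (j = α ∨ j = β) → f j x = some y → (C x ↔ C y) := by
      rintro j hj hj'
      refine ⟨fun h => hC x y h (by rcases hj with rfl | rfl <;> simp [hj']), fun h => hC y x h ?_⟩
      rcases hj with rfl | rfl <;> simp [hf.symm _ _ _ hj']
    unfold MultigraphEdgeColoring.kempeSwap at hxy ⊢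
    by_cases hx : C x
    · rw [if_pos hx] at hxy
      rw [if_pos ((hiff _ (by rcases hi with rfl | rfl <;> simp) hxy).mp hx)]
      exact hf.symm _ _ _ hxy
    · rw [if_neg hx] at hxy
      rw [if_neg (mt (hiff i hi hxy).mpr hx)]
      exact hf.symm _ _ _ hxy
  · push Not at hi
    rw [kempeSwap_apply_eq fun _ => hi] at hxy ⊢
    exact hf.symm _ _ _ hxy

end Kempe

def addEdge (f : Fin k → V → Option V) (α : Fin k) (u v : V) : Fin k → V → Option V :=
  Function.update f α (Function.update (Function.update (f α) u (some v)) v (some u))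

lemma mult_addEdge (hu : f α u = none) (hv : f α v = none) (huv : u ≠ v) (x y : V) :
    mult (addEdge f α u v) x y =
      mult f x y + if x = u ∧ y = v ∨ x = v ∧ y = u then 1 else 0 := by
  unfold mult
  rw [card_filter, card_filter, ← add_sum_erase _ _ (mem_univ α),
    ← add_sum_erase _ _ (mem_univ α), add_right_comm]
  congr 1
  · by_cases hxv : x = v
    · subst hxv; simp [addEdge, hv, huv.symm, eq_comm]
    · by_cases hxu : x = u
      · subst hxu; simp [addEdge, hu, huv, eq_comm]
      · simp [addEdge, hxu, hxv]
  · exact sum_congr rfl fun i hi => by simp [addEdge, ne_of_mem_erase hi]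

lemma IsPartialColoring.addEdge (hw : ∀ x y, w x y = w y x) (hf : IsPartialColoring w f)
    (hu : f α u = none) (hv : f α v = none) (huv : u ≠ v) (hslot : mult f u v < w u v) :
    IsPartialColoring w (addEdge f α u v) := by
  refine ⟨fun i x y hxy => ?_, fun x y => ?_⟩
  · by_cases hi : i = α
    · subst hi
      have h := hf.symm i x y
      simp only [MultigraphEdgeColoring.addEdge, Function.update_self, Function.update_apply]
        at hxy ⊢
      split_ifs at hxy ⊢ <;> simp_all
    · simpa [MultigraphEdgeColoring.addEdge, hi] using
        hf.symm i x y (by simpa [MultigraphEdgeColoring.addEdge, hi] using hxy)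
  · rw [mult_addEdge hu hv huv]
    have := hf.mult_le x y
    have := hf.mult_comm u v
    split_ifs with h
    · rcases h with ⟨rfl, rfl⟩ | ⟨rfl, rfl⟩ <;> [omega; (rw [hw]; omega)]
    · omega

/- `IsFanChain w f u [(c₁, z₁), …, (cₙ, zₙ)] y` says that the edge `u y` has color `c₁`, which
is missing at `z₁`, the edge `u z₁` has color `c₂`, missing at `z₂`, …, and that some edge
`u zₙ` is still uncolored. Moving each `cⱼ` from `u zⱼ₋₁` to `u zⱼ` (with `z₀ = y`) then frees a
slot at `u y`. -/
def IsFanChain (w : V → V → ℕ) (f : Fin k → V → Option V) (u : V) :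
    List (Fin k × V) → V → Prop
  | [], y => mult f u y < w u y
  | (c, z) :: L, y => f c u = some y ∧ f c z = none ∧ IsFanChain w f u L z

lemma IsFanChain.kempeSwap {C : V → Prop} [DecidablePred C] {L : List (Fin k × V)} {y : V}
    (h : IsFanChain w f u L y) (hL : ∀ p ∈ L, C u ∨ C p.2 → p.1 ≠ α ∧ p.1 ≠ β) :
    IsFanChain w (kempeSwap f α β C) u L y := by
  induction L generalizing y with
  | nil => exact (mult_kempeSwap u y).trans_lt h
  | cons p L ih =>
    obtain ⟨c, z⟩ := p
    obtain ⟨hcu, hcz, h⟩ := h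
    refine ⟨?_, ?_, ih h fun p hp => hL p (List.mem_cons_of_mem _ hp)⟩
    · rwa [kempeSwap_apply_eq fun hu => hL _ List.mem_cons_self (.inl hu)]
    · rwa [kempeSwap_apply_eq fun hz => hL _ List.mem_cons_self (.inr hz)]

lemma IsFanChain.exists_suffix_of_mem {L : List (Fin k × V)} {y : V} (h : IsFanChain w f u L y)
    {c : Fin k} {z : V} (hm : (c, z) ∈ L) :
    ∃ x L', (c, z) :: L' <:+ L ∧ IsFanChain w f u ((c, z) :: L') x := by
  induction L generalizing y with
  | nil => simp at hm
  | cons p L ih =>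
    rcases List.mem_cons.mp hm with rfl | hm
    · exact ⟨y, L, List.suffix_refl _, h⟩
    · obtain ⟨x, L', hs, h'⟩ := ih h.2.2 hm
      exact ⟨x, L', hs.trans (List.suffix_cons _ _), h'⟩

lemma IsFanChain.ne_none_of_mem {L : List (Fin k × V)} {y : V} (h : IsFanChain w f u L y)
    {p : Fin k × V} (hp : p ∈ L) : f p.1 u ≠ none := by
  obtain ⟨x, -, -, hx, -⟩ := h.exists_suffix_of_mem hp
  simp [hx]

def InFan (w : V → V → ℕ) (f : Fin k → V → Option V) (u y : V) : Prop :=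
  ∃ L : List (Fin k × V), IsFanChain w f u L y ∧ (L.map Prod.fst).Nodup

lemma InFan.of_missing {γ : Fin k} {x y : V} (hy : InFan w f u y) (hγy : f γ y = none)
    (hγu : f γ u = some x) : InFan w f u x := by
  obtain ⟨L, hL, hnd⟩ := hy
  by_cases hγ : γ ∈ L.map Prod.fst
  · obtain ⟨⟨γ, z⟩, hm, rfl⟩ := List.mem_map.mp hγ
    obtain ⟨x', L', hs, hL'⟩ := hL.exists_suffix_of_mem hm
    obtain rfl : x = x' := Option.some.inj (hγu.symm.trans hL'.1)
    exact ⟨_, hL', hnd.sublist (hs.sublist.map _)⟩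
  · exact ⟨(γ, y) :: L, ⟨hγu, hγy, hL⟩, List.nodup_cons.mpr ⟨hγ, hnd⟩⟩

end DecidableEq

variable [Fintype V] [DecidableEq V] {w : V → V → ℕ} {u v : V}

def deficit (w : V → V → ℕ) (f : Fin k → V → Option V) : ℕ := ∑ x, ∑ y, (w x y - mult f x y)

lemma card_missing_add_sum_mult (f : Fin k → V → Option V) (x : V) :
    #(missing f x) + ∑ y, mult f x y = k := by
  have := card_eq_sum_card_fiberwise (f := fun i => f i x) (s := univ) (t := univ)
    (fun _ _ => mem_univ _)
  rw [Fintype.sum_option] at this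
  simpa [missing, mult] using this.symm

lemma IsPartialColoring.le_card_missing_add (hf : IsPartialColoring w f) (x : V) :
    k ≤ #(missing f x) + ∑ y, w x y := by
  have := card_missing_add_sum_mult f x
  have := sum_le_sum fun y (_ : y ∈ univ) => hf.mult_le x y
  omega

lemma IsPartialColoring.lt_card_missing_add (hf : IsPartialColoring w f) {x y : V}
    (hxy : mult f x y < w x y) : k < #(missing f x) + ∑ y, w x y := by
  have := card_missing_add_sum_mult f x
  have := sum_lt_sum (fun y (_ : y ∈ univ) => hf.mult_le x y) ⟨y, mem_univ y, hxy⟩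
  omega

lemma deficit_kempeSwap {C : V → Prop} [DecidablePred C] :
    deficit w (kempeSwap f α β C) = deficit w f := by
  simp only [deficit, mult_kempeSwap]

lemma deficit_addEdge_lt (hu : f α u = none) (hv : f α v = none) (huv : u ≠ v)
    (hslot : mult f u v < w u v) : deficit w (addEdge f α u v) < deficit w f := by
  have hle : ∀ x y, w x y - mult (addEdge f α u v) x y ≤ w x y - mult f x y := fun x y => by
    rw [mult_addEdge hu hv huv]; omega
  refine sum_lt_sum (fun x _ => sum_le_sum fun y _ => hle x y) ⟨u, mem_univ u, ?_⟩
  refine sum_lt_sum (fun y _ => hle u y) ⟨v, mem_univ v, ?_⟩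
  rw [mult_addEdge hu hv huv]
  simp only [and_self, true_or, if_true]
  omega

lemma IsFanChain.exists_deficit_lt (hw : ∀ x y, w x y = w y x) (hloop : ∀ x, w x x = 0)
    {L : List (Fin k × V)} (hnd : (L.map Prod.fst).Nodup) {y : V} (hf : IsPartialColoring w f)
    (hu : f α u = none) (hy : f α y = none) (h : IsFanChain w f u L y) :
    ∃ f' : Fin k → V → Option V, IsPartialColoring w f' ∧ deficit w f' < deficit w f := by
  induction L generalizing f α y with
  | nil =>
    have huy : u ≠ y := by rintro rfl; simp [IsFanChain, hloop] at h
    exact ⟨_, hf.addEdge hw hu hy huy h, deficit_addEdge_lt hu hy huy h⟩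
  | cons p L ih =>
    obtain ⟨c, z⟩ := p
    obtain ⟨hcu, hcz, h⟩ := h
    rw [List.map_cons, List.nodup_cons] at hnd
    have hcy : f c y = some u := hf.symm _ _ _ hcu
    have hzu : z ≠ u := by rintro rfl; simp [hcu] at hcz
    have hzy : z ≠ y := by rintro rfl; simp [hcy] at hcz
    -- moving the color `c` of `u y` to the free color `α` is a Kempe swap on `{u, y}`
    let C : V → Prop := fun x => x = u ∨ x = y
    have hC : ∀ x x', C x → (f α x = some x' ∨ f c x = some x') → C x' := by
      rintro x x' (rfl | rfl) hx <;> simp_all [C]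
    have hL : ∀ p ∈ L, C u ∨ C p.2 → p.1 ≠ α ∧ p.1 ≠ c := fun p hp _ =>
      ⟨fun hpα => h.ne_none_of_mem hp (hpα ▸ hu),
        fun hpc => hnd.1 (List.mem_map.mpr ⟨p, hp, hpc⟩)⟩
    obtain ⟨f', hf', hlt⟩ := ih hnd.2 (hf.kempeSwap hC) (α := c) (y := z)
      (by simp [MultigraphEdgeColoring.kempeSwap, C, hu])
      (by simp [MultigraphEdgeColoring.kempeSwap, C, hzu, hzy, hcz]) (h.kempeSwap hL)
    exact ⟨f', hf', hlt.trans_eq deficit_kempeSwap⟩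

lemma IsPartialColoring.exists_common_missing (hw : ∀ x y, w x y = w y x)
    (hf : IsPartialColoring w f) {μ : ℕ} (hmu : ∀ x y, w x y ≤ μ) (hk : ∀ x, ∑ y, w x y + μ ≤ k)
    {F : Finset V} (hv : v ∈ F) (hslot : mult f u v < w u v)
    (hF : ∀ y ∈ F, ∀ γ, f γ y = none → ∃ x ∈ F, f γ u = some x) :
    ∃ p ∈ F, ∃ t ∈ F, p ≠ t ∧ ∃ β, f β p = none ∧ f β t = none := by
  by_contra! hdis
  have hdisj : (F : Set V).PairwiseDisjoint (missing f) := fun p hp t ht hpt =>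
    disjoint_left.mpr fun β hβp hβt =>
      hdis p hp t ht hpt β (by simpa [missing] using hβp) (by simpa [missing] using hβt)
  have hsub : F.biUnion (missing f) ⊆ F.biUnion fun x => {γ | f γ u = some x} := by
    intro γ hγ
    obtain ⟨y, hy, hγy⟩ := mem_biUnion.mp hγ
    obtain ⟨x, hx, hγu⟩ := hF y hy γ (by simpa [missing] using hγy)
    exact mem_biUnion.mpr ⟨x, hx, by simpa using hγu⟩
  have hvu : mult f v u < w v u := by rwa [← hf.mult_comm, ← hw]
  have hmiss : ∑ _y ∈ F, μ < ∑ y ∈ F, #(missing f y) :=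
    sum_lt_sum (fun y _ => by have := hf.le_card_missing_add y; have := hk y; omega)
      ⟨v, hv, by have := hf.lt_card_missing_add hvu; have := hk v; omega⟩
  have := calc ∑ _y ∈ F, μ
    _ < ∑ y ∈ F, #(missing f y) := hmiss
    _ = #(F.biUnion (missing f)) := (card_biUnion hdisj).symm
    _ ≤ ∑ x ∈ F, mult f u x := (card_le_card hsub).trans card_biUnion_le
    _ < ∑ x ∈ F, w u x := sum_lt_sum (fun x _ => hf.mult_le u x) ⟨v, hv, hslot⟩
    _ ≤ ∑ _x ∈ F, μ := sum_le_sum fun x _ => hmu u x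
  exact lt_irrefl _ this

lemma IsPartialColoring.degree_kempeGraph_le (hf : IsPartialColoring w f)
    [DecidableRel (kempeGraph f α β).Adj] (x : V) :
    (kempeGraph f α β).degree x ≤ #(f α x).toFinset + #(f β x).toFinset := by
  rw [← SimpleGraph.card_neighborFinset_eq_degree]
  refine (card_le_card fun y hy => ?_).trans (card_union_le _ _)
  rw [SimpleGraph.mem_neighborFinset, kempeGraph, SimpleGraph.fromRel_adj] at hy
  have : f α x = some y ∨ f β x = some y := by
    rcases hy.2 with h | h | h
    exacts [h, .inl (hf.symm _ _ _ h), .inr (hf.symm _ _ _ h)]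
  simpa using this

lemma IsPartialColoring.not_reachable_or_not_reachable (hf : IsPartialColoring w f) {p t : V}
    (hu : f α u = none) (hp : f β p = none) (ht : f β t = none) (hpt : p ≠ t) (hup : u ≠ p)
    (hut : u ≠ t) :
    ¬ (kempeGraph f α β).Reachable p u ∨ ¬ (kempeGraph f α β).Reachable t u := by
  classical
  by_contra! ⟨hpu, htu⟩
  have hdeg := hf.degree_kempeGraph_le (α := α) (β := β)
  have hle : ∀ o : Option V, #o.toFinset ≤ 1 := fun o => by cases o <;> simp
  have h2 : ∀ x, (kempeGraph f α β).degree x ≤ 2 := fun x =>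
    (hdeg x).trans (add_le_add (hle _) (hle _))
  have h1 : ∀ x, f α x = none ∨ f β x = none → (kempeGraph f α β).degree x ≤ 1 := by
    rintro x (hx | hx)
    · simpa [hx] using (hdeg x).trans (add_le_add_right (hle (f β x)) _)
    · simpa [hx] using (hdeg x).trans (add_le_add_left (hle (f α x)) _)
  rcases hpu.symm.eq_or_eq_or_eq_of_degree_le_one h2 htu.symm (h1 u (.inl hu)) (h1 p (.inr hp))
    (h1 t (.inr ht)) with h | h | h
  exacts [hup h, hut h, hpt h]

lemma IsPartialColoring.exists_deficit_lt_of_not_reachable (hw : ∀ x y, w x y = w y x)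
    (hloop : ∀ x, w x x = 0) (hf : IsPartialColoring w f) (hu : f α u = none)
    {L : List (Fin k × V)} {t : V} (hL : IsFanChain w f u L t) (hnd : (L.map Prod.fst).Nodup)
    (ht : f β t = none) (htu : ¬ (kempeGraph f α β).Reachable t u) :
    ∃ f' : Fin k → V → Option V, IsPartialColoring w f' ∧ deficit w f' < deficit w f := by
  classical
  induction hn : L.length using Nat.strong_induction_on generalizing L t with
  | _ n ih =>
  set C := (kempeGraph f α β).Reachable t
  by_cases hz : ∃ z, (β, z) ∈ L ∧ C z
  · -- the swap would spoil the chain at `z`; but `z` is a fan vertex like `t`, with a shorter chain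
    obtain ⟨z, hm, hCz⟩ := hz
    obtain ⟨x, L', hs, -, hβz, hL'⟩ := hL.exists_suffix_of_mem hm
    have hs' : L' <:+ L := (List.suffix_cons _ _).trans hs
    exact ih L'.length (hn ▸ by simpa using hs.length_le) hL' (hnd.sublist (hs'.sublist.map _))
      hβz (fun h => htu (hCz.trans h)) rfl
  · push Not at hz
    have hC : ∀ x y, C x → (f α x = some y ∨ f β x = some y) → C y := fun _ _ =>
      kempeGraph_reachable_of_partner
    have hL' := hL.kempeSwap (C := C) (α := α) (β := β) fun p hp hCp =>
      ⟨fun h => hL.ne_none_of_mem hp (h ▸ hu),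
        fun h => hz p.2 (h ▸ hp) (hCp.resolve_left htu)⟩
    obtain ⟨f', hf', hlt⟩ := hL'.exists_deficit_lt hw hloop hnd (hf.kempeSwap hC) (α := α)
      (by rwa [kempeSwap_apply_eq fun h => absurd h htu])
      (by simp [MultigraphEdgeColoring.kempeSwap, C, ht])
    exact ⟨f', hf', hlt.trans_eq deficit_kempeSwap⟩

lemma IsPartialColoring.exists_deficit_lt (hw : ∀ x y, w x y = w y x) (hloop : ∀ x, w x x = 0)
    {μ : ℕ} (hmu : ∀ x y, w x y ≤ μ) (hk : ∀ x, ∑ y, w x y + μ ≤ k)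
    (hf : IsPartialColoring w f) (hslot : mult f u v < w u v) :
    ∃ f' : Fin k → V → Option V, IsPartialColoring w f' ∧ deficit w f' < deficit w f := by
  classical
  by_cases hshift : ∃ y γ, InFan w f u y ∧ f γ y = none ∧ f γ u = none
  · obtain ⟨y, γ, ⟨L, hL, hnd⟩, hγy, hγu⟩ := hshift
    exact hL.exists_deficit_lt hw hloop hnd hf hγu hγy
  push Not at hshift
  have hclosed : ∀ y ∈ univ.filter (InFan w f u), ∀ γ, f γ y = none →
      ∃ x ∈ univ.filter (InFan w f u), f γ u = some x := by
    intro y hy γ hγy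
    obtain ⟨x, hx⟩ := Option.ne_none_iff_exists'.mp (hshift y γ (mem_filter.mp hy).2 hγy)
    exact ⟨x, mem_filter.mpr ⟨mem_univ x, (mem_filter.mp hy).2.of_missing hγy hx⟩, hx⟩
  obtain ⟨p, hp, t, ht, hpt, β, hβp, hβt⟩ := hf.exists_common_missing hw hmu hk
    (mem_filter.mpr ⟨mem_univ v, [], hslot, List.nodup_nil⟩) hslot hclosed
  obtain ⟨α, hα⟩ : ∃ α, f α u = none := by
    have := hf.lt_card_missing_add hslot
    have := hk u
    obtain ⟨α, hα⟩ := card_pos.mp (show 0 < #(missing f u) by omega)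
    exact ⟨α, (mem_filter.mp hα).2⟩
  obtain ⟨Lp, hLp, hndp⟩ := (mem_filter.mp hp).2
  obtain ⟨Lt, hLt, hndt⟩ := (mem_filter.mp ht).2
  have hup : u ≠ p := by rintro rfl; exact hshift u β (mem_filter.mp hp).2 hβp hβp
  have hut : u ≠ t := by rintro rfl; exact hshift u β (mem_filter.mp ht).2 hβt hβt
  rcases hf.not_reachable_or_not_reachable hα hβp hβt hpt hup hut with h | h
  · exact hf.exists_deficit_lt_of_not_reachable hw hloop hα hLp hndp hβp h
  · exact hf.exists_deficit_lt_of_not_reachable hw hloop hα hLt hndt hβt h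

lemma exists_isPartialColoring_mult_eq (hw : ∀ x y, w x y = w y x) (hloop : ∀ x, w x x = 0)
    {μ : ℕ} (hmu : ∀ x y, w x y ≤ μ) (hk : ∀ x, ∑ y, w x y + μ ≤ k) :
    ∃ f : Fin k → V → Option V, IsPartialColoring w f ∧ ∀ x y, mult f x y = w x y := by
  suffices h : ∀ n (f : Fin k → V → Option V), IsPartialColoring w f → deficit w f = n →
      ∃ f : Fin k → V → Option V, IsPartialColoring w f ∧ ∀ x y, mult f x y = w x y from
    h _ (fun _ _ => none) ⟨by simp, by simp [mult]⟩ rfl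
  intro n
  induction n using Nat.strong_induction_on with
  | _ n ih =>
  intro f hf hn
  by_cases hfull : ∀ x y, mult f x y = w x y
  · exact ⟨f, hf, hfull⟩
  push Not at hfull
  obtain ⟨u, v, huv⟩ := hfull
  obtain ⟨f', hf', hlt⟩ :=
    hf.exists_deficit_lt hw hloop hmu hk (lt_of_le_of_ne (hf.mult_le u v) huv)
  exact ih _ (hn ▸ hlt) f' hf' rfl

end MultigraphEdgeColoring

/-- Gupta, Vizing: every loopless multigraph admits a proper edge-coloring
with `Δ + μ` colors, where `Δ` is the maximum degree and `μ` the maximum multiplicity. -/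
theorem multigraph_edge_coloring_maxDegree_add_multiplicity
    {V : Type} [Fintype V] [DecidableEq V]
    (w : V → V → ℕ) (hsymm : ∀ u v, w u v = w v u) (hloop : ∀ v, w v v = 0) :
    ∃ M : Fin ((Finset.univ.sup fun v => ∑ u, w v u) +
        Finset.univ.sup fun p : V × V => w p.1 p.2) → V → V → Bool,
      IsProperEdgeColoringMG w _ M := by
  obtain ⟨f, hf, hmult⟩ := MultigraphEdgeColoring.exists_isPartialColoring_mult_eq hsymm hloop
    (fun x y => le_sup (f := fun p : V × V => w p.1 p.2) (mem_univ (x, y)))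
    (fun x => Nat.add_le_add_right (le_sup (f := fun v => ∑ u, w v u) (mem_univ x)) _)
  refine ⟨fun i x y => f i x = some y, fun i x y => ?_, fun i x => ?_, fun x y => ?_⟩
  · exact decide_eq_decide.mpr ⟨hf.symm i x y, hf.symm i y x⟩
  · refine (card_le_card (t := (f i x).toFinset) fun y hy => by simpa using hy).trans ?_
    cases f i x <;> simp
  · simp [← hmult, MultigraphEdgeColoring.mult]
end

section
/- (Equalized edge-coloring) If a multigraph G has a proper edge-coloring with χ'(G) colors, then for every k ≥ χ'(G), G has a proper k-edge-coloring in which every color class has size ⌊|E(G)|/k⌋ or ⌈|E(G)|/k⌉. -/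
/-- The number of edges of color `i` (each unordered pair is counted twice as ordered
pairs, whence the division by 2). -/
def colorClassCard {V : Type} [Fintype V] [DecidableEq V] {k : ℕ}
    (M : Fin k → V → V → Bool) (i : Fin k) : ℕ :=
  (Finset.univ.filter fun p : V × V => M i p.1 p.2 = true).card / 2

set_option linter.unusedSectionVars false
set_option linter.unusedVariables false
set_option maxHeartbeats 1000000

open Finset

section Aux

variable {V : Type} [Fintype V] [DecidableEq V]

def Ncnt {k : ℕ} (M : Fin k → V → V → Bool) (i : Fin k) : ℕ :=
  (Finset.univ.filter fun p : V × V => M i p.1 p.2 = true).card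

def Phi {k : ℕ} (M : Fin k → V → V → Bool) : ℕ := ∑ c, (Ncnt M c) ^ 2

lemma even_sym_pairs (A : V → V → Bool) (hs : ∀ u v, A u v = A v u)
    (hd : ∀ u, A u u = false) :
    Even (Finset.univ.filter fun p : V × V => A p.1 p.2 = true).card := by
  classical
  set e := Fintype.equivFin V with he
  set S := Finset.univ.filter fun p : V × V => A p.1 p.2 = true with hS
  have hsplit : S.card = (S.filter fun p => e p.1 < e p.2).card
      + (S.filter fun p => ¬ e p.1 < e p.2).card :=
    (Finset.card_filter_add_card_filter_not _).symm
  have hmem : ∀ p : V × V, p ∈ S → A p.2 p.1 = true ∧ e p.1 ≠ e p.2 := by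
    intro p hp
    simp only [hS, Finset.mem_filter] at hp
    refine ⟨(hs p.2 p.1).trans hp.2, fun h => ?_⟩
    have h1 : p.1 = p.2 := e.injective h
    rw [h1, hd] at hp
    exact Bool.false_ne_true hp.2
  have hbij : (S.filter fun p => e p.1 < e p.2).card
      = (S.filter fun p => ¬ e p.1 < e p.2).card := by
    apply Finset.card_bij (fun (p : V × V) _ => Prod.swap p)
    · intro p hp
      simp only [Finset.mem_filter] at hp ⊢
      obtain ⟨h1, h2⟩ := hp
      obtain ⟨h3, h4⟩ := hmem p h1
      exact ⟨by simp [hS, h3], not_lt.mpr (le_of_lt h2)⟩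
    · intro p _ q _ h
      exact Prod.swap_injective h
    · intro p hp
      simp only [Finset.mem_filter] at hp
      obtain ⟨h1, h2⟩ := hp
      obtain ⟨h3, h4⟩ := hmem p h1
      refine ⟨Prod.swap p, ?_, rfl⟩
      simp only [Finset.mem_filter]
      exact ⟨by simp [hS, h3], lt_of_le_of_ne (not_lt.mp h2) (Ne.symm h4)⟩
  exact ⟨(S.filter fun p => e p.1 < e p.2).card, by omega⟩

lemma conn_bound (G : SimpleGraph V) [DecidableRel G.Adj] (r : V) :
    2 * ((Finset.univ.filter fun v => G.Reachable r v).card - 1)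
      ≤ (Finset.univ.filter fun p : V × V =>
          G.Adj p.1 p.2 ∧ G.Reachable r p.1 ∧ G.Reachable r p.2).card := by
  classical
  set U := Finset.univ.filter fun v => G.Reachable r v with hU
  have hrU : r ∈ U := by simp [hU]
  have key : ∀ v : V, ∃ w : V, (G.Reachable r v ∧ v ≠ r) →
      (G.Adj v w ∧ G.dist w r < G.dist v r) := by
    intro v
    by_cases h : G.Reachable r v ∧ v ≠ r
    · have hvr : G.Reachable v r := h.1.symm
      have hpos : 0 < G.dist v r := hvr.pos_dist_of_ne h.2
      obtain ⟨p, hp⟩ := hvr.exists_walk_length_eq_dist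
      cases p with
      | nil => simp at hp; exact absurd hpos (by simp)
      | @cons _ b _ hadj q =>
          refine ⟨b, fun _ => ⟨hadj, ?_⟩⟩
          have h1 : G.dist b r ≤ q.length := G.dist_le q
          simp [SimpleGraph.Walk.length_cons] at hp
          omega
    · exact ⟨r, fun hc => absurd hc h⟩
  choose f hf using key
  set T := U.erase r with hT
  have hTspec : ∀ v ∈ T, G.Adj v (f v) ∧ G.dist (f v) r < G.dist v r := by
    intro v hv
    rw [hT, Finset.mem_erase, hU, Finset.mem_filter] at hv
    exact hf v ⟨hv.2.2, hv.1⟩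
  set S1 := T.image fun v => (v, f v) with hS1
  set S2 := T.image fun v => (f v, v) with hS2
  have hcard1 : S1.card = T.card :=
    Finset.card_image_of_injOn fun a _ b _ h => congrArg Prod.fst h
  have hcard2 : S2.card = T.card :=
    Finset.card_image_of_injOn fun a _ b _ h => congrArg Prod.snd h
  have hdisj : Disjoint S1 S2 := by
    rw [Finset.disjoint_left]
    rintro p hp1 hp2
    rw [hS1, Finset.mem_image] at hp1
    rw [hS2, Finset.mem_image] at hp2
    obtain ⟨a, ha, rfl⟩ := hp1
    obtain ⟨b, hb, hab⟩ := hp2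
    have h1 := (hTspec a ha).2
    have h2 := (hTspec b hb).2
    have e1 : f b = a := congrArg Prod.fst hab
    have e2 : b = f a := congrArg Prod.snd hab
    rw [e1] at h2
    rw [← e2] at h1
    omega
  have hsub : S1 ∪ S2 ⊆ Finset.univ.filter fun p : V × V =>
      G.Adj p.1 p.2 ∧ G.Reachable r p.1 ∧ G.Reachable r p.2 := by
    intro p hp
    rw [Finset.mem_union] at hp
    simp only [Finset.mem_filter, Finset.mem_univ, true_and]
    rcases hp with hp | hp
    · rw [hS1, Finset.mem_image] at hp
      obtain ⟨a, ha, rfl⟩ := hp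
      have hadj := (hTspec a ha).1
      have hra : G.Reachable r a := by
        have := Finset.mem_of_mem_erase ha
        rw [hU, Finset.mem_filter] at this; exact this.2
      exact ⟨hadj, hra, hra.trans hadj.reachable⟩
    · rw [hS2, Finset.mem_image] at hp
      obtain ⟨a, ha, rfl⟩ := hp
      have hadj := (hTspec a ha).1
      have hra : G.Reachable r a := by
        have := Finset.mem_of_mem_erase ha
        rw [hU, Finset.mem_filter] at this; exact this.2
      exact ⟨hadj.symm, hra.trans hadj.reachable, hra⟩
  have hcardT : T.card = U.card - 1 := Finset.card_erase_of_mem hrU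
  have := Finset.card_le_card hsub
  rw [Finset.card_union_of_disjoint hdisj, hcard1, hcard2, hcardT] at this
  omega

lemma diag_false {k : ℕ} {w : V → V → ℕ} (hloop : ∀ v, w v v = 0)
    {M : Fin k → V → V → Bool} (hM : IsProperEdgeColoringMG w k M) :
    ∀ c u, M c u u = false := by
  intro c u
  by_contra h
  rw [Bool.not_eq_false] at h
  have h0 : (Finset.univ.filter fun i => M i u u = true).card = 0 := by
    rw [← hM.2.2 u u, hloop u]
  have : c ∈ Finset.univ.filter fun i => M i u u = true := by
    simp [h]
  rw [Finset.card_eq_zero] at h0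
  simp [h0] at this

lemma step_lemma {k : ℕ} (w : V → V → ℕ) (hloop : ∀ v, w v v = 0)
    (M : Fin k → V → V → Bool) (hM : IsProperEdgeColoringMG w k M)
    {i j : Fin k} (hij : Ncnt M j + 4 ≤ Ncnt M i) :
    ∃ M', IsProperEdgeColoringMG w k M' ∧ Phi M' < Phi M := by
  classical
  obtain ⟨hsym, hdeg, hw⟩ := hM
  have hdiag : ∀ c u, M c u u = false := diag_false hloop ⟨hsym, hdeg, hw⟩
  have hne : j ≠ i := by rintro rfl; omega
  -- the union graph of colors i and j
  set G : SimpleGraph V :=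
    { Adj := fun u v => u ≠ v ∧ (M i u v = true ∨ M j u v = true)
      symm := ⟨by
        rintro u v ⟨h1, h2⟩
        exact ⟨h1.symm, by rw [hsym i v u, hsym j v u]; exact h2⟩⟩
      loopless := ⟨fun v h => h.1 rfl⟩ } with hG
  haveI : DecidableRel G.Adj := fun u v =>
    inferInstanceAs (Decidable (u ≠ v ∧ (M i u v = true ∨ M j u v = true)))
  set SA := Finset.univ.filter (fun p : V × V => M i p.1 p.2 = true) with hSA
  set SB := Finset.univ.filter (fun p : V × V => M j p.1 p.2 = true) with hSB
  -- find a component where color i beats color j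
  have hfibA : SA.card = ∑ κ : G.ConnectedComponent,
      (SA.filter fun p => G.connectedComponentMk p.1 = κ).card :=
    Finset.card_eq_sum_card_fiberwise (fun p _ => Finset.mem_univ _)
  have hfibB : SB.card = ∑ κ : G.ConnectedComponent,
      (SB.filter fun p => G.connectedComponentMk p.1 = κ).card :=
    Finset.card_eq_sum_card_fiberwise (fun p _ => Finset.mem_univ _)
  have hex : ∃ κ : G.ConnectedComponent,
      (SB.filter fun p => G.connectedComponentMk p.1 = κ).card
        < (SA.filter fun p => G.connectedComponentMk p.1 = κ).card := by
    by_contra hcon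
    push_neg at hcon
    have hle : SA.card ≤ SB.card := by
      rw [hfibA, hfibB]
      exact Finset.sum_le_sum fun κ _ => hcon κ
    have hA : Ncnt M i = SA.card := rfl
    have hB : Ncnt M j = SB.card := rfl
    omega
  obtain ⟨κ, hκ⟩ := hex
  obtain ⟨r, hr⟩ := κ.exists_rep
  set U := Finset.univ.filter (fun v => G.connectedComponentMk v = κ) with hU
  have hr' : G.connectedComponentMk r = κ := hr
  have hUmem : ∀ v, v ∈ U ↔ G.Reachable r v := by
    intro v
    simp only [hU, Finset.mem_filter, Finset.mem_univ, true_and, ← hr',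
      SimpleGraph.ConnectedComponent.eq]
    exact ⟨fun h => h.symm, fun h => h.symm⟩
  have hrU : r ∈ U := (hUmem r).mpr (SimpleGraph.Reachable.refl r)
  have hUadj : ∀ u v, u ∈ U → G.Adj u v → v ∈ U := by
    intro u v hu hadj
    rw [hUmem] at hu ⊢
    exact hu.trans hadj.reachable
  have hedgeU : ∀ u v, (M i u v = true ∨ M j u v = true) → (u ∈ U → v ∈ U) := by
    intro u v hor hu
    have huv : u ≠ v := by
      rintro rfl
      rcases hor with h | h <;> simp [hdiag] at h
    exact hUadj u v hu ⟨huv, hor⟩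
  -- counts inside the component
  set aord := (SA.filter fun p => p.1 ∈ U ∧ p.2 ∈ U).card with haord
  set bord := (SB.filter fun p => p.1 ∈ U ∧ p.2 ∈ U).card with hbord
  have hfa : (SA.filter fun p => G.connectedComponentMk p.1 = κ)
      = SA.filter fun p => p.1 ∈ U ∧ p.2 ∈ U := by
    apply Finset.filter_congr
    intro p hp
    rw [hSA, Finset.mem_filter] at hp
    have h1 : (G.connectedComponentMk p.1 = κ) ↔ p.1 ∈ U := by
      simp [hU]
    constructor
    · intro h
      have hp1 : p.1 ∈ U := h1.mp h
      exact ⟨hp1, hedgeU p.1 p.2 (Or.inl hp.2) hp1⟩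
    · intro h
      exact h1.mpr h.1
  have hfb : (SB.filter fun p => G.connectedComponentMk p.1 = κ)
      = SB.filter fun p => p.1 ∈ U ∧ p.2 ∈ U := by
    apply Finset.filter_congr
    intro p hp
    rw [hSB, Finset.mem_filter] at hp
    have h1 : (G.connectedComponentMk p.1 = κ) ↔ p.1 ∈ U := by
      simp [hU]
    constructor
    · intro h
      have hp1 : p.1 ∈ U := h1.mp h
      exact ⟨hp1, hedgeU p.1 p.2 (Or.inr hp.2) hp1⟩
    · intro h
      exact h1.mpr h.1
  have hab : bord + 1 ≤ aord := by
    rw [haord, hbord, ← hfa, ← hfb]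
    omega
  -- aord ≤ |U|
  have haU : aord ≤ U.card := by
    rw [haord]
    apply Finset.card_le_card_of_injOn (fun p => p.1)
    · intro p hp
      simp only [Finset.mem_coe, Finset.mem_filter] at hp
      exact hp.2.1
    · intro p hp q hq hpq
      simp only [Finset.mem_coe, Finset.mem_filter, hSA, Finset.mem_univ,
        true_and] at hp hq
      have hpq' : p.1 = q.1 := hpq
      have h1 : p.2 ∈ Finset.univ.filter fun v => M i p.1 v = true := by
        simp [hp.1]
      have h2 : q.2 ∈ Finset.univ.filter fun v => M i p.1 v = true := by
        rw [hpq']; simp [hq.1]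
      have := Finset.card_le_one.mp (hdeg i p.1) _ h1 _ h2
      exact Prod.ext hpq' this
  -- connectivity lower bound
  have hUeq : U = Finset.univ.filter fun v => G.Reachable r v := by
    ext v; simp [hUmem v, Finset.mem_filter]
  have hconn : 2 * (U.card - 1) ≤ (Finset.univ.filter fun p : V × V =>
      G.Adj p.1 p.2 ∧ p.1 ∈ U ∧ p.2 ∈ U).card := by
    have := conn_bound G r
    rw [← hUeq] at this
    convert this using 3
    rename_i p
    simp [hUmem]
  have hadjle : (Finset.univ.filter fun p : V × V =>
      G.Adj p.1 p.2 ∧ p.1 ∈ U ∧ p.2 ∈ U).card ≤ aord + bord := by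
    rw [haord, hbord]
    refine le_trans (Finset.card_le_card ?_) (Finset.card_union_le _ _)
    intro p hp
    simp only [Finset.mem_filter, Finset.mem_univ, true_and, Finset.mem_union,
      hSA, hSB] at hp ⊢
    rcases hp.1.2 with h | h
    · exact Or.inl ⟨h, hp.2⟩
    · exact Or.inr ⟨h, hp.2⟩
  have hUpos : 1 ≤ U.card := Finset.card_pos.mpr ⟨r, hrU⟩
  have habu : aord ≤ bord + 2 := by omega
  -- the swapped coloring
  set M' : Fin k → V → V → Bool := fun c u v =>
    if u ∈ U ∧ v ∈ U then
      (if c = i then M j u v else if c = j then M i u v else M c u v)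
    else M c u v with hM'
  have hM'diag : ∀ c u v, ¬ (u ∈ U ∧ v ∈ U) → M' c u v = M c u v := by
    intro c u v h; simp [hM', h]
  have hM'in : ∀ c u v, u ∈ U → v ∈ U →
      M' c u v = (if c = i then M j u v else if c = j then M i u v else M c u v) := by
    intro c u v h1 h2; simp [hM', h1, h2]
  have hM'symm : ∀ c u v, M' c u v = M' c v u := by
    intro c u v
    by_cases h : u ∈ U ∧ v ∈ U
    · rw [hM'in c u v h.1 h.2, hM'in c v u h.2 h.1]
      split_ifs <;> apply hsym
    · have h2 : ¬ (v ∈ U ∧ u ∈ U) := fun hc => h ⟨hc.2, hc.1⟩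
      rw [hM'diag c u v h, hM'diag c v u h2]
      apply hsym
  have hM'deg : ∀ c u, (Finset.univ.filter fun v => M' c u v = true).card ≤ 1 := by
    intro c u
    by_cases hu : u ∈ U
    · by_cases hci : c = i
      · subst hci
        refine le_trans (Finset.card_le_card ?_) (hdeg j u)
        intro v hv
        simp only [Finset.mem_filter, Finset.mem_univ, true_and] at hv ⊢
        by_cases hvU : v ∈ U
        · rw [hM'in c u v hu hvU, if_pos rfl] at hv
          exact hv
        · rw [hM'diag c u v (fun hc => hvU hc.2)] at hv
          exact absurd (hedgeU u v (Or.inl hv) hu) hvU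
      · by_cases hcj : c = j
        · subst hcj
          refine le_trans (Finset.card_le_card ?_) (hdeg i u)
          intro v hv
          simp only [Finset.mem_filter, Finset.mem_univ, true_and] at hv ⊢
          by_cases hvU : v ∈ U
          · rw [hM'in c u v hu hvU, if_neg hne, if_pos rfl] at hv
            exact hv
          · rw [hM'diag c u v (fun hc => hvU hc.2)] at hv
            exact absurd (hedgeU u v (Or.inr hv) hu) hvU
        · have heq : ∀ v, M' c u v = M c u v := by
            intro v
            by_cases hvU : v ∈ U
            · rw [hM'in c u v hu hvU, if_neg hci, if_neg hcj]
            · exact hM'diag c u v (fun hc => hvU hc.2)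
          simp only [heq]
          exact hdeg c u
    · have heq : ∀ v, M' c u v = M c u v := by
        intro v
        exact hM'diag c u v (fun hc => hu hc.1)
      simp only [heq]
      exact hdeg c u
  have hM'w : ∀ u v, w u v = (Finset.univ.filter fun c => M' c u v = true).card := by
    intro u v
    by_cases h : u ∈ U ∧ v ∈ U
    · rw [hw u v]
      have hswap : ∀ c : Fin k, M' c u v = M (Equiv.swap i j c) u v := by
        intro c
        rw [hM'in c u v h.1 h.2]
        by_cases hci : c = i
        · subst hci; rw [if_pos rfl, Equiv.swap_apply_left]
        · by_cases hcj : c = j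
          · subst hcj; rw [if_neg hci, if_pos rfl, Equiv.swap_apply_right]
          · rw [if_neg hci, if_neg hcj, Equiv.swap_apply_of_ne_of_ne hci hcj]
      symm
      apply Finset.card_bij (fun c _ => Equiv.swap i j c)
      · intro c hc
        simp only [Finset.mem_filter, Finset.mem_univ, true_and] at hc ⊢
        rw [← hswap c]; exact hc
      · intro c _ d _ hcd
        exact (Equiv.swap i j).injective hcd
      · intro c hc
        simp only [Finset.mem_filter, Finset.mem_univ, true_and] at hc
        refine ⟨Equiv.swap i j c, ?_, by rw [Equiv.swap_apply_self]⟩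
        simp only [Finset.mem_filter, Finset.mem_univ, true_and]
        rw [hswap (Equiv.swap i j c), Equiv.swap_apply_self]
        exact hc
    · rw [hw u v]
      congr 1
      apply Finset.filter_congr
      intro c _
      rw [hM'diag c u v h]
  -- count bookkeeping
  have hNsplit : ∀ (N : Fin k → V → V → Bool) (c : Fin k),
      Ncnt N c = ((Finset.univ.filter fun p : V × V => N c p.1 p.2 = true).filter
          (fun p => p.1 ∈ U ∧ p.2 ∈ U)).card
        + ((Finset.univ.filter fun p : V × V => N c p.1 p.2 = true).filter
          (fun p => ¬ (p.1 ∈ U ∧ p.2 ∈ U))).card := by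
    intro N c
    exact (Finset.card_filter_add_card_filter_not _).symm
  have hNi : Ncnt M' i + aord = Ncnt M i + bord := by
    have e1 : (Finset.univ.filter fun p : V × V => M' i p.1 p.2 = true).filter
        (fun p => p.1 ∈ U ∧ p.2 ∈ U)
        = SB.filter (fun p => p.1 ∈ U ∧ p.2 ∈ U) := by
      ext p
      simp only [Finset.mem_filter, Finset.mem_univ, true_and, hSB]
      constructor
      · rintro ⟨h1, h2⟩
        rw [hM'in i p.1 p.2 h2.1 h2.2, if_pos rfl] at h1
        exact ⟨h1, h2⟩
      · rintro ⟨h1, h2⟩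
        rw [hM'in i p.1 p.2 h2.1 h2.2, if_pos rfl]
        exact ⟨h1, h2⟩
    have e2 : (Finset.univ.filter fun p : V × V => M' i p.1 p.2 = true).filter
        (fun p => ¬ (p.1 ∈ U ∧ p.2 ∈ U))
        = SA.filter (fun p => ¬ (p.1 ∈ U ∧ p.2 ∈ U)) := by
      ext p
      simp only [Finset.mem_filter, Finset.mem_univ, true_and, hSA]
      constructor
      · rintro ⟨h1, h2⟩
        rw [hM'diag i p.1 p.2 h2] at h1
        exact ⟨h1, h2⟩
      · rintro ⟨h1, h2⟩
        rw [hM'diag i p.1 p.2 h2]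
        exact ⟨h1, h2⟩
    have g1 := hNsplit M' i
    have g2 := hNsplit M i
    rw [e1, e2] at g1
    rw [haord, hbord]
    have : (Finset.univ.filter fun p : V × V => M i p.1 p.2 = true) = SA := rfl
    rw [this] at g2
    omega
  have hNj : Ncnt M' j + bord = Ncnt M j + aord := by
    have e1 : (Finset.univ.filter fun p : V × V => M' j p.1 p.2 = true).filter
        (fun p => p.1 ∈ U ∧ p.2 ∈ U)
        = SA.filter (fun p => p.1 ∈ U ∧ p.2 ∈ U) := by
      ext p
      simp only [Finset.mem_filter, Finset.mem_univ, true_and, hSA]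
      constructor
      · rintro ⟨h1, h2⟩
        rw [hM'in j p.1 p.2 h2.1 h2.2, if_neg hne, if_pos rfl] at h1
        exact ⟨h1, h2⟩
      · rintro ⟨h1, h2⟩
        rw [hM'in j p.1 p.2 h2.1 h2.2, if_neg hne, if_pos rfl]
        exact ⟨h1, h2⟩
    have e2 : (Finset.univ.filter fun p : V × V => M' j p.1 p.2 = true).filter
        (fun p => ¬ (p.1 ∈ U ∧ p.2 ∈ U))
        = SB.filter (fun p => ¬ (p.1 ∈ U ∧ p.2 ∈ U)) := by
      ext p
      simp only [Finset.mem_filter, Finset.mem_univ, true_and, hSB]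
      constructor
      · rintro ⟨h1, h2⟩
        rw [hM'diag j p.1 p.2 h2] at h1
        exact ⟨h1, h2⟩
      · rintro ⟨h1, h2⟩
        rw [hM'diag j p.1 p.2 h2]
        exact ⟨h1, h2⟩
    have g1 := hNsplit M' j
    have g2 := hNsplit M j
    rw [e1, e2] at g1
    rw [haord, hbord]
    have : (Finset.univ.filter fun p : V × V => M j p.1 p.2 = true) = SB := rfl
    rw [this] at g2
    omega
  have hNo : ∀ c, c ≠ i → c ≠ j → Ncnt M' c = Ncnt M c := by
    intro c hci hcj
    unfold Ncnt
    congr 1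
    apply Finset.filter_congr
    intro p _
    by_cases h : p.1 ∈ U ∧ p.2 ∈ U
    · rw [hM'in c p.1 p.2 h.1 h.2, if_neg hci, if_neg hcj]
    · rw [hM'diag c p.1 p.2 h]
  -- Phi decreases
  refine ⟨M', ⟨hM'symm, hM'deg, hM'w⟩, ?_⟩
  have hsum : ∀ (N : Fin k → V → V → Bool),
      Phi N = (Ncnt N i) ^ 2 + ((Ncnt N j) ^ 2
        + ∑ c ∈ (Finset.univ.erase i).erase j, (Ncnt N c) ^ 2) := by
    intro N
    unfold Phi
    rw [← Finset.add_sum_erase _ _ (Finset.mem_univ i),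
      ← Finset.add_sum_erase _ _ (Finset.mem_erase.mpr ⟨hne, Finset.mem_univ j⟩)]
  rw [hsum M', hsum M]
  have hrest : ∑ c ∈ (Finset.univ.erase i).erase j, (Ncnt M' c) ^ 2
      = ∑ c ∈ (Finset.univ.erase i).erase j, (Ncnt M c) ^ 2 := by
    apply Finset.sum_congr rfl
    intro c hc
    rw [Finset.mem_erase, Finset.mem_erase] at hc
    rw [hNo c hc.2.1 hc.1]
  rw [hrest]
  have hkey : (Ncnt M' i) ^ 2 + (Ncnt M' j) ^ 2 < (Ncnt M i) ^ 2 + (Ncnt M j) ^ 2 := by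
    set x := Ncnt M' i
    set y := Ncnt M j
    set d := aord - bord with hd
    have hd1 : 1 ≤ d := by omega
    have hd2 : d ≤ 2 := by omega
    have e1 : x + d = Ncnt M i := by omega
    have e2 : Ncnt M' j = y + d := by omega
    have hyx : y + 1 ≤ x := by omega
    rw [e2, ← e1]
    have hr1 : x ^ 2 + (y + d) ^ 2 = (x ^ 2 + y ^ 2 + d ^ 2) + 2 * y * d := by ring
    have hr2 : (x + d) ^ 2 + y ^ 2 = (x ^ 2 + y ^ 2 + d ^ 2) + 2 * x * d := by ring
    have hlt : 2 * y * d < 2 * x * d :=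
      Nat.mul_lt_mul_of_lt_of_le (by omega) (le_refl d) (by omega)
    omega
  omega

lemma equalize {k : ℕ} (w : V → V → ℕ) (hloop : ∀ v, w v v = 0) :
    ∀ (n : ℕ) (M : Fin k → V → V → Bool), IsProperEdgeColoringMG w k M →
      Phi M ≤ n → ∃ M', IsProperEdgeColoringMG w k M' ∧
        ∀ i j, Ncnt M' i ≤ Ncnt M' j + 3 := by
  intro n
  induction n with
  | zero =>
      intro M hM h0
      by_cases hex : ∃ i j : Fin k, Ncnt M j + 4 ≤ Ncnt M i
      · obtain ⟨i, j, hij⟩ := hex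
        obtain ⟨M', _, hlt⟩ := step_lemma w hloop M hM hij
        omega
      · push_neg at hex
        exact ⟨M, hM, fun i j => by have := hex i j; omega⟩
  | succ n ih =>
      intro M hM h0
      by_cases hex : ∃ i j : Fin k, Ncnt M j + 4 ≤ Ncnt M i
      · obtain ⟨i, j, hij⟩ := hex
        obtain ⟨M', hM', hlt⟩ := step_lemma w hloop M hM hij
        exact ih M' hM' (by omega)
      · push_neg at hex
        exact ⟨M, hM, fun i j => by have := hex i j; omega⟩

lemma sum_Ncnt {k : ℕ} (w : V → V → ℕ) (M : Fin k → V → V → Bool)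
    (hM : IsProperEdgeColoringMG w k M) :
    ∑ c, Ncnt M c = ∑ u, ∑ v, w u v := by
  calc ∑ c, Ncnt M c
      = ∑ c, ∑ p : V × V, (if M c p.1 p.2 = true then 1 else 0) := by
        apply Finset.sum_congr rfl
        intro c _
        rw [Ncnt, Finset.card_filter]
    _ = ∑ p : V × V, ∑ c, (if M c p.1 p.2 = true then 1 else 0) := Finset.sum_comm
    _ = ∑ p : V × V, w p.1 p.2 := by
        apply Finset.sum_congr rfl
        intro p _
        rw [← Finset.card_filter, ← hM.2.2 p.1 p.2]
    _ = ∑ u, ∑ v, w u v := Fintype.sum_prod_type fun p => w p.1 p.2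

lemma final_arith {k : ℕ} (n : Fin k → ℕ) (m : ℕ) (hsum : ∑ c, n c = m)
    (hpair : ∀ a b : Fin k, n a ≤ n b + 1) (i : Fin k) :
    n i = m / k ∨ n i = (m + k - 1) / k := by
  have hk : 0 < k := i.pos
  have h0 : n i + ∑ c ∈ Finset.univ.erase i, n c = m :=
    (Finset.add_sum_erase _ n (Finset.mem_univ i)).trans hsum
  have hcard : (Finset.univ.erase i).card = k - 1 := by
    rw [Finset.card_erase_of_mem (Finset.mem_univ i), Finset.card_univ,
      Fintype.card_fin]
  have keq : k * n i = (k - 1) * n i + n i := by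
    cases k with
    | zero => omega
    | succ k' => simp [Nat.succ_mul]
  have hB1a : (Finset.univ.erase i).card • n i
      ≤ ∑ c ∈ Finset.univ.erase i, (n c + 1) :=
    Finset.card_nsmul_le_sum _ _ _ (fun c _ => by have := hpair i c; omega)
  rw [Finset.sum_add_distrib, Finset.sum_const, smul_eq_mul, smul_eq_mul,
    mul_one, hcard] at hB1a
  have hB1 : k * n i ≤ m + (k - 1) := by linarith
  have hB2a : ∑ c ∈ Finset.univ.erase i, n c
      ≤ (Finset.univ.erase i).card • (n i + 1) :=
    Finset.sum_le_card_nsmul _ _ _ (fun c _ => by have := hpair c i; omega)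
  rw [smul_eq_mul, hcard, Nat.mul_add, mul_one] at hB2a
  have hB2 : m ≤ k * n i + (k - 1) := by linarith
  set q := m / k with hq
  set r' := m % k with hr'
  have hm : k * q + r' = m := Nat.div_add_mod m k
  have hrk : r' < k := Nat.mod_lt _ hk
  have hlo : q ≤ n i := by
    have h1 : k * q < k * (n i + 1) := by
      have he : k * (n i + 1) = k * n i + k := by ring
      omega
    have := Nat.lt_of_mul_lt_mul_left h1
    omega
  by_cases hr0 : r' = 0
  · left
    have h1 : k * n i < k * (q + 1) := by
      have he : k * (q + 1) = k * q + k := by ring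
      omega
    have := Nat.lt_of_mul_lt_mul_left h1
    omega
  · have hup : n i < q + 2 := by
      have h1 : k * n i < k * (q + 2) := by
        have he : k * (q + 2) = k * q + k + k := by ring
        omega
      exact Nat.lt_of_mul_lt_mul_left h1
    have hceil : (m + k - 1) / k = q + 1 := by
      have hm' : m + k - 1 = k * q + (r' + k - 1) := by omega
      rw [hm', Nat.mul_add_div hk]
      have hone : (r' + k - 1) / k = 1 :=
        Nat.div_eq_of_lt_le (by omega) (by omega)
      omega
    rcases (by omega : n i = q ∨ n i = q + 1) with h | h
    · left; omega
    · right; omega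


end Aux

/-- McDiarmid, equalized edge-colorings: if a loopless multigraph has a proper
`k₀`-edge-coloring, then for every `k ≥ k₀` it has a proper `k`-edge-coloring in which every
color class has `⌊|E|/k⌋` or `⌈|E|/k⌉` edges. -/
theorem equalized_edge_coloring
    {V : Type} [Fintype V] [DecidableEq V]
    (w : V → V → ℕ) (hsymm : ∀ u v, w u v = w v u) (hloop : ∀ v, w v v = 0)
    (k₀ : ℕ) (M₀ : Fin k₀ → V → V → Bool) (h₀ : IsProperEdgeColoringMG w k₀ M₀)
    (k : ℕ) (hk : k₀ ≤ k) :
    ∃ M : Fin k → V → V → Bool, IsProperEdgeColoringMG w k M ∧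
      ∀ i : Fin k,
        colorClassCard M i = ((∑ u, ∑ v, w u v) / 2) / k ∨
        colorClassCard M i = ((∑ u, ∑ v, w u v) / 2 + k - 1) / k := by
  classical
  obtain ⟨hsym₀, hdeg₀, hw₀⟩ := h₀
  -- pad the coloring with empty color classes
  set M1 : Fin k → V → V → Bool := fun c u v =>
    if h : (c : ℕ) < k₀ then M₀ ⟨c, h⟩ u v else false with hM1
  have h1 : IsProperEdgeColoringMG w k M1 := by
    refine ⟨?_, ?_, ?_⟩
    · intro c u v
      by_cases h : (c : ℕ) < k₀
      · simp only [hM1, dif_pos h]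
        exact hsym₀ _ u v
      · simp only [hM1, dif_neg h]
    · intro c u
      by_cases h : (c : ℕ) < k₀
      · have he : ∀ v, M1 c u v = M₀ ⟨c, h⟩ u v := fun v => by
          simp only [hM1, dif_pos h]
        simp only [he]
        exact hdeg₀ _ u
      · have he : ∀ v, M1 c u v = false := fun v => by
          simp only [hM1, dif_neg h]
        simp [he]
    · intro u v
      rw [hw₀ u v]
      apply Finset.card_bij
        (fun (c : Fin k₀) _ => (⟨(c : ℕ), lt_of_lt_of_le c.2 hk⟩ : Fin k))
      · intro c hc
        simp only [Finset.mem_filter, Finset.mem_univ, true_and] at hc ⊢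
        simp only [hM1, dif_pos c.2, Fin.eta]
        exact hc
      · intro c _ d _ hcd
        injection hcd with h
        exact Fin.ext h
      · intro c hc
        simp only [Finset.mem_filter, Finset.mem_univ, true_and, hM1] at hc
        by_cases h : (c : ℕ) < k₀
        · refine ⟨⟨(c : ℕ), h⟩, ?_, rfl⟩
          simp only [Finset.mem_filter, Finset.mem_univ, true_and]
          rw [dif_pos h] at hc
          exact hc
        · rw [dif_neg h] at hc
          exact absurd hc (by simp)
  obtain ⟨M, hM, hflat⟩ := equalize w hloop (Phi M1) M1 h1 le_rfl
  refine ⟨M, hM, ?_⟩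
  intro i
  set W := ∑ u, ∑ v, w u v with hW
  have hsumN : ∑ c, Ncnt M c = W := sum_Ncnt w M hM
  have heven : ∀ c, Even (Ncnt M c) := fun c =>
    even_sym_pairs (M c) (fun u v => hM.1 c u v) (fun u => diag_false hloop hM c u)
  have h2n : ∀ c, 2 * (Ncnt M c / 2) = Ncnt M c := by
    intro c
    obtain ⟨t, ht⟩ := heven c
    omega
  have hWsum : ∑ c, (Ncnt M c / 2) = W / 2 := by
    have h2 : 2 * ∑ c, (Ncnt M c / 2) = W := by
      rw [Finset.mul_sum]
      rw [Finset.sum_congr rfl (fun c _ => h2n c)]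
      exact hsumN
    omega
  have hpair : ∀ a b : Fin k, Ncnt M a / 2 ≤ Ncnt M b / 2 + 1 := by
    intro a b
    have h3 := hflat a b
    obtain ⟨s, hs⟩ := heven a
    obtain ⟨t, ht⟩ := heven b
    omega
  have hcc : colorClassCard M i = Ncnt M i / 2 := rfl
  rw [hcc]
  exact final_arith (fun c => Ncnt M c / 2) (W / 2) hWsum hpair i
end

section
/- (Dirac) Every graph G on n ≥ 3 vertices with δ(G) ≥ n/2 contains a Hamilton cycle. -/
open SimpleGraph Finset List

section Aux

variable {V : Type} [Fintype V] [DecidableEq V] {G : SimpleGraph V}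

/-- Decompose a walk at one of its darts. -/
lemma dirac_dart_decomp {u v : V} (p : G.Walk u v) (d : G.Dart) (hd : d ∈ p.darts) :
    ∃ (p1 : G.Walk u d.fst) (p2 : G.Walk d.snd v),
      p = p1.append (SimpleGraph.Walk.cons d.adj p2) := by
  induction p with
  | nil => simp at hd
  | @cons u w v h q ih =>
    rw [SimpleGraph.Walk.darts_cons, List.mem_cons] at hd
    rcases hd with hd | hd
    · subst hd
      exact ⟨SimpleGraph.Walk.nil, q, by simp⟩
    · obtain ⟨p1, p2, hp⟩ := ih hd
      exact ⟨SimpleGraph.Walk.cons h p1, p2, by rw [SimpleGraph.Walk.cons_append, ← hp]⟩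

/-- If a path contains the edge between its two endpoints, it has length 1. -/
lemma dirac_length_eq_one_of_edge {u v : V} {p : G.Walk u v} (hp : p.IsPath)
    (he : s(u, v) ∈ p.edges) : p.length = 1 := by
  cases p with
  | nil => simp at he
  | @cons u w v h q =>
    rw [SimpleGraph.Walk.edges_cons, List.mem_cons] at he
    rw [SimpleGraph.Walk.cons_isPath_iff] at hp
    rcases he with he | he
    · rw [Sym2.eq_iff] at he
      rcases he with ⟨-, hvw⟩ | ⟨huw, -⟩
      · subst hvw
        have : q = SimpleGraph.Walk.nil := (SimpleGraph.Walk.isPath_iff_eq_nil (p := q)).mp hp.1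
        subst this
        simp
      · exact absurd h (by rw [← huw]; exact G.irrefl)
    · exact absurd (q.fst_mem_support_of_mem_edges he) hp.2

end Aux

/-- Dirac: every graph on `n ≥ 3` vertices with minimum degree at least
`n/2` contains a Hamilton cycle. -/
theorem dirac_hamiltonian
    {V : Type} [Fintype V] [DecidableEq V]
    (G : SimpleGraph V) [DecidableRel G.Adj]
    (hn : 3 ≤ Fintype.card V)
    (hδ : Fintype.card V ≤ 2 * G.minDegree) :
    G.IsHamiltonian := by
  classical
  set n := Fintype.card V with hn_def
  have hmd : 2 ≤ G.minDegree := by omega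
  -- connectivity
  have hreach : ∀ u v : V, G.Reachable u v := by
    intro u v
    rcases eq_or_ne u v with rfl | huv
    · rfl
    by_cases hadj : G.Adj u v
    · exact hadj.reachable
    obtain ⟨c, hc1, hc2⟩ : ∃ c, G.Adj u c ∧ G.Adj v c := by
      by_contra hno
      push_neg at hno
      have hdisj : Disjoint (G.neighborFinset u) (G.neighborFinset v) := by
        rw [Finset.disjoint_left]
        intro c hcu hcv
        rw [SimpleGraph.mem_neighborFinset] at hcu hcv
        exact hno c hcu hcv
      have hsub : G.neighborFinset u ∪ G.neighborFinset v ⊆ Finset.univ \ {u, v} := by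
        intro c hcmem
        simp only [Finset.mem_union, SimpleGraph.mem_neighborFinset] at hcmem
        simp only [Finset.mem_sdiff, Finset.mem_univ, true_and, Finset.mem_insert,
          Finset.mem_singleton]
        push_neg
        constructor
        · rintro rfl
          rcases hcmem with hcm | hcm
          · exact G.irrefl hcm
          · exact hadj hcm.symm
        · rintro rfl
          rcases hcmem with hcm | hcm
          · exact hadj hcm
          · exact G.irrefl hcm
      have hcard2 : (Finset.univ \ ({u, v} : Finset V)).card = n - 2 := by
        rw [Finset.card_sdiff_of_subset (by simp)]
        simp [Finset.card_insert_of_notMem, huv, hn_def]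
      have h1 := Finset.card_le_card hsub
      rw [Finset.card_union_of_disjoint hdisj, hcard2] at h1
      have hdu := G.minDegree_le_degree u
      have hdv := G.minDegree_le_degree v
      rw [← SimpleGraph.card_neighborFinset_eq_degree] at hdu hdv
      omega
    exact hc1.reachable.trans hc2.reachable.symm
  -- longest path
  set Q : ℕ → Prop := fun l => ∃ (u v : V) (w : G.Walk u v), w.IsPath ∧ w.length = l with hQdef
  have hQ2 : Q 2 := by
    have hne : Nonempty V := Fintype.card_pos_iff.mp (by omega)
    obtain ⟨v⟩ := hne
    have hdeg : 2 ≤ G.degree v := le_trans hmd (G.minDegree_le_degree v)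
    rw [← SimpleGraph.card_neighborFinset_eq_degree] at hdeg
    obtain ⟨x, hx, y, hy, hxy⟩ := Finset.one_lt_card.mp hdeg
    rw [SimpleGraph.mem_neighborFinset] at hx hy
    refine ⟨x, y, SimpleGraph.Walk.cons hx.symm (SimpleGraph.Walk.cons hy SimpleGraph.Walk.nil),
      ?_, by simp⟩
    rw [SimpleGraph.Walk.cons_isPath_iff, SimpleGraph.Walk.cons_isPath_iff]
    refine ⟨⟨SimpleGraph.Walk.IsPath.nil, by simpa using hy.ne⟩, ?_⟩
    simp only [SimpleGraph.Walk.support_cons, SimpleGraph.Walk.support_nil, List.mem_cons,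
      List.mem_singleton, List.not_mem_nil]
    push_neg
    exact ⟨hx.ne', hxy, by simp⟩
  set k : ℕ := Nat.findGreatest Q n with hkdef
  have hmax : ∀ {u v : V} (w : G.Walk u v), w.IsPath → w.length ≤ k := by
    intro u v w hw
    exact Nat.le_findGreatest (le_of_lt hw.length_lt) ⟨u, v, w, hw, rfl⟩
  have hk : Q k := Nat.findGreatest_spec (m := 2) (by omega) hQ2
  have hk2 : 2 ≤ k := Nat.le_findGreatest (by omega) hQ2
  obtain ⟨a, b, p, hp, hpk⟩ := hk
  -- all neighbors of a and b lie on p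
  have hNa : ∀ c, G.Adj a c → c ∈ p.support := by
    intro c hc
    by_contra hcs
    have hpath : (SimpleGraph.Walk.cons hc.symm p).IsPath :=
      (SimpleGraph.Walk.cons_isPath_iff _ _).mpr ⟨hp, hcs⟩
    have := hmax _ hpath
    rw [SimpleGraph.Walk.length_cons, hpk] at this
    omega
  have hNb : ∀ c, G.Adj b c → c ∈ p.support := by
    intro c hc
    by_contra hcs
    have hpath : (SimpleGraph.Walk.cons hc.symm p.reverse).IsPath :=
      (SimpleGraph.Walk.cons_isPath_iff _ _).mpr
        ⟨hp.reverse, by rwa [SimpleGraph.Walk.support_reverse, List.mem_reverse]⟩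
    have := hmax _ hpath
    rw [SimpleGraph.Walk.length_cons, SimpleGraph.Walk.length_reverse, hpk] at this
    omega
  -- dart counting
  have hdartsnd : p.darts.map (·.snd) = p.support.tail := p.map_snd_darts
  have hdartfst : p.darts.map (·.fst) = p.support.dropLast := p.map_fst_darts
  have hdnodup : p.darts.Nodup := by
    have := hp.isTrail.edges_nodup
    rw [SimpleGraph.Walk.edges] at this
    exact List.Nodup.of_map _ this
  have hsuppnd : p.support.Nodup := hp.support_nodup
  have hcardA : ((p.darts.toFinset).filter (fun d => G.Adj a d.snd)).card = G.degree a := by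
    rw [← SimpleGraph.card_neighborFinset_eq_degree]
    apply Finset.card_bij (fun d _ => d.snd)
    · intro d hd
      rw [Finset.mem_filter] at hd
      rw [SimpleGraph.mem_neighborFinset]
      exact hd.2
    · intro d1 hd1 d2 hd2 hsnd
      rw [Finset.mem_filter, List.mem_toFinset] at hd1 hd2
      have hmapnd : (p.darts.map (·.snd)).Nodup := by
        rw [hdartsnd]; exact hsuppnd.tail
      exact List.inj_on_of_nodup_map hmapnd hd1.1 hd2.1 hsnd
    · intro c hc
      rw [SimpleGraph.mem_neighborFinset] at hc
      have hcsupp : c ∈ p.support := hNa c hc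
      have hcne : c ≠ a := fun h => G.irrefl (h ▸ hc)
      have hctail : c ∈ p.support.tail := by
        rw [p.support_eq_cons, List.mem_cons] at hcsupp
        exact hcsupp.resolve_left hcne
      rw [← hdartsnd, List.mem_map] at hctail
      obtain ⟨d, hd, hdsnd⟩ := hctail
      exact ⟨d, Finset.mem_filter.mpr ⟨List.mem_toFinset.mpr hd, by rwa [hdsnd]⟩, hdsnd⟩
  have hcardB : ((p.darts.toFinset).filter (fun d => G.Adj b d.fst)).card = G.degree b := by
    rw [← SimpleGraph.card_neighborFinset_eq_degree]
    apply Finset.card_bij (fun d _ => d.fst)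
    · intro d hd
      rw [Finset.mem_filter] at hd
      rw [SimpleGraph.mem_neighborFinset]
      exact hd.2
    · intro d1 hd1 d2 hd2 hfst
      rw [Finset.mem_filter, List.mem_toFinset] at hd1 hd2
      have hmapnd : (p.darts.map (·.fst)).Nodup := by
        rw [hdartfst]; exact hsuppnd.sublist (List.dropLast_sublist _)
      exact List.inj_on_of_nodup_map hmapnd hd1.1 hd2.1 hfst
    · intro c hc
      rw [SimpleGraph.mem_neighborFinset] at hc
      have hcsupp : c ∈ p.support := hNb c hc
      have hcne : c ≠ b := fun h => G.irrefl (h ▸ hc)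
      have hcdl : c ∈ p.support.dropLast := by
        have hne : p.support ≠ [] := p.support_ne_nil
        have := List.dropLast_append_getLast hne
        rw [p.getLast_support] at this
        rw [← this, List.mem_append, List.mem_singleton] at hcsupp
        exact hcsupp.resolve_right hcne
      rw [← hdartfst, List.mem_map] at hcdl
      obtain ⟨d, hd, hdfst⟩ := hcdl
      exact ⟨d, Finset.mem_filter.mpr ⟨List.mem_toFinset.mpr hd, by rwa [hdfst]⟩, hdfst⟩
  -- pigeonhole: find the crossing dart
  have hdartcard : p.darts.toFinset.card = k := by
    rw [List.toFinset_card_of_nodup hdnodup, SimpleGraph.Walk.length_darts, hpk]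
  obtain ⟨d, hd⟩ : ∃ d, d ∈ (p.darts.toFinset.filter (fun d => G.Adj a d.snd)) ∩
      (p.darts.toFinset.filter (fun d => G.Adj b d.fst)) := by
    set A := p.darts.toFinset.filter (fun d => G.Adj a d.snd) with hAdef
    set B := p.darts.toFinset.filter (fun d => G.Adj b d.fst) with hBdef
    have hun : (A ∪ B).card ≤ k := by
      rw [← hdartcard]
      exact Finset.card_le_card (Finset.union_subset (Finset.filter_subset _ _)
        (Finset.filter_subset _ _))
    have hsum : (A ∪ B).card + (A ∩ B).card = A.card + B.card :=
      Finset.card_union_add_card_inter A B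
    have hda := G.minDegree_le_degree a
    have hdb := G.minDegree_le_degree b
    have hklt : k < n := by rw [← hpk]; exact hp.length_lt
    rw [hcardA] at hsum
    rw [hcardB] at hsum
    exact Finset.card_pos.mp (by omega)
  rw [Finset.mem_inter, Finset.mem_filter, Finset.mem_filter, List.mem_toFinset] at hd
  obtain ⟨⟨hdmem, had⟩, -, hbd⟩ := hd
  -- build the cycle
  obtain ⟨p1, p2, hdecomp⟩ := dirac_dart_decomp p d hdmem
  set P : G.Walk d.snd a := p2.append (SimpleGraph.Walk.cons hbd p1.reverse) with hPdef
  have hPsupp : P.support.Perm p.support := by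
    have h1 : P.support = p2.support ++ p1.support.reverse := by
      rw [hPdef, SimpleGraph.Walk.support_append, SimpleGraph.Walk.support_cons, List.tail_cons,
        SimpleGraph.Walk.support_reverse]
    have h2 : p.support = p1.support ++ p2.support := by
      rw [hdecomp, SimpleGraph.Walk.support_append, SimpleGraph.Walk.support_cons, List.tail_cons]
    rw [h1, h2]
    exact (List.Perm.append_left _ (List.reverse_perm _)).trans (List.perm_append_comm)
  have hPpath : P.IsPath := SimpleGraph.Walk.IsPath.mk' (hPsupp.nodup_iff.mpr hsuppnd)
  have hPlen : P.length = k := by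
    have := congrArg SimpleGraph.Walk.length hdecomp
    rw [SimpleGraph.Walk.length_append, SimpleGraph.Walk.length_cons, hpk] at this
    rw [hPdef, SimpleGraph.Walk.length_append, SimpleGraph.Walk.length_cons,
      SimpleGraph.Walk.length_reverse]
    omega
  have hedge : s(a, d.snd) ∉ P.edges := by
    intro hmem
    have : s(d.snd, a) ∈ P.edges := by rwa [Sym2.eq_swap]
    have := dirac_length_eq_one_of_edge hPpath this
    omega
  set C : G.Walk a a := SimpleGraph.Walk.cons had P with hCdef
  have hC : C.IsCycle := (SimpleGraph.Walk.cons_isCycle_iff P had).mpr ⟨hPpath, hedge⟩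
  have hCsupptail : C.support.tail = P.support := by
    rw [hCdef, SimpleGraph.Walk.support_cons, List.tail_cons]
  have hCsupp : ∀ w, w ∈ C.support ↔ w ∈ p.support := by
    intro w
    rw [hCdef, SimpleGraph.Walk.support_cons, List.mem_cons, hPsupp.mem_iff]
    constructor
    · rintro (rfl | h)
      · exact p.start_mem_support
      · exact h
    · exact Or.inr
  -- all vertices are on p
  have hall : ∀ w : V, w ∈ p.support := by
    by_contra hcon
    push_neg at hcon
    obtain ⟨w, hw⟩ := hcon
    obtain ⟨q⟩ := hreach w a
    obtain ⟨d2, hd2, hd2f, hd2s⟩ := q.exists_boundary_dart {x | x ∉ p.support} hw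
      (by simp [p.start_mem_support])
    simp only [Set.mem_setOf_eq, not_not] at hd2f hd2s
    have hyC : d2.snd ∈ C.support := (hCsupp _).mpr hd2s
    set C' : G.Walk d2.snd d2.snd := C.rotate _ hyC with hC'def
    have hC'cyc : C'.IsCycle := hC.rotate hyC
    have hC'nn : ¬ C'.Nil := hC'cyc.not_nil
    set P2 := C'.tail with hP2def
    have hP2supp : P2.support = C'.support.tail := SimpleGraph.Walk.support_tail_of_not_nil C' hC'nn
    have hP2path : P2.IsPath := SimpleGraph.Walk.IsPath.mk' (by
      rw [hP2supp]; exact hC'cyc.support_nodup)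
    have hP2x : d2.fst ∉ P2.support := by
      intro hmem
      rw [hP2supp] at hmem
      have hrot : C'.support.tail ~r C.support.tail := SimpleGraph.Walk.support_rotate C _ hyC
      have : d2.fst ∈ C.support.tail := hrot.perm.mem_iff.mp hmem
      have : d2.fst ∈ C.support := List.mem_of_mem_tail this
      exact hd2f ((hCsupp _).mp this)
    set P3 := P2.concat d2.adj.symm with hP3def
    have hP3path : P3.IsPath := by
      rw [← SimpleGraph.Walk.isPath_reverse_iff, hP3def, SimpleGraph.Walk.reverse_concat]
      rw [SimpleGraph.Walk.cons_isPath_iff]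
      refine ⟨hP2path.reverse, ?_⟩
      rwa [SimpleGraph.Walk.support_reverse, List.mem_reverse]
    have hC'len : C'.length = k + 1 := by
      have h1 : C'.darts ~r C.darts := SimpleGraph.Walk.rotate_darts C _ hyC
      have h2 := h1.perm.length_eq
      rw [SimpleGraph.Walk.length_darts, SimpleGraph.Walk.length_darts] at h2
      rw [h2, hCdef, SimpleGraph.Walk.length_cons, hPlen]
    have hP2len : P2.length = k := by
      have h := SimpleGraph.Walk.length_tail_add_one hC'nn
      show C'.tail.length = k
      omega
    have := hmax P3 hP3path
    rw [hP3def, SimpleGraph.Walk.length_concat, hP2len] at this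
    omega
  -- conclude
  intro _
  refine ⟨a, C, ?_⟩
  rw [SimpleGraph.Walk.isHamiltonianCycle_iff_isCycle_and_support_count_tail_eq_one]
  refine ⟨hC, fun v => ?_⟩
  rw [hCsupptail]
  exact List.count_eq_one_of_mem (hPsupp.nodup_iff.mpr hsuppnd) (hPsupp.mem_iff.mpr (hall v))
end

section
/- (Balanced degree partition) There exists n₀ such that for all n ≥ n₀ the following holds: if G is a graph on 2n vertices and N = {x₁,y₁,…,x_t,y_t} ⊆ V(G) is a set of 2t distinct vertices grouped into t pairs (1 ≤ t ≤ n), then V(G) can be partitioned into sets A and B with |A| = |B|, |A ∩ {x_i, y_i}| = 1 for every i, and |d_A(v) − d_B(v)| ≤ n^{2/3} for every vertex v, where d_A(v) and d_B(v) count neighbors of v in A and B respectively. -/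
open Finset


lemma pt0 (x c : ℤ) (hc : c^2 ≤ 1) :
    (x+c)^(2*0) + (x-c)^(2*0) ≤ 2*(x^2+144)^0 := by
  have hy : (0:ℤ) ≤ x^2 := sq_nonneg x
  have hu : (0:ℤ) ≤ c^2 := sq_nonneg c
  have key : (x+c)^(2*0) + (x-c)^(2*0) = 2*(1*(x^2)^0*(c^2)^0) := by ring
  rw [key]
  generalize x^2 = y at *
  generalize c^2 = u at *
  nlinarith

lemma pt1 (x c : ℤ) (hc : c^2 ≤ 1) :
    (x+c)^(2*1) + (x-c)^(2*1) ≤ 2*(x^2+144)^1 := by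
  have hy : (0:ℤ) ≤ x^2 := sq_nonneg x
  have hu : (0:ℤ) ≤ c^2 := sq_nonneg c
  have key : (x+c)^(2*1) + (x-c)^(2*1) = 2*(1*(x^2)^1*(c^2)^0 + 1*(x^2)^0*(c^2)^1) := by ring
  rw [key]
  generalize x^2 = y at *
  generalize c^2 = u at *
  nlinarith [pow_nonneg hy 1, hc]

lemma pt2 (x c : ℤ) (hc : c^2 ≤ 1) :
    (x+c)^(2*2) + (x-c)^(2*2) ≤ 2*(x^2+144)^2 := by
  have hy : (0:ℤ) ≤ x^2 := sq_nonneg x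
  have hu : (0:ℤ) ≤ c^2 := sq_nonneg c
  have key : (x+c)^(2*2) + (x-c)^(2*2) = 2*(1*(x^2)^2*(c^2)^0 + 6*(x^2)^1*(c^2)^1 + 1*(x^2)^0*(c^2)^2) := by ring
  rw [key]
  generalize x^2 = y at *
  generalize c^2 = u at *
  have h2 : u^2 ≤ 1 := by nlinarith
  have p1 : (0:ℤ) ≤ y^1 := by positivity
  nlinarith [pow_nonneg hy 2, mul_le_mul_of_nonneg_left hc p1, h2]

lemma pt3 (x c : ℤ) (hc : c^2 ≤ 1) :
    (x+c)^(2*3) + (x-c)^(2*3) ≤ 2*(x^2+144)^3 := by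
  have hy : (0:ℤ) ≤ x^2 := sq_nonneg x
  have hu : (0:ℤ) ≤ c^2 := sq_nonneg c
  have key : (x+c)^(2*3) + (x-c)^(2*3) = 2*(1*(x^2)^3*(c^2)^0 + 15*(x^2)^2*(c^2)^1 + 15*(x^2)^1*(c^2)^2 + 1*(x^2)^0*(c^2)^3) := by ring
  rw [key]
  generalize x^2 = y at *
  generalize c^2 = u at *
  have h2 : u^2 ≤ 1 := by nlinarith
  have h3 : u^3 ≤ 1 := by nlinarith
  have p1 : (0:ℤ) ≤ y^1 := by positivity
  have p2 : (0:ℤ) ≤ y^2 := by positivity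
  nlinarith [pow_nonneg hy 3, mul_le_mul_of_nonneg_left hc p2, mul_le_mul_of_nonneg_left h2 p1, h3]

lemma pt4 (x c : ℤ) (hc : c^2 ≤ 1) :
    (x+c)^(2*4) + (x-c)^(2*4) ≤ 2*(x^2+144)^4 := by
  have hy : (0:ℤ) ≤ x^2 := sq_nonneg x
  have hu : (0:ℤ) ≤ c^2 := sq_nonneg c
  have key : (x+c)^(2*4) + (x-c)^(2*4) = 2*(1*(x^2)^4*(c^2)^0 + 28*(x^2)^3*(c^2)^1 + 70*(x^2)^2*(c^2)^2 + 28*(x^2)^1*(c^2)^3 + 1*(x^2)^0*(c^2)^4) := by ring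
  rw [key]
  generalize x^2 = y at *
  generalize c^2 = u at *
  have h2 : u^2 ≤ 1 := by nlinarith
  have h3 : u^3 ≤ 1 := by nlinarith
  have h4 : u^4 ≤ 1 := by nlinarith
  have p1 : (0:ℤ) ≤ y^1 := by positivity
  have p2 : (0:ℤ) ≤ y^2 := by positivity
  have p3 : (0:ℤ) ≤ y^3 := by positivity
  nlinarith [pow_nonneg hy 4, mul_le_mul_of_nonneg_left hc p3, mul_le_mul_of_nonneg_left h2 p2, mul_le_mul_of_nonneg_left h3 p1, h4]

lemma pt5 (x c : ℤ) (hc : c^2 ≤ 1) :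
    (x+c)^(2*5) + (x-c)^(2*5) ≤ 2*(x^2+144)^5 := by
  have hy : (0:ℤ) ≤ x^2 := sq_nonneg x
  have hu : (0:ℤ) ≤ c^2 := sq_nonneg c
  have key : (x+c)^(2*5) + (x-c)^(2*5) = 2*(1*(x^2)^5*(c^2)^0 + 45*(x^2)^4*(c^2)^1 + 210*(x^2)^3*(c^2)^2 + 210*(x^2)^2*(c^2)^3 + 45*(x^2)^1*(c^2)^4 + 1*(x^2)^0*(c^2)^5) := by ring
  rw [key]
  generalize x^2 = y at *
  generalize c^2 = u at *
  have h2 : u^2 ≤ 1 := by nlinarith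
  have h3 : u^3 ≤ 1 := by nlinarith
  have h4 : u^4 ≤ 1 := by nlinarith
  have h5 : u^5 ≤ 1 := by nlinarith
  have p1 : (0:ℤ) ≤ y^1 := by positivity
  have p2 : (0:ℤ) ≤ y^2 := by positivity
  have p3 : (0:ℤ) ≤ y^3 := by positivity
  have p4 : (0:ℤ) ≤ y^4 := by positivity
  nlinarith [pow_nonneg hy 5, mul_le_mul_of_nonneg_left hc p4, mul_le_mul_of_nonneg_left h2 p3, mul_le_mul_of_nonneg_left h3 p2, mul_le_mul_of_nonneg_left h4 p1, h5]

lemma pt6 (x c : ℤ) (hc : c^2 ≤ 1) :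
    (x+c)^(2*6) + (x-c)^(2*6) ≤ 2*(x^2+144)^6 := by
  have hy : (0:ℤ) ≤ x^2 := sq_nonneg x
  have hu : (0:ℤ) ≤ c^2 := sq_nonneg c
  have key : (x+c)^(2*6) + (x-c)^(2*6) = 2*(1*(x^2)^6*(c^2)^0 + 66*(x^2)^5*(c^2)^1 + 495*(x^2)^4*(c^2)^2 + 924*(x^2)^3*(c^2)^3 + 495*(x^2)^2*(c^2)^4 + 66*(x^2)^1*(c^2)^5 + 1*(x^2)^0*(c^2)^6) := by ring
  rw [key]
  generalize x^2 = y at *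
  generalize c^2 = u at *
  have h2 : u^2 ≤ 1 := by nlinarith
  have h3 : u^3 ≤ 1 := by nlinarith
  have h4 : u^4 ≤ 1 := by nlinarith
  have h5 : u^5 ≤ 1 := by nlinarith
  have h6 : u^6 ≤ 1 := by nlinarith
  have p1 : (0:ℤ) ≤ y^1 := by positivity
  have p2 : (0:ℤ) ≤ y^2 := by positivity
  have p3 : (0:ℤ) ≤ y^3 := by positivity
  have p4 : (0:ℤ) ≤ y^4 := by positivity
  have p5 : (0:ℤ) ≤ y^5 := by positivity
  nlinarith [pow_nonneg hy 6, mul_le_mul_of_nonneg_left hc p5, mul_le_mul_of_nonneg_left h2 p4, mul_le_mul_of_nonneg_left h3 p3, mul_le_mul_of_nonneg_left h4 p2, mul_le_mul_of_nonneg_left h5 p1, h6]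

lemma pt (m : ℕ) (hm : m ≤ 6) (x c : ℤ) (hc : c^2 ≤ 1) :
    (x+c)^(2*m) + (x-c)^(2*m) ≤ 2*(x^2+144)^m := by
  interval_cases m
  · exact pt0 x c hc
  · exact pt1 x c hc
  · exact pt2 x c hc
  · exact pt3 x c hc
  · exact pt4 x c hc
  · exact pt5 x c hc
  · exact pt6 x c hc




lemma moment (n : ℕ) (c : Fin n → ℤ) (hc : ∀ i, (c i)^2 ≤ 1) (m : ℕ) (hm : m ≤ 6) :
    (∑ ε : Fin n → Bool, (∑ i, (if ε i then c i else -c i))^(2*m))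
      ≤ 2^n * (144*(n:ℤ))^m := by
  induction n generalizing m with
  | zero =>
      rcases Nat.eq_zero_or_pos m with h|h
      · subst h; simp
      · have h2 : 2*m ≠ 0 := by omega
        simp [zero_pow h2, zero_pow (by omega : m ≠ 0)]
  | succ n ih =>
      have hsplit :
          (∑ ε : Fin (n+1) → Bool, (∑ i, (if ε i then c i else -c i))^(2*m))
          = ∑ b : Bool, ∑ ε : Fin n → Bool,
              (∑ i : Fin (n+1), (if (Fin.cons b ε : Fin (n+1) → Bool) i then c i else -c i))^(2*m) := by
        rw [← Equiv.sum_comp (Fin.consEquiv (fun _ => Bool))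
          (fun ε => (∑ i, (if ε i then c i else -c i))^(2*m)), Fintype.sum_prod_type]
        rfl
      rw [hsplit]
      -- set S' notation
      set c' : Fin n → ℤ := fun i => c i.succ with hc'
      have hinner : ∀ (b : Bool) (ε : Fin n → Bool),
          (∑ i : Fin (n+1), (if (Fin.cons b ε : Fin (n+1) → Bool) i then c i else -c i))
          = (if b then c 0 else -c 0) + ∑ i : Fin n, (if ε i then c' i else -c' i) := by
        intro b ε
        rw [Fin.sum_univ_succ]
        simp [hc']
      rw [Fintype.sum_bool]
      simp only [hinner]
      have key : ∀ ε : Fin n → Bool,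
          ((if true then c 0 else -c 0) + ∑ i : Fin n, (if ε i then c' i else -c' i))^(2*m)
          + ((if false then c 0 else -c 0) + ∑ i : Fin n, (if ε i then c' i else -c' i))^(2*m)
          ≤ 2*((∑ i : Fin n, (if ε i then c' i else -c' i))^2 + 144)^m := by
        intro ε
        have h := pt m hm (∑ i : Fin n, (if ε i then c' i else -c' i)) (c 0) (hc 0)
        have e1 : ((if true then c 0 else -c 0) + ∑ i : Fin n, (if ε i then c' i else -c' i))
            = (∑ i : Fin n, (if ε i then c' i else -c' i)) + c 0 := by simp [add_comm]
        have e2 : ((if false then c 0 else -c 0) + ∑ i : Fin n, (if ε i then c' i else -c' i))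
            = (∑ i : Fin n, (if ε i then c' i else -c' i)) - c 0 := by
          simp; ring
        rw [e1, e2]; exact h
      calc (∑ ε : Fin n → Bool, ((if true then c 0 else -c 0) + ∑ i : Fin n, (if ε i then c' i else -c' i))^(2*m))
            + (∑ ε : Fin n → Bool, ((if false then c 0 else -c 0) + ∑ i : Fin n, (if ε i then c' i else -c' i))^(2*m))
          = ∑ ε : Fin n → Bool,
              (((if true then c 0 else -c 0) + ∑ i : Fin n, (if ε i then c' i else -c' i))^(2*m)
              + ((if false then c 0 else -c 0) + ∑ i : Fin n, (if ε i then c' i else -c' i))^(2*m)) := by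
            rw [Finset.sum_add_distrib]
        _ ≤ ∑ ε : Fin n → Bool, 2*((∑ i : Fin n, (if ε i then c' i else -c' i))^2 + 144)^m :=
            Finset.sum_le_sum (fun ε _ => key ε)
        _ = 2 * ∑ ε : Fin n → Bool, ((∑ i : Fin n, (if ε i then c' i else -c' i))^2 + 144)^m := by
            rw [Finset.mul_sum]
        _ = 2 * ∑ k ∈ Finset.range (m+1), ∑ ε : Fin n → Bool,
              ((∑ i : Fin n, (if ε i then c' i else -c' i))^(2*k)) * (144^(m-k) * (m.choose k : ℤ)) := by
            rw [Finset.sum_comm]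
            congr 1
            refine Finset.sum_congr rfl (fun ε _ => ?_)
            rw [add_pow]
            refine Finset.sum_congr rfl (fun k _ => ?_)
            rw [pow_mul]; ring
        _ ≤ 2 * ∑ k ∈ Finset.range (m+1),
              (2^n * (144*(n:ℤ))^k) * (144^(m-k) * (m.choose k : ℤ)) := by
            have h2 : (0:ℤ) ≤ 2 := by norm_num
            refine mul_le_mul_of_nonneg_left (Finset.sum_le_sum (fun k hk => ?_)) h2
            rw [← Finset.sum_mul]
            refine mul_le_mul_of_nonneg_right ?_ (by positivity)
            exact ih (fun i => c i.succ) (fun i => hc i.succ) k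
              (le_trans (Nat.lt_succ_iff.mp (Finset.mem_range.mp hk)) hm)
        _ = 2^(n+1) * (144*((n:ℤ)+1))^m := by
            have : (144*((n:ℤ)+1))^m = (144*(n:ℤ) + 144)^m := by ring_nf
            rw [this, add_pow, Finset.mul_sum, Finset.mul_sum]
            rw [pow_succ]
            refine Finset.sum_congr rfl (fun k _ => ?_)
            ring


lemma exists_fg (V : Type) [Fintype V] [DecidableEq V] (n t : ℕ) (ht : t ≤ n)
    (hcard : Fintype.card V = 2*n)
    (x y : Fin t → V)
    (hinj : Function.Injective (fun i : Fin t ⊕ Fin t => Sum.elim x y i)) :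
    ∃ f g : Fin n → V, Function.Bijective (Sum.elim f g : Fin n ⊕ Fin n → V) ∧
      (∀ i : Fin t, ∃ j : Fin n, f j = x i ∧ g j = y i) := by
  classical
  set N : Finset V := Finset.univ.image (fun i : Fin t ⊕ Fin t => Sum.elim x y i) with hN
  have hNcard : N.card = 2*t := by
    rw [hN, Finset.card_image_of_injective _ hinj]
    simp [Fintype.card_sum]; omega
  have hKcard : Fintype.card (Fin (n-t) ⊕ Fin (n-t)) = Fintype.card ↥(Nᶜ) := by
    simp [Fintype.card_sum, Finset.card_compl, hNcard, hcard]; omega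
  set eK := Fintype.equivOfCardEq hKcard with heK
  set fJ : Fin t ⊕ Fin (n-t) → V := Sum.elim x (fun a => (eK (Sum.inl a) : V)) with hfJ
  set gJ : Fin t ⊕ Fin (n-t) → V := Sum.elim y (fun a => (eK (Sum.inr a) : V)) with hgJ
  have hmemN : ∀ i : Fin t, x i ∈ N ∧ y i ∈ N := by
    intro i
    constructor
    · exact Finset.mem_image.mpr ⟨Sum.inl i, Finset.mem_univ _, rfl⟩
    · exact Finset.mem_image.mpr ⟨Sum.inr i, Finset.mem_univ _, rfl⟩
  have hmemK : ∀ s, (eK s : V) ∉ N := by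
    intro s
    exact Finset.mem_compl.mp (eK s).2
  have hJinj : Function.Injective (Sum.elim fJ gJ : (Fin t ⊕ Fin (n-t)) ⊕ (Fin t ⊕ Fin (n-t)) → V) := by
    have hsub : Function.Injective (fun v : ↥(Nᶜ) => (v : V)) := Subtype.val_injective
    intro s1 s2 h
    rcases s1 with (i|a') | (i2|a2) <;> rcases s2 with (j|b') | (j2|b2) <;>
      simp only [Sum.elim_inl, Sum.elim_inr, hfJ, hgJ] at h ⊢
    all_goals try (exfalso; first
      | exact hmemK _ (h ▸ (hmemN _).1)
      | exact hmemK _ (h ▸ (hmemN _).2)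
      | exact hmemK _ (h.symm ▸ (hmemN _).1)
      | exact hmemK _ (h.symm ▸ (hmemN _).2))
    · have := hinj (a₁ := Sum.inl i) (a₂ := Sum.inl j) (by simpa using h); simpa using this
    · have := hinj (a₁ := Sum.inl i) (a₂ := Sum.inr j2) (by simpa using h); simp at this
    · have := eK.injective (hsub h); simpa using this
    · have := eK.injective (hsub h); simp at this
    · have := hinj (a₁ := Sum.inr i2) (a₂ := Sum.inl j) (by simpa using h); simp at this
    · have := hinj (a₁ := Sum.inr i2) (a₂ := Sum.inr j2) (by simpa using h); simpa using this
    · have := eK.injective (hsub h); simp at this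
    · have := eK.injective (hsub h); simpa using this
  have hJcard : Fintype.card ((Fin t ⊕ Fin (n-t)) ⊕ (Fin t ⊕ Fin (n-t))) = Fintype.card V := by
    simp [Fintype.card_sum, hcard]; omega
  have hJbij : Function.Bijective (Sum.elim fJ gJ) :=
    (Fintype.bijective_iff_injective_and_card _).mpr ⟨hJinj, hJcard⟩
  have hn' : t + (n - t) = n := by omega
  set e : Fin n ≃ Fin t ⊕ Fin (n-t) := (finCongr hn'.symm).trans finSumFinEquiv.symm with he
  refine ⟨fJ ∘ e, gJ ∘ e, ?_, ?_⟩
  · have hco : (Sum.elim (fJ ∘ e) (gJ ∘ e) : Fin n ⊕ Fin n → V)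
        = (Sum.elim fJ gJ) ∘ (Sum.map e e) := by
      funext s; rcases s with s|s <;> rfl
    rw [hco]
    exact hJbij.comp (Equiv.sumCongr e e).bijective
  · intro i
    refine ⟨e.symm (Sum.inl i), ?_, ?_⟩ <;>
      simp [Function.comp, Equiv.apply_symm_apply, hfJ, hgJ]





/-- Shan, balanced degree partition: for `n` large, any graph on `2n`
vertices with `t` prescribed disjoint pairs `{x i, y i}` (`1 ≤ t ≤ n`) admits a partition
`(A, B)` of its vertex set with `|A| = |B|`, each pair split between `A` and `B`, and
`|d_A(v) − d_B(v)| ≤ n^(2/3)` for every vertex `v`. -/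
theorem balanced_degree_partition :
    ∃ n₀ : ℕ, ∀ n : ℕ, n₀ ≤ n →
      ∀ (V : Type) (_ : Fintype V) (_ : DecidableEq V)
        (G : SimpleGraph V) (_ : DecidableRel G.Adj),
        Fintype.card V = 2 * n →
        ∀ t : ℕ, 1 ≤ t → t ≤ n →
        ∀ x y : Fin t → V,
          Function.Injective (fun i : Fin t ⊕ Fin t => Sum.elim x y i) →
          ∃ A : Finset V,
            2 * A.card = Fintype.card V ∧
            (∀ i : Fin t, x i ∈ A ↔ y i ∉ A) ∧
            ∀ v : V,
              |((A.filter fun u => G.Adj v u).card : ℝ) -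
                ((Aᶜ.filter fun u => G.Adj v u).card : ℝ)| ≤ (n : ℝ) ^ ((2 : ℝ) / 3) := by
  classical
  refine ⟨2*144^6, ?_⟩
  intro n hn V _ _ G _ hcard t ht1 ht2 x y hinj
  obtain ⟨f, g, hbij, hpair⟩ := exists_fg V n t ht2 hcard x y hinj
  have hinjFG := hbij.injective
  have hfg_ne : ∀ i j, f i ≠ g j := by
    intro i j h
    have := hinjFG (a₁ := Sum.inl i) (a₂ := Sum.inr j) h
    simp at this
  have hf_inj : Function.Injective f := by
    intro i j h
    have := hinjFG (a₁ := Sum.inl i) (a₂ := Sum.inl j) h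
    simpa using this
  have hg_inj : Function.Injective g := by
    intro i j h
    have := hinjFG (a₁ := Sum.inr i) (a₂ := Sum.inr j) h
    simpa using this
  set cf : V → Fin n → ℤ :=
    fun v i => (if G.Adj v (f i) then 1 else 0) - (if G.Adj v (g i) then 1 else 0) with hcf_def
  have hcf : ∀ v i, (cf v i)^2 ≤ 1 := by
    intro v i
    simp only [hcf_def]
    split_ifs <;> norm_num
  set S : V → (Fin n → Bool) → ℤ :=
    fun v ε => ∑ i, (if ε i then cf v i else -cf v i) with hS_def
  have hmom : ∀ v, ∑ ε : Fin n → Bool, (S v ε)^(2*6) ≤ 2^n * (144*(n:ℤ))^6 :=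
    fun v => moment n (cf v) (hcf v) 6 le_rfl
  have hcardfun : (Finset.univ : Finset (Fin n → Bool)).card = 2^n := by
    simp
  have htot : ∑ ε : Fin n → Bool, ∑ v : V, (S v ε)^(2*6)
      ≤ ∑ _ε : Fin n → Bool, (2*(n:ℤ)) * (144*(n:ℤ))^6 := by
    rw [Finset.sum_comm]
    calc ∑ v : V, ∑ ε : Fin n → Bool, (S v ε)^(2*6)
        ≤ ∑ _v : V, 2^n * (144*(n:ℤ))^6 :=
          Finset.sum_le_sum (fun v _ => hmom v)
      _ = ∑ _ε : Fin n → Bool, (2*(n:ℤ)) * (144*(n:ℤ))^6 := by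
          rw [Finset.sum_const, Finset.sum_const, hcardfun]
          simp [hcard]
          ring
  obtain ⟨ε, -, hε⟩ := Finset.exists_le_of_sum_le
    (Finset.univ_nonempty (α := Fin n → Bool)) htot
  -- the partition
  set ch : Fin n → V := fun i => if ε i then f i else g i with hch_def
  set ch' : Fin n → V := fun i => if ε i then g i else f i with hch'_def
  have hch_inj : Function.Injective ch := by
    intro i j h
    simp only [hch_def] at h
    split_ifs at h
    · exact hf_inj h
    · exact absurd h (hfg_ne i j)
    · exact absurd h.symm (hfg_ne j i)
    · exact hg_inj h
  have hch'_inj : Function.Injective ch' := by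
    intro i j h
    simp only [hch'_def] at h
    split_ifs at h
    · exact hg_inj h
    · exact absurd h.symm (hfg_ne j i)
    · exact absurd h (hfg_ne i j)
    · exact hf_inj h
  set A : Finset V := Finset.univ.image ch with hA_def
  set B : Finset V := Finset.univ.image ch' with hB_def
  have hAcard : A.card = n := by
    rw [hA_def, Finset.card_image_of_injective _ hch_inj]
    simp
  have hfA : ∀ j, f j ∈ A ↔ ε j = true := by
    intro j
    constructor
    · intro hm
      obtain ⟨i, -, hi⟩ := Finset.mem_image.mp hm
      simp only [hch_def] at hi
      by_cases h : ε i
      · simp [h] at hi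
        rw [← hf_inj hi]; exact h
      · simp [h] at hi
        exact absurd hi.symm (hfg_ne j i)
    · intro h
      exact Finset.mem_image.mpr ⟨j, Finset.mem_univ _, by simp [hch_def, h]⟩
  have hgA : ∀ j, g j ∈ A ↔ ε j = false := by
    intro j
    constructor
    · intro hm
      obtain ⟨i, -, hi⟩ := Finset.mem_image.mp hm
      simp only [hch_def] at hi
      by_cases h : ε i
      · simp [h] at hi
        exact absurd hi (hfg_ne i j)
      · simp [h] at hi
        rw [← hg_inj hi]; simpa using h
    · intro h
      exact Finset.mem_image.mpr ⟨j, Finset.mem_univ _, by simp [hch_def, h]⟩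
  have hfB : ∀ j, f j ∈ B ↔ ε j = false := by
    intro j
    constructor
    · intro hm
      obtain ⟨i, -, hi⟩ := Finset.mem_image.mp hm
      simp only [hch'_def] at hi
      by_cases h : ε i
      · simp [h] at hi
        exact absurd hi.symm (hfg_ne j i)
      · simp [h] at hi
        rw [← hf_inj hi]; simpa using h
    · intro h
      exact Finset.mem_image.mpr ⟨j, Finset.mem_univ _, by simp [hch'_def, h]⟩
  have hgB : ∀ j, g j ∈ B ↔ ε j = true := by
    intro j
    constructor
    · intro hm
      obtain ⟨i, -, hi⟩ := Finset.mem_image.mp hm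
      simp only [hch'_def] at hi
      by_cases h : ε i
      · simp [h] at hi
        rw [← hg_inj hi]; exact h
      · simp [h] at hi
        exact absurd hi (hfg_ne i j)
    · intro h
      exact Finset.mem_image.mpr ⟨j, Finset.mem_univ _, by simp [hch'_def, h]⟩
  have hBcompl : B = Aᶜ := by
    ext v
    rw [Finset.mem_compl]
    obtain ⟨s, rfl⟩ := hbij.surjective v
    rcases s with j | j
    · simp only [Sum.elim_inl]
      rw [hfA, hfB]
      cases ε j <;> simp
    · simp only [Sum.elim_inr]
      rw [hgA, hgB]
      cases ε j <;> simp
  refine ⟨A, ?_, ?_, ?_⟩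
  · rw [hAcard, hcard]
  · intro i
    obtain ⟨j, hfj, hgj⟩ := hpair i
    rw [← hfj, ← hgj, hfA j, hgA j]
    cases ε j <;> simp
  · intro v
    -- degree identity
    have hdA : ((A.filter fun u => G.Adj v u).card : ℤ)
        = ∑ i : Fin n, (if G.Adj v (ch i) then (1:ℤ) else 0) := by
      rw [hA_def, Finset.filter_image, Finset.card_image_of_injective _ hch_inj,
        Finset.card_filter]
      push_cast
      rfl
    have hdB : (((Aᶜ).filter fun u => G.Adj v u).card : ℤ)
        = ∑ i : Fin n, (if G.Adj v (ch' i) then (1:ℤ) else 0) := by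
      rw [← hBcompl, hB_def, Finset.filter_image,
        Finset.card_image_of_injective _ hch'_inj, Finset.card_filter]
      push_cast
      rfl
    have hDS : ((A.filter fun u => G.Adj v u).card : ℤ)
        - (((Aᶜ).filter fun u => G.Adj v u).card : ℤ) = S v ε := by
      rw [hdA, hdB, hS_def, ← Finset.sum_sub_distrib]
      refine Finset.sum_congr rfl (fun i _ => ?_)
      simp only [hch_def, hch'_def, hcf_def]
      by_cases h : ε i <;> simp [h] <;> ring
    -- bound on S v ε
    have hSnonneg : ∀ v', (0:ℤ) ≤ (S v' ε)^(2*6) := by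
      intro v'
      rw [pow_mul]
      exact pow_nonneg (sq_nonneg _) 6
    have hone : (S v ε)^(2*6) ≤ (2*(n:ℤ)) * (144*(n:ℤ))^6 := by
      refine le_trans ?_ hε
      exact Finset.single_le_sum (fun v' _ => hSnonneg v') (Finset.mem_univ v)
    have hn' : (2*144^6 : ℤ) ≤ (n:ℤ) := by exact_mod_cast hn
    have hS8 : (S v ε)^(2*6) ≤ (n:ℤ)^8 := by
      have h1 : (2*(n:ℤ)) * (144*(n:ℤ))^6 = (2*144^6) * (n:ℤ)^7 := by ring
      have h2 : (2*144^6 : ℤ) * (n:ℤ)^7 ≤ (n:ℤ) * (n:ℤ)^7 := by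
        refine mul_le_mul_of_nonneg_right hn' (by positivity)
      calc (S v ε)^(2*6) ≤ (2*(n:ℤ)) * (144*(n:ℤ))^6 := hone
        _ = (2*144^6) * (n:ℤ)^7 := h1
        _ ≤ (n:ℤ) * (n:ℤ)^7 := h2
        _ = (n:ℤ)^8 := by ring
    set D : ℤ := S v ε with hD_def
    have hnat12 : (D.natAbs)^12 ≤ n^8 := by
      have : ((D.natAbs : ℤ))^12 ≤ ((n:ℤ))^8 := by
        calc ((D.natAbs : ℤ))^12 = |D|^12 := by rw [Int.abs_eq_natAbs]
          _ = D^12 := by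
              rw [← abs_pow, abs_of_nonneg]
              have := hSnonneg v
              simpa using this
          _ ≤ (n:ℤ)^8 := by simpa using hS8
      exact_mod_cast this
    have hnat3 : (D.natAbs)^3 ≤ n^2 := by
      have h4 : ((D.natAbs)^3)^4 ≤ (n^2)^4 := by
        rw [← pow_mul, ← pow_mul]
        exact hnat12
      exact (Nat.pow_le_pow_iff_left (by norm_num)).mp h4
    have habs : |((A.filter fun u => G.Adj v u).card : ℝ)
        - (((Aᶜ).filter fun u => G.Adj v u).card : ℝ)| = (D.natAbs : ℝ) := by
      have : ((A.filter fun u => G.Adj v u).card : ℝ)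
          - (((Aᶜ).filter fun u => G.Adj v u).card : ℝ) = (D : ℝ) := by
        rw [← hDS]
        push_cast
        ring
      rw [this, Nat.cast_natAbs, Int.cast_abs]
    rw [habs]
    -- final rpow computation
    have hrpow3 : ((n:ℝ) ^ ((2:ℝ)/3))^3 = (n:ℝ)^2 := by
      rw [← Real.rpow_natCast ((n:ℝ) ^ ((2:ℝ)/3)) 3, ← Real.rpow_mul (by positivity)]
      norm_num
    have h3 : ((D.natAbs : ℝ))^3 ≤ ((n:ℝ) ^ ((2:ℝ)/3))^3 := by
      rw [hrpow3]
      exact_mod_cast hnat3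
    refine (pow_le_pow_iff_left₀ (by positivity) (by positivity) (by norm_num)).mp h3
end

section
/- (Near-perfect matching in unbalanced-degree bipartite graphs) Let G be a bipartite graph with parts X and Y where |X| = |Y| = n. If δ(G) = t for some 1 ≤ t ≤ n, and all but at most t vertices of G have degree at least n/2, then G has a perfect matching. -/
/-- Plantholt–Shan: a balanced bipartite graph with parts of size `n`,
minimum degree `t` with `1 ≤ t ≤ n`, in which all but at most `t` vertices have degree at
least `n/2`, has a perfect matching. -/
theorem bipartite_perfect_matching
    {V : Type} [Fintype V] [DecidableEq V]
    (G : SimpleGraph V) [DecidableRel G.Adj]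
    (X Y : Finset V)
    (hpart : ∀ v : V, (v ∈ X ∨ v ∈ Y) ∧ ¬(v ∈ X ∧ v ∈ Y))
    (n : ℕ) (hX : X.card = n) (hY : Y.card = n)
    (hbip : ∀ u v, G.Adj u v → (u ∈ X ∧ v ∈ Y) ∨ (u ∈ Y ∧ v ∈ X))
    (t : ℕ) (ht1 : 1 ≤ t) (htn : t ≤ n) (hδ : G.minDegree = t)
    (hmost : (Finset.univ.filter fun v : V => 2 * G.degree v < n).card ≤ t) :
    ∃ M : G.Subgraph, M.IsPerfectMatching := by
  classical
  have hdeg : ∀ v : V, t ≤ G.degree v := by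
    intro v
    rw [← hδ]
    exact G.minDegree_le_degree v
  -- Hall's condition
  have hall : ∀ s : Finset {x // x ∈ X},
      s.card ≤ (s.biUnion fun x => G.neighborFinset x.1).card := by
    intro s
    by_contra hcon
    push_neg at hcon
    set N := s.biUnion fun x => G.neighborFinset x.1 with hNdef
    set S := s.image Subtype.val with hSdef
    have hScard : S.card = s.card := Finset.card_image_of_injective _ Subtype.val_injective
    have hSX : S ⊆ X := by
      intro v hv
      rcases Finset.mem_image.mp hv with ⟨x, _, rfl⟩
      exact x.2
    have hSn : S.card ≤ n := hX ▸ Finset.card_le_card hSX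
    -- neighbors of S are in N
    have hnb : ∀ v ∈ S, G.neighborFinset v ⊆ N := by
      intro v hv
      rcases Finset.mem_image.mp hv with ⟨x, hx, rfl⟩
      intro u hu
      exact Finset.mem_biUnion.mpr ⟨x, hx, hu⟩
    have hNY : N ⊆ Y := by
      intro u hu
      rcases Finset.mem_biUnion.mp hu with ⟨x, _, hx⟩
      have hadj : G.Adj x.1 u := (SimpleGraph.mem_neighborFinset _ _ _).mp hx
      rcases hbip _ _ hadj with ⟨_, h⟩ | ⟨h, _⟩
      · exact h
      · exact absurd ⟨x.2, h⟩ (hpart x.1).2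
    have hNn : N.card ≤ n := hY ▸ Finset.card_le_card hNY
    have hNS : N.card < S.card := by rw [hScard]; exact hcon
    -- S is nonempty
    have hSne : S.Nonempty := Finset.card_pos.mp (by omega)
    obtain ⟨v₀, hv₀⟩ := hSne
    -- |N| ≥ t, so |S| > t
    have htN : t ≤ N.card := le_trans (hdeg v₀) (Finset.card_le_card (hnb v₀ hv₀))
    have htS : t < S.card := lt_of_le_of_lt htN hNS
    -- S contains a vertex of degree ≥ n/2
    have hhigh : ∃ v ∈ S, n ≤ 2 * G.degree v := by
      by_contra hc
      push_neg at hc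
      have : S ⊆ Finset.univ.filter fun v : V => 2 * G.degree v < n := by
        intro v hv
        exact Finset.mem_filter.mpr ⟨Finset.mem_univ v, hc v hv⟩
      have := Finset.card_le_card this
      omega
    obtain ⟨v₁, hv₁S, hv₁⟩ := hhigh
    have hNbig : n ≤ 2 * N.card :=
      le_trans hv₁ (by
        have := Finset.card_le_card (hnb v₁ hv₁S)
        rw [SimpleGraph.card_neighborFinset_eq_degree] at this
        omega)
    have h2S : n + 2 ≤ 2 * S.card := by omega
    -- T = Y \ N
    set T := Y \ N with hTdef
    have hTcard : T.card = n - N.card := by rw [hTdef, Finset.card_sdiff_of_subset hNY, hY]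
    have hTne : T.Nonempty := Finset.card_pos.mp (by omega)
    -- every u ∈ T has all neighbors in X \ S
    have hTnb : ∀ u ∈ T, G.neighborFinset u ⊆ X \ S := by
      intro u hu w hw
      have huY : u ∈ Y := (Finset.mem_sdiff.mp hu).1
      have huN : u ∉ N := (Finset.mem_sdiff.mp hu).2
      have hadj : G.Adj u w := (SimpleGraph.mem_neighborFinset _ _ _).mp hw
      have hwX : w ∈ X := by
        rcases hbip _ _ hadj with ⟨h, _⟩ | ⟨_, h⟩
        · exact absurd ⟨h, huY⟩ (hpart u).2
        · exact h
      refine Finset.mem_sdiff.mpr ⟨hwX, fun hwS => ?_⟩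
      exact huN (hnb w hwS ((SimpleGraph.mem_neighborFinset _ _ _).mpr hadj.symm))
    have hXScard : (X \ S).card = n - S.card := by rw [Finset.card_sdiff_of_subset hSX, hX]
    -- T vertices are low-degree, so T ⊆ low set
    have hTlow : T ⊆ Finset.univ.filter fun v : V => 2 * G.degree v < n := by
      intro u hu
      have hdu : G.degree u ≤ n - S.card := by
        have := Finset.card_le_card (hTnb u hu)
        rw [hXScard] at this
        exact this
      exact Finset.mem_filter.mpr ⟨Finset.mem_univ u, by omega⟩
    have hTt : T.card ≤ t := le_trans (Finset.card_le_card hTlow) hmost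
    -- min degree of a T vertex gives |S| ≤ n - t
    obtain ⟨u₀, hu₀⟩ := hTne
    have hSnt : S.card ≤ n - t := by
      have h1 : t ≤ G.degree u₀ := hdeg u₀
      have h2 : G.degree u₀ ≤ n - S.card := by
        have := Finset.card_le_card (hTnb u₀ hu₀)
        rw [hXScard] at this
        exact this
      omega
    omega
  rw [Finset.all_card_le_biUnion_card_iff_exists_injective] at hall
  obtain ⟨f, hfinj, hfmem⟩ := hall
  have hfadj : ∀ x : {x // x ∈ X}, G.Adj x.1 (f x) := fun x =>
    (SimpleGraph.mem_neighborFinset _ _ _).mp (hfmem x)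
  have hfY : ∀ x : {x // x ∈ X}, f x ∈ Y := by
    intro x
    rcases hbip _ _ (hfadj x) with ⟨_, h⟩ | ⟨h, _⟩
    · exact h
    · exact absurd ⟨x.2, h⟩ (hpart x.1).2
  -- image of f is all of Y
  have himg : (Finset.univ : Finset {x // x ∈ X}).image f = Y := by
    apply Finset.eq_of_subset_of_card_le
    · intro v hv
      rcases Finset.mem_image.mp hv with ⟨x, _, rfl⟩
      exact hfY x
    · rw [Finset.card_image_of_injective _ hfinj, Finset.card_univ,
        Fintype.card_coe, hX, hY]
  have hsurj : ∀ y ∈ Y, ∃ x : {x // x ∈ X}, f x = y := by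
    intro y hy
    rw [← himg] at hy
    rcases Finset.mem_image.mp hy with ⟨x, _, hx⟩
    exact ⟨x, hx⟩
  -- build the matching subgraph
  refine ⟨{ verts := Set.univ
            Adj := fun u v => G.Adj u v ∧
              ((∃ h : u ∈ X, f ⟨u, h⟩ = v) ∨ (∃ h : v ∈ X, f ⟨v, h⟩ = u))
            adj_sub := fun h => h.1
            edge_vert := fun _ => Set.mem_univ _
            symm := by
              constructor
              rintro u v ⟨hadj, h | h⟩
              · exact ⟨hadj.symm, Or.inr h⟩
              · exact ⟨hadj.symm, Or.inl h⟩ }, ?_, ?_⟩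
  · -- IsMatching
    rintro v -
    by_cases hvX : v ∈ X
    · refine ⟨f ⟨v, hvX⟩, ⟨hfadj ⟨v, hvX⟩, Or.inl ⟨hvX, rfl⟩⟩, ?_⟩
      rintro w ⟨hadj, ⟨h, hw⟩ | ⟨h, hw⟩⟩
      · exact hw.symm
      · exact absurd ⟨hvX, hw ▸ hfY ⟨w, h⟩⟩ (hpart v).2
    · have hvY : v ∈ Y := ((hpart v).1).resolve_left hvX
      obtain ⟨x, hx⟩ := hsurj v hvY
      refine ⟨x.1, ⟨hx ▸ (hfadj x).symm, Or.inr ⟨x.2, by simpa using hx⟩⟩, ?_⟩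
      rintro w ⟨hadj, ⟨h, hw⟩ | ⟨h, hw⟩⟩
      · exact absurd h hvX
      · have : f ⟨w, h⟩ = f x := by rw [hw, hx]
        have := hfinj this
        exact congrArg Subtype.val this
  · -- IsSpanning
    intro v
    exact Set.mem_univ v
end

section
/- Let G be a multigraph, F ⊆ E(G), and k ≥ Δ(G) an integer. If G has a proper k-edge-coloring in which all edges of F receive distinct colors, then G has a proper k-edge-coloring φ in which all edges of F receive distinct colors and additionally, for any two colors i, j, the numbers of vertices missing color i and missing color j differ by at most 5. -/
/-- All edges of `F` receive pairwise distinct colors under the coloring `M`. -/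
def DistinctOnF {V : Type} [Fintype V] [DecidableEq V] {k : ℕ}
    (M : Fin k → V → V → Bool) (F : Finset (Sym2 V)) : Prop :=
  ∀ (i : Fin k) (u v x y : V), s(u, v) ∈ F → s(x, y) ∈ F →
    M i u v = true → M i x y = true → s(u, v) = s(x, y)

set_option linter.unusedSectionVars false

open Finset

namespace BalancedAux

variable {V : Type} [Fintype V] [DecidableEq V] {k : ℕ}

noncomputable def partner (M : Fin k → V → V → Bool) (c : Fin k) (v : V) : Option V :=
  if h : ∃ u, M c v u = true then some h.choose else none

lemma partner_spec {M : Fin k → V → V → Bool} {c : Fin k} {v u : V}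
    (h : partner M c v = some u) : M c v u = true := by
  unfold partner at h
  split_ifs at h with h'
  · obtain rfl : h'.choose = u := by simpa using h
    exact h'.choose_spec

lemma partner_eq {M : Fin k → V → V → Bool}
    (hm : ∀ c u, (univ.filter fun v => M c u v = true).card ≤ 1)
    {c : Fin k} {v u : V} (h : M c v u = true) : partner M c v = some u := by
  have hne : ∃ w, M c v w = true := ⟨u, h⟩
  unfold partner
  rw [dif_pos hne]
  congr 1
  refine Finset.card_le_one.mp (hm c v) _ ?_ _ ?_ <;>
    simp [hne.choose_spec, h]

lemma partner_none {M : Fin k → V → V → Bool} {c : Fin k} {v : V}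
    (h : ∀ u, M c v u = false) : partner M c v = none := by
  unfold partner
  rw [dif_neg]
  rintro ⟨u, hu⟩
  simp [h u] at hu

variable (M : Fin k → V → V → Bool) (i j : Fin k)

def col (b : Bool) : Fin k := bif b then i else j

noncomputable def seq (x : V) : ℕ → Option (V × Bool)
  | 0 => some (x, false)
  | n+1 => (seq x n).bind fun p => (partner M (col i j p.2) p.1).map fun u => (u, !p.2)

variable {M i j}

lemma seq_succ_none {x : V} {n : ℕ} (h : seq M i j x n = none) :
    seq M i j x (n+1) = none := by
  simp [seq, h]

lemma seq_none_le {x : V} {n m : ℕ} (hnm : n ≤ m) (h : seq M i j x n = none) :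
    seq M i j x m = none := by
  induction hnm with
  | refl => exact h
  | step _ ih => exact seq_succ_none ih

lemma seq_succ_some {x : V} {n : ℕ} {u : V} {b' : Bool}
    (h : seq M i j x (n+1) = some (u, b')) :
    ∃ v b, seq M i j x n = some (v, b) ∧ b' = !b ∧ partner M (col i j b) v = some u := by
  cases hn : seq M i j x n with
  | none => rw [seq_succ_none hn] at h; cases h
  | some p =>
    obtain ⟨v, b⟩ := p
    refine ⟨v, b, rfl, ?_⟩
    rw [seq, hn] at h
    rw [Option.bind_some] at h
    rcases Option.map_eq_some_iff.mp h with ⟨a, ha, hab⟩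
    cases hab
    exact ⟨rfl, ha⟩

lemma seq_back (hs : ∀ c u v, M c u v = M c v u)
    (hm : ∀ c u, (univ.filter fun v => M c u v = true).card ≤ 1)
    {x : V} {n : ℕ} {u : V} {b' : Bool}
    (h : seq M i j x (n+1) = some (u, b')) :
    ∃ v b, seq M i j x n = some (v, b) ∧ b' = !b ∧ partner M (col i j b) u = some v := by
  obtain ⟨v, b, h1, h2, h3⟩ := seq_succ_some h
  have := partner_spec h3
  rw [hs] at this
  exact ⟨v, b, h1, h2, partner_eq hm this⟩

section Walk

variable (hs : ∀ c u v, M c u v = M c v u)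
    (hm : ∀ c u, (univ.filter fun v => M c u v = true).card ≤ 1)
    (hij : i ≠ j) {x : V} (hx : ∀ u, M i x u = false)

include hs hm hx

lemma mem_S_adj {n : ℕ} {v u : V} {b : Bool} (hv : seq M i j x n = some (v, b))
    (hadj : M i v u = true ∨ M j v u = true) :
    ∃ m b₂, seq M i j x m = some (u, b₂) := by
  have hcases : M (col i j b) v u = true ∨ M (col i j (!b)) v u = true := by
    cases b <;> simp only [col, Bool.not_true, Bool.not_false, cond_true, cond_false] <;> tauto
  rcases hcases with hc | hc
  · refine ⟨n + 1, !b, ?_⟩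
    rw [seq, hv, Option.bind_some, partner_eq hm hc]
    rfl
  · cases n with
    | zero =>
      obtain ⟨rfl, rfl⟩ : x = v ∧ false = b := by
        rw [seq] at hv; exact ⟨congrArg Prod.fst (Option.some_inj.mp hv),
          congrArg Prod.snd (Option.some_inj.mp hv)⟩
      simp only [Bool.not_false, col, cond_true] at hc
      rw [hx u] at hc; cases hc
    | succ m =>
      obtain ⟨v₀, b₀, h1, h2, h3⟩ := seq_back hs hm hv
      have hb₀ : b₀ = !b := by rw [h2, Bool.not_not]
      rw [hb₀, partner_eq hm hc] at h3
      obtain rfl : v₀ = u := by simpa using h3.symm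
      exact ⟨m, b₀, h1⟩

lemma reach_mem_S {v : V}
    (h : Relation.ReflTransGen (fun a b => M i a b = true ∨ M j a b = true) x v) :
    ∃ n b, seq M i j x n = some (v, b) := by
  induction h with
  | refl => exact ⟨0, false, rfl⟩
  | tail _ hadj ih =>
    obtain ⟨n, b, hn⟩ := ih
    exact mem_S_adj hs hm hx hn hadj

include hij in
lemma missing_terminal {n : ℕ} {v : V} {b : Bool} (hv : seq M i j x n = some (v, b))
    (hmiss : ∀ u, M i v u = false) :
    v = x ∨ (b = true ∧ seq M i j x (n+1) = none) := by
  cases n with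
  | zero =>
    left
    rw [seq] at hv
    exact (congrArg Prod.fst (Option.some_inj.mp hv)).symm
  | succ m =>
    right
    obtain ⟨v₀, b₀, h1, h2, h3⟩ := seq_back hs hm hv
    have hcol : M (col i j b₀) v v₀ = true := partner_spec h3
    have hb₀ : b₀ = false := by
      by_contra hb
      have : b₀ = true := by cases b₀ <;> simp_all
      rw [this] at hcol
      simp only [col, cond_true] at hcol
      rw [hmiss v₀] at hcol; cases hcol
    have hb : b = true := by rw [hb₀] at h2; simpa using h2
    refine ⟨hb, ?_⟩
    rw [seq, hv, Option.bind_some]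
    have : partner M (col i j b) v = none := by
      rw [hb]
      simpa [col] using partner_none hmiss
    rw [this]; rfl

include hij in
lemma card_missing_le_two (s : Finset V)
    (hsub : ∀ v ∈ s, Relation.ReflTransGen
      (fun a b => M i a b = true ∨ M j a b = true) x v ∧ ∀ u, M i v u = false) :
    s.card ≤ 2 := by
  classical
  set t : V := if h : ∃ p : V × ℕ, seq M i j x p.2 = some (p.1, true) ∧
      seq M i j x (p.2+1) = none then h.choose.1 else x with ht
  have hsub2 : s ⊆ {x, t} := by
    intro v hv
    obtain ⟨hreach, hmiss⟩ := hsub v hv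
    obtain ⟨n, b, hn⟩ := reach_mem_S hs hm hx hreach
    rcases missing_terminal hs hm hij hx hn hmiss with rfl | ⟨rfl, hterm⟩
    · simp
    · have hex : ∃ p : V × ℕ, seq M i j x p.2 = some (p.1, true) ∧
          seq M i j x (p.2+1) = none := ⟨(v, n), hn, hterm⟩
      have hspec := hex.choose_spec
      have hvt : v = t := by
        rw [ht, dif_pos hex]
        set p := hex.choose
        have hnn : n = p.2 := by
          by_contra hne
          rcases Nat.lt_or_ge n p.2 with h1 | h1
          · rw [seq_none_le (by omega) hterm] at hspec; exact absurd hspec.1 (by simp)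
          · have : p.2 < n := by omega
            rw [seq_none_le (by omega) hspec.2] at hn; cases hn
        rw [← hnn] at hspec
        rw [hn] at hspec
        exact congrArg Prod.fst (Option.some_inj.mp hspec.1)
      rw [hvt]; simp
  calc s.card ≤ ({x, t} : Finset V).card := Finset.card_le_card hsub2
    _ ≤ 2 := Finset.card_insert_le _ _ |>.trans (by simp)

end Walk


section Swap

variable (M : Fin k → V → V → Bool) (i j : Fin k) (C : V → Prop) [DecidablePred C]

def swapC : Fin k → V → V → Bool := fun c u v =>
  if C u ∨ C v then (if c = i then M j u v else if c = j then M i u v else M c u v)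
  else M c u v

variable {M i j C}

variable (hs : ∀ c u v, M c u v = M c v u)
    (hm : ∀ c u, (univ.filter fun v => M c u v = true).card ≤ 1)
    (hclosed : ∀ u v, C u → (M i u v = true ∨ M j u v = true) → C v)

include hs in
lemma swapC_symm : ∀ c u v, swapC M i j C c u v = swapC M i j C c v u := by
  intro c u v
  unfold swapC
  rw [hs c u v, hs i u v, hs j u v]
  by_cases h : C u ∨ C v
  · rw [if_pos h, if_pos (Or.symm h)]
  · rw [if_neg h, if_neg (fun hh => h (Or.symm hh))]

include hs hclosed in
lemma swapC_other_false {u v : V} (hu : ¬ C u) (hv : C v) :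
    M i u v = false ∧ M j u v = false := by
  constructor
  · by_contra h
    rw [Bool.not_eq_false] at h
    exact hu (hclosed v u hv (Or.inl (by rw [hs] at h; exact h)))
  · by_contra h
    rw [Bool.not_eq_false] at h
    exact hu (hclosed v u hv (Or.inr (by rw [hs] at h; exact h)))

include hs hm hclosed in
lemma swapC_matching : ∀ c u, (univ.filter fun v => swapC M i j C c u v = true).card ≤ 1 := by
  intro c u
  by_cases hu : C u
  · have he : ∀ v, swapC M i j C c u v =
        (if c = i then M j u v else if c = j then M i u v else M c u v) := by
      intro v; unfold swapC; rw [if_pos (Or.inl hu)]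
    by_cases hci : c = i
    · subst hci
      simp only [he, if_pos rfl]
      exact hm j u
    · by_cases hcj : c = j
      · subst hcj
        simp only [he, if_neg hci, if_pos rfl]
        exact hm i u
      · simp only [he, if_neg hci, if_neg hcj]
        exact hm c u
  · have he : ∀ v, swapC M i j C c u v = true → M c u v = true := by
      intro v h
      unfold swapC at h
      by_cases hv : C v
      · rw [if_pos (Or.inr hv)] at h
        obtain ⟨h1, h2⟩ := swapC_other_false hs hclosed hu hv
        by_cases hci : c = i
        · rw [if_pos hci, h2] at h; cases h
        · by_cases hcj : c = j
          · rw [if_neg hci, if_pos hcj, h1] at h; cases h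
          · rwa [if_neg hci, if_neg hcj] at h
      · rwa [if_neg (by tauto)] at h
    calc (univ.filter fun v => swapC M i j C c u v = true).card
        ≤ (univ.filter fun v => M c u v = true).card := by
          apply Finset.card_le_card
          intro v hv
          rw [Finset.mem_filter] at hv ⊢
          exact ⟨hv.1, he v hv.2⟩
      _ ≤ 1 := hm c u

include hclosed in
lemma swapC_weight {w : V → V → ℕ} (hij : i ≠ j)
    (hw : ∀ u v, w u v = (univ.filter fun c => M c u v = true).card) :
    ∀ u v, w u v = (univ.filter fun c => swapC M i j C c u v = true).card := by
  intro u v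
  by_cases h : C u ∨ C v
  · have he : ∀ c, swapC M i j C c u v = M (Equiv.swap i j c) u v := by
      intro c
      unfold swapC
      rw [if_pos h]
      by_cases hci : c = i
      · rw [if_pos hci, hci, Equiv.swap_apply_left]
      · by_cases hcj : c = j
        · rw [if_neg hci, if_pos hcj, hcj, Equiv.swap_apply_right]
        · rw [if_neg hci, if_neg hcj, Equiv.swap_apply_of_ne_of_ne hci hcj]
    rw [hw u v]
    apply Finset.card_bij' (fun c _ => Equiv.swap i j c) (fun c _ => Equiv.swap i j c)
    · intro a ha
      rw [Finset.mem_filter] at ha ⊢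
      refine ⟨Finset.mem_univ _, ?_⟩
      rw [he, Equiv.swap_apply_self]
      exact ha.2
    · intro a ha
      rw [Finset.mem_filter] at ha ⊢
      refine ⟨Finset.mem_univ _, ?_⟩
      rw [he] at ha
      exact ha.2
    · intro a _; exact Equiv.swap_apply_self _ _ _
    · intro a _; exact Equiv.swap_apply_self _ _ _
  · have he : ∀ c, swapC M i j C c u v = M c u v := by
      intro c; unfold swapC; rw [if_neg h]
    rw [hw u v]
    congr 1
    apply Finset.filter_congr
    intro c _
    rw [he]

lemma swapC_agree_F {F : Finset (Sym2 V)}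
    (hF' : ∀ u v, s(u,v) ∈ F → (C u ∨ C v) → M i u v = false ∧ M j u v = false) :
    ∀ c u v, s(u,v) ∈ F → swapC M i j C c u v = M c u v := by
  intro c u v hf
  unfold swapC
  by_cases h : C u ∨ C v
  · rw [if_pos h]
    obtain ⟨h1, h2⟩ := hF' u v hf h
    by_cases hci : c = i
    · rw [if_pos hci, hci, h1, h2]
    · by_cases hcj : c = j
      · rw [if_neg hci, if_pos hcj, hcj, h1, h2]
      · rw [if_neg hci, if_neg hcj]
  · rw [if_neg h]

lemma swapC_distinct {F : Finset (Sym2 V)}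
    (hF' : ∀ u v, s(u,v) ∈ F → (C u ∨ C v) → M i u v = false ∧ M j u v = false)
    (hd : DistinctOnF M F) : DistinctOnF (swapC M i j C) F := by
  intro c u v a b hf1 hf2 h1 h2
  rw [swapC_agree_F hF' c u v hf1] at h1
  rw [swapC_agree_F hF' c a b hf2] at h2
  exact hd c u v a b hf1 hf2 h1 h2

include hs hclosed in
lemma swapC_missing_i (hij : i ≠ j) (v : V) :
    (∀ u, swapC M i j C i v u = false) ↔
      (if C v then ∀ u, M j v u = false else ∀ u, M i v u = false) := by
  by_cases hv : C v
  · rw [if_pos hv]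
    have he : ∀ u, swapC M i j C i v u = M j v u := by
      intro u; unfold swapC; rw [if_pos (Or.inl hv), if_pos rfl]
    constructor
    · intro h u; rw [← he]; exact h u
    · intro h u; rw [he]; exact h u
  · rw [if_neg hv]
    constructor
    · intro h u
      by_cases hu : C u
      · exact (swapC_other_false hs hclosed hv hu).1
      · have := h u
        unfold swapC at this
        rwa [if_neg (by tauto), ] at this
    · intro h u
      unfold swapC
      by_cases hu : C u
      · rw [if_pos (Or.inr hu), if_pos rfl]
        exact (swapC_other_false hs hclosed hv hu).2
      · rw [if_neg (by tauto)]
        exact h u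

include hs hclosed in
lemma swapC_missing_j (hij : i ≠ j) (v : V) :
    (∀ u, swapC M i j C j v u = false) ↔
      (if C v then ∀ u, M i v u = false else ∀ u, M j v u = false) := by
  by_cases hv : C v
  · rw [if_pos hv]
    have he : ∀ u, swapC M i j C j v u = M i v u := by
      intro u; unfold swapC
      rw [if_pos (Or.inl hv), if_neg (Ne.symm hij), if_pos rfl]
    constructor
    · intro h u; rw [← he]; exact h u
    · intro h u; rw [he]; exact h u
  · rw [if_neg hv]
    constructor
    · intro h u
      by_cases hu : C u
      · exact (swapC_other_false hs hclosed hv hu).2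
      · have := h u
        unfold swapC at this
        rwa [if_neg (by tauto)] at this
    · intro h u
      unfold swapC
      by_cases hu : C u
      · rw [if_pos (Or.inr hu), if_neg (Ne.symm hij), if_pos rfl]
        exact (swapC_other_false hs hclosed hv hu).1
      · rw [if_neg (by tauto)]
        exact h u

lemma swapC_missing_other {c : Fin k} (hci : c ≠ i) (hcj : c ≠ j) (v u : V) :
    swapC M i j C c v u = M c v u := by
  unfold swapC
  by_cases h : C v ∨ C u
  · rw [if_pos h, if_neg hci, if_neg hcj]
  · rw [if_neg h]

end Swap


def cnt (M : Fin k → V → V → Bool) (c : Fin k) : ℕ :=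
  (Finset.univ.filter fun v : V => ∀ u, M c v u = false).card

noncomputable def Phi (M : Fin k → V → V → Bool) : ℤ := ∑ c : Fin k, (cnt M c : ℤ) ^ 2

set_option maxHeartbeats 2000000 in
lemma improve (w : V → V → ℕ) (F : Finset (Sym2 V)) (M : Fin k → V → V → Bool)
    (h : IsProperEdgeColoringMG w k M) (hd : DistinctOnF M F) (i j : Fin k)
    (h6 : cnt M j + 6 ≤ cnt M i) :
    ∃ M', IsProperEdgeColoringMG w k M' ∧ DistinctOnF M' F ∧ Phi M' < Phi M := by
  classical
  obtain ⟨hs, hm, hw⟩ := h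
  have hij : i ≠ j := by rintro rfl; omega
  set A : V → V → Prop := fun a b => M i a b = true ∨ M j a b = true with hA
  have hAsymm : Symmetric A := by
    intro a b hab
    rcases hab with h' | h'
    · exact Or.inl (by rwa [hs] at h')
    · exact Or.inr (by rwa [hs] at h')
  set st : Setoid V := ⟨fun a b => Relation.ReflTransGen A a b,
    ⟨fun _ => Relation.ReflTransGen.refl,
     fun h' => (@Relation.ReflTransGen.stdSymm V A ⟨fun _ _ h => hAsymm h⟩).symm _ _ h',
     fun h1 h2 => Relation.ReflTransGen.trans h1 h2⟩⟩ with hst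
  set κ : V → Quotient st := Quotient.mk st with hκ
  have adjκ : ∀ a b, A a b → κ a = κ b := fun a b hab =>
    Quotient.sound (Relation.ReflTransGen.single hab)
  set mI : Quotient st → ℕ :=
    fun q => (univ.filter fun v => κ v = q ∧ ∀ u, M i v u = false).card with hmI
  set mJ : Quotient st → ℕ :=
    fun q => (univ.filter fun v => κ v = q ∧ ∀ u, M j v u = false).card with hmJ
  -- fiberwise sums
  have hsum : ∀ (c : Fin k) (m : Quotient st → ℕ),
      (m = fun q => (univ.filter fun v => κ v = q ∧ ∀ u, M c v u = false).card) →
      ∑ q, m q = cnt M c := by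
    intro c m hm'
    subst hm'
    rw [cnt, Finset.card_eq_sum_card_fiberwise (f := κ) (t := univ)
      (fun x _ => Finset.mem_univ _)]
    apply Finset.sum_congr rfl
    intro q _
    beta_reduce
    congr 1
    ext v
    simp only [Finset.mem_filter, Finset.mem_univ, true_and]
    tauto
  have hsumI : ∑ q, mI q = cnt M i := hsum i mI hmI
  have hsumJ : ∑ q, mJ q = cnt M j := hsum j mJ hmJ
  -- each component has at most 2 vertices missing color i
  have hmI2 : ∀ q, mI q ≤ 2 := by
    intro q
    show (univ.filter fun v => κ v = q ∧ ∀ u, M i v u = false).card ≤ 2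
    by_cases hne : (univ.filter fun v => κ v = q ∧ ∀ u, M i v u = false).Nonempty
    · obtain ⟨x, hx⟩ := hne
      rw [Finset.mem_filter] at hx
      obtain ⟨-, hκx, hmiss⟩ := hx
      apply card_missing_le_two hs hm hij hmiss
      intro v hv
      rw [Finset.mem_filter] at hv
      obtain ⟨-, hκv, hmv⟩ := hv
      refine ⟨?_, hmv⟩
      have : κ v = κ x := hκv.trans hκx.symm
      exact st.symm (Quotient.exact this)
    · rw [Finset.not_nonempty_iff_eq_empty.mp hne]
      simp
  -- the set of bad components
  set B : Finset (Quotient st) := univ.filter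
    (fun q => ∃ u v, s(u,v) ∈ F ∧ (M i u v = true ∨ M j u v = true) ∧ κ u = q) with hB
  have uni : ∀ (c : Fin k), (c = i ∨ c = j) →
      ∀ u v u' v', s(u,v) ∈ F → s(u',v') ∈ F → M c u v = true → M c u' v' = true →
      κ u = κ u' := by
    intro c hc u v u' v' hf hf' hM hM'
    have heq := hd c u v u' v' hf hf' hM hM'
    have hadj' : κ u' = κ v' := by
      refine adjκ u' v' ?_
      rcases hc with rfl | rfl
      · exact Or.inl hM'
      · exact Or.inr hM'
    rcases Sym2.eq_iff.mp heq with ⟨h1, h2⟩ | ⟨h1, h2⟩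
    · rw [h1]
    · rw [h1, ← hadj']
  have hB2 : B.card ≤ 2 := by
    by_cases hEi : ∃ u, ∃ v, s(u,v) ∈ F ∧ M i u v = true
    · obtain ⟨ui, vi, hfi, hMi⟩ := hEi
      by_cases hEj : ∃ u, ∃ v, s(u,v) ∈ F ∧ M j u v = true
      · obtain ⟨uj, vj, hfj, hMj⟩ := hEj
        have hsub : B ⊆ {κ ui, κ uj} := by
          intro q hq
          rw [hB, Finset.mem_filter] at hq
          obtain ⟨-, u, v, hf, hcol, hκu⟩ := hq
          rw [Finset.mem_insert, Finset.mem_singleton]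
          rcases hcol with hc | hc
          · left; rw [← hκu]; exact uni i (Or.inl rfl) u v ui vi hf hfi hc hMi
          · right; rw [← hκu]; exact uni j (Or.inr rfl) u v uj vj hf hfj hc hMj
        calc B.card ≤ ({κ ui, κ uj} : Finset (Quotient st)).card :=
              Finset.card_le_card hsub
          _ ≤ 2 := (Finset.card_insert_le _ _).trans (by simp)
      · have hsub : B ⊆ {κ ui} := by
          intro q hq
          rw [hB, Finset.mem_filter] at hq
          obtain ⟨-, u, v, hf, hcol, hκu⟩ := hq
          rw [Finset.mem_singleton]
          rcases hcol with hc | hc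
          · rw [← hκu]; exact uni i (Or.inl rfl) u v ui vi hf hfi hc hMi
          · exact absurd ⟨u, v, hf, hc⟩ hEj
        exact (Finset.card_le_card hsub).trans (by simp)
    · by_cases hEj : ∃ u, ∃ v, s(u,v) ∈ F ∧ M j u v = true
      · obtain ⟨uj, vj, hfj, hMj⟩ := hEj
        have hsub : B ⊆ {κ uj} := by
          intro q hq
          rw [hB, Finset.mem_filter] at hq
          obtain ⟨-, u, v, hf, hcol, hκu⟩ := hq
          rw [Finset.mem_singleton]
          rcases hcol with hc | hc
          · exact absurd ⟨u, v, hf, hc⟩ hEi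
          · rw [← hκu]; exact uni j (Or.inr rfl) u v uj vj hf hfj hc hMj
        exact (Finset.card_le_card hsub).trans (by simp)
      · have hsub : B ⊆ ∅ := by
          intro q hq
          rw [hB, Finset.mem_filter] at hq
          obtain ⟨-, u, v, hf, hcol, hκu⟩ := hq
          rcases hcol with hc | hc
          · exact absurd ⟨u, v, hf, hc⟩ hEi
          · exact absurd ⟨u, v, hf, hc⟩ hEj
        exact (Finset.card_le_card hsub).trans (by simp)
  -- find a good component
  have hgood : ∃ q, q ∉ B ∧ mJ q < mI q := by
    by_contra hno
    push_neg at hno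
    have h1 : (cnt M i : ℤ) - cnt M j = ∑ q, ((mI q : ℤ) - mJ q) := by
      rw [Finset.sum_sub_distrib, ← Nat.cast_sum, ← Nat.cast_sum, hsumI, hsumJ]
    have h2 : ∑ q ∈ univ \ B, ((mI q : ℤ) - mJ q) + ∑ q ∈ B, ((mI q : ℤ) - mJ q)
        = ∑ q, ((mI q : ℤ) - mJ q) := Finset.sum_sdiff (Finset.subset_univ B)
    have h3 : ∑ q ∈ univ \ B, ((mI q : ℤ) - mJ q) ≤ 0 := by
      apply Finset.sum_nonpos
      intro q hq
      rw [Finset.mem_sdiff] at hq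
      have := hno q hq.2
      omega
    have h4 : ∑ q ∈ B, ((mI q : ℤ) - mJ q) ≤ 2 * B.card := by
      calc ∑ q ∈ B, ((mI q : ℤ) - mJ q) ≤ ∑ _q ∈ B, (2 : ℤ) := by
            apply Finset.sum_le_sum
            intro q _
            have := hmI2 q
            omega
        _ = 2 * B.card := by rw [Finset.sum_const]; ring
    have : (cnt M i : ℤ) - cnt M j ≤ 4 := by
      rw [h1, ← h2]
      have : (B.card : ℤ) ≤ 2 := by exact_mod_cast hB2
      linarith
    have h6' : (cnt M j : ℤ) + 6 ≤ cnt M i := by exact_mod_cast h6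
    linarith
  obtain ⟨q, hqB, hqlt⟩ := hgood
  -- the component predicate
  set C : V → Prop := fun v => κ v = q with hC
  have hclosed : ∀ u v, C u → (M i u v = true ∨ M j u v = true) → C v := by
    intro u v hCu hab
    show κ v = q
    rw [← (adjκ u v hab)]
    exact hCu
  have hF' : ∀ u v, s(u,v) ∈ F → (C u ∨ C v) → M i u v = false ∧ M j u v = false := by
    intro u v hf hCuv
    have hκu : (M i u v = true ∨ M j u v = true) → κ u = q := by
      intro hab
      rcases hCuv with hCu | hCv
      · exact hCu
      · exact (adjκ u v hab).trans hCv
    constructor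
    · by_contra hcon
      rw [Bool.not_eq_false] at hcon
      exact hqB (by
        rw [hB, Finset.mem_filter]
        exact ⟨Finset.mem_univ _, u, v, hf, Or.inl hcon, hκu (Or.inl hcon)⟩)
    · by_contra hcon
      rw [Bool.not_eq_false] at hcon
      exact hqB (by
        rw [hB, Finset.mem_filter]
        exact ⟨Finset.mem_univ _, u, v, hf, Or.inr hcon, hκu (Or.inr hcon)⟩)
  refine ⟨swapC M i j C, ⟨swapC_symm hs, swapC_matching hs hm hclosed,
    swapC_weight hclosed hij hw⟩, swapC_distinct hF' hd, ?_⟩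
  -- count bookkeeping
  set a1 := (univ.filter fun v => C v ∧ ∀ u, M i v u = false).card with ha1
  set a2 := (univ.filter fun v => ¬ C v ∧ ∀ u, M i v u = false).card with ha2
  set b1 := (univ.filter fun v => C v ∧ ∀ u, M j v u = false).card with hb1
  set b2 := (univ.filter fun v => ¬ C v ∧ ∀ u, M j v u = false).card with hb2
  have hsplitset : ∀ (p : V → Prop) [DecidablePred p],
      (univ.filter fun v => p v) =
        (univ.filter fun v => C v ∧ p v) ∪ (univ.filter fun v => ¬ C v ∧ p v) := by
    intro p _
    ext v
    simp only [Finset.mem_filter, Finset.mem_union, Finset.mem_univ, true_and]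
    by_cases hv : C v <;> tauto
  have hdisj : ∀ (p p' : V → Prop) [DecidablePred p] [DecidablePred p'],
      Disjoint (univ.filter fun v => C v ∧ p v) (univ.filter fun v => ¬ C v ∧ p' v) := by
    intro p p' _ _
    rw [Finset.disjoint_left]
    intro v hv hv'
    rw [Finset.mem_filter] at hv hv'
    exact hv'.2.1 hv.2.1
  have hcntMi : cnt M i = a1 + a2 := by
    rw [cnt, hsplitset, Finset.card_union_of_disjoint (hdisj _ _)]
  have hcntMj : cnt M j = b1 + b2 := by
    rw [cnt, hsplitset, Finset.card_union_of_disjoint (hdisj _ _)]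
  have hcntM'i : cnt (swapC M i j C) i = b1 + a2 := by
    rw [cnt]
    have : (univ.filter fun v : V => ∀ u, swapC M i j C i v u = false) =
        (univ.filter fun v => C v ∧ ∀ u, M j v u = false) ∪
        (univ.filter fun v => ¬ C v ∧ ∀ u, M i v u = false) := by
      ext v
      simp only [Finset.mem_filter, Finset.mem_union, Finset.mem_univ, true_and]
      rw [swapC_missing_i hs hclosed hij v]
      by_cases hv : C v
      · rw [if_pos hv]; tauto
      · rw [if_neg hv]; tauto
    rw [this, Finset.card_union_of_disjoint (hdisj _ _)]
  have hcntM'j : cnt (swapC M i j C) j = a1 + b2 := by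
    rw [cnt]
    have : (univ.filter fun v : V => ∀ u, swapC M i j C j v u = false) =
        (univ.filter fun v => C v ∧ ∀ u, M i v u = false) ∪
        (univ.filter fun v => ¬ C v ∧ ∀ u, M j v u = false) := by
      ext v
      simp only [Finset.mem_filter, Finset.mem_union, Finset.mem_univ, true_and]
      rw [swapC_missing_j hs hclosed hij v]
      by_cases hv : C v
      · rw [if_pos hv]; tauto
      · rw [if_neg hv]; tauto
    rw [this, Finset.card_union_of_disjoint (hdisj _ _)]
  have hmIa : mI q = a1 := by
    show (univ.filter fun v => κ v = q ∧ ∀ u, M i v u = false).card = a1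
    rw [ha1]
  have hmJb : mJ q = b1 := by
    show (univ.filter fun v => κ v = q ∧ ∀ u, M j v u = false).card = b1
    rw [hb1]
  have hcnt_other : ∀ c : Fin k, c ≠ i → c ≠ j → cnt (swapC M i j C) c = cnt M c := by
    intro c hci hcj
    rw [cnt, cnt]
    congr 1
    apply Finset.filter_congr
    intro v _
    constructor
    · intro h' u
      exact (swapC_missing_other (M := M) (i := i) (j := j) (C := C) hci hcj v u).symm.trans
        (h' u)
    · intro h' u
      exact (swapC_missing_other (M := M) (i := i) (j := j) (C := C) hci hcj v u).trans (h' u)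
  -- sum splitting
  have split : ∀ N : Fin k → V → V → Bool, Phi N =
      (cnt N i : ℤ) ^ 2 + (cnt N j : ℤ) ^ 2 +
        ∑ c ∈ (univ.erase i).erase j, (cnt N c : ℤ) ^ 2 := by
    intro N
    rw [Phi, ← Finset.add_sum_erase _ _ (Finset.mem_univ i),
      ← Finset.add_sum_erase _ _
        (Finset.mem_erase.mpr ⟨Ne.symm hij, Finset.mem_univ j⟩)]
    ring
  have hrest : ∑ c ∈ (univ.erase i).erase j, (cnt (swapC M i j C) c : ℤ) ^ 2 =
      ∑ c ∈ (univ.erase i).erase j, (cnt M c : ℤ) ^ 2 := by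
    apply Finset.sum_congr rfl
    intro c hc
    rw [Finset.mem_erase, Finset.mem_erase] at hc
    rw [hcnt_other c hc.2.1 hc.1]
  rw [split, split, hrest]
  have key : (cnt (swapC M i j C) i : ℤ) ^ 2 + (cnt (swapC M i j C) j : ℤ) ^ 2 <
      (cnt M i : ℤ) ^ 2 + (cnt M j : ℤ) ^ 2 := by
    have e1 : (cnt (swapC M i j C) i : ℤ) = b1 + a2 := by exact_mod_cast hcntM'i
    have e2 : (cnt (swapC M i j C) j : ℤ) = a1 + b2 := by exact_mod_cast hcntM'j
    have e3 : (cnt M i : ℤ) = a1 + a2 := by exact_mod_cast hcntMi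
    have e4 : (cnt M j : ℤ) = b1 + b2 := by exact_mod_cast hcntMj
    have hlt : (b1 : ℤ) < a1 := by
      have := hqlt; rw [hmIa, hmJb] at this; exact_mod_cast this
    have hle2 : (a1 : ℤ) ≤ 2 := by
      have := hmI2 q; rw [hmIa] at this; exact_mod_cast this
    have h6' : (b1 : ℤ) + b2 + 6 ≤ a1 + a2 := by
      have : (cnt M j : ℤ) + 6 ≤ cnt M i := by exact_mod_cast h6
      rw [e3, e4] at this; linarith
    rw [e1, e2, e3, e4]
    nlinarith [hlt, hle2, h6', sq_nonneg ((a1 : ℤ) - b1)]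
  exact add_lt_add_left key _

end BalancedAux

/-- Dalal–McDonald–Shan: if a multigraph has a proper `k`-edge-coloring
(`k ≥ Δ`) with all edges of `F` distinctly colored, then it has one in which moreover the
numbers of vertices missing any two colors differ by at most 5. -/
theorem balanced_missing_colors
    {V : Type} [Fintype V] [DecidableEq V]
    (w : V → V → ℕ) (hsymm : ∀ u v, w u v = w v u) (hloop : ∀ v, w v v = 0)
    (k : ℕ) (hk : ∀ v, ∑ u, w v u ≤ k)
    (F : Finset (Sym2 V)) (hF : ∀ e ∈ F, ∃ u v : V, e = s(u, v) ∧ 0 < w u v)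
    (M₀ : Fin k → V → V → Bool)
    (h₀ : IsProperEdgeColoringMG w k M₀) (hF₀ : DistinctOnF M₀ F) :
    ∃ M : Fin k → V → V → Bool, IsProperEdgeColoringMG w k M ∧ DistinctOnF M F ∧
      ∀ i j : Fin k,
        |((Finset.univ.filter fun v : V => ∀ u, M i v u = false).card : ℤ) -
          ((Finset.univ.filter fun v : V => ∀ u, M j v u = false).card : ℤ)| ≤ 5 := by
  classical
  obtain ⟨Mm, hMmem, hmin⟩ := Finset.exists_min_image
    (Finset.univ.filter fun M : Fin k → V → V → Bool =>
      IsProperEdgeColoringMG w k M ∧ DistinctOnF M F) (fun M => BalancedAux.Phi M)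
    ⟨M₀, Finset.mem_filter.mpr ⟨Finset.mem_univ _, h₀, hF₀⟩⟩
  rw [Finset.mem_filter] at hMmem
  obtain ⟨-, hMp, hMd⟩ := hMmem
  refine ⟨Mm, hMp, hMd, ?_⟩
  have key : ∀ i j : Fin k, (BalancedAux.cnt Mm i : ℤ) - BalancedAux.cnt Mm j ≤ 5 := by
    intro i j
    by_contra hcon
    push_neg at hcon
    have h6 : BalancedAux.cnt Mm j + 6 ≤ BalancedAux.cnt Mm i := by
      have h1 : (BalancedAux.cnt Mm j : ℤ) + 6 ≤ BalancedAux.cnt Mm i := by linarith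
      exact_mod_cast h1
    obtain ⟨M', hp', hd', hlt⟩ := BalancedAux.improve w F Mm hMp hMd i j h6
    have := hmin M' (Finset.mem_filter.mpr ⟨Finset.mem_univ _, hp', hd'⟩)
    linarith
  intro i j
  show |(BalancedAux.cnt Mm i : ℤ) - (BalancedAux.cnt Mm j : ℤ)| ≤ 5
  exact abs_sub_le_iff.mpr ⟨key i j, key j i⟩
end
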